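/- arXiv:2201.01660 — 16 statements merged into one kernel-verified Lean document; each statement's English description precedes it below -/
import Mathlib

section
/- Let d ≥ 1. Let A : ℝ^d → M_d(ℝ) be smooth with A(x) symmetric for every x, let b : ℝ^d → ℝ^d and c : ℝ^d → ℝ be smooth, and let f : ℝ^d → ℝ be smooth. Suppose that for every h ∈ (0,1], the function u_h(x) = exp(−f(x)/h) satisfies both P_h u_h = 0 and P_h† u_h = 0 pointwise on ℝ^d. Then for every x ∈ ℝ^d one has the eikonal identities ⟨A(x)∇f(x), ∇f(x)⟩ = c(x) and ⟨b(x), ∇f(x)⟩ = 0. -/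
open Matrix
open scoped ContDiff

noncomputable section

/-- Partial derivative `∂_i u (x)`. -/
def pd {d : ℕ} (i : Fin d) (u : (Fin d → ℝ) → ℝ) (x : Fin d → ℝ) : ℝ :=
  fderiv ℝ u x (Pi.single i 1)

/-- Gradient `∇u(x)` as a vector. -/
def grad {d : ℕ} (u : (Fin d → ℝ) → ℝ) (x : Fin d → ℝ) : Fin d → ℝ :=
  fun i => pd i u x

/-- Divergence of a vector field. -/
def dvg {d : ℕ} (V : (Fin d → ℝ) → (Fin d → ℝ)) (x : Fin d → ℝ) : ℝ :=
  ∑ i, fderiv ℝ (fun y => V y i) x (Pi.single i 1)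

/-- The Fokker–Planck type operator
`P_h u = −h² div(A∇u) + (h/2)(b·∇u + div(b u)) + c u`. -/
def FPop {d : ℕ} (A : (Fin d → ℝ) → Matrix (Fin d) (Fin d) ℝ)
    (b : (Fin d → ℝ) → (Fin d → ℝ)) (c : (Fin d → ℝ) → ℝ) (h : ℝ)
    (u : (Fin d → ℝ) → ℝ) (x : Fin d → ℝ) : ℝ :=
  -h ^ 2 * dvg (fun y => (A y).mulVec (grad u y)) x
    + (h / 2) * (b x ⬝ᵥ grad u x + dvg (fun y => u y • b y) x)
    + c x * u x

/-- The formal adjoint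
`P_h† u = −h² div(A∇u) − (h/2)(b·∇u + div(b u)) + c u`. -/
def FPadj {d : ℕ} (A : (Fin d → ℝ) → Matrix (Fin d) (Fin d) ℝ)
    (b : (Fin d → ℝ) → (Fin d → ℝ)) (c : (Fin d → ℝ) → ℝ) (h : ℝ)
    (u : (Fin d → ℝ) → ℝ) (x : Fin d → ℝ) : ℝ :=
  -h ^ 2 * dvg (fun y => (A y).mulVec (grad u y)) x
    - (h / 2) * (b x ⬝ᵥ grad u x + dvg (fun y => u y • b y) x)
    + c x * u x

lemma contDiff_pd {d : ℕ} {f : (Fin d → ℝ) → ℝ} (hf : ContDiff ℝ ∞ f) (j : Fin d) :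
    ContDiff ℝ ∞ fun y => pd j f y :=
  (hf.fderiv_right (by norm_num)).clm_apply contDiff_const

lemma dvg_smul {d : ℕ} {g : (Fin d → ℝ) → ℝ} {V : (Fin d → ℝ) → (Fin d → ℝ)}
    {x : Fin d → ℝ} (hg : DifferentiableAt ℝ g x)
    (hV : ∀ i, DifferentiableAt ℝ (fun y => V y i) x) :
    dvg (fun y => g y • V y) x = grad g x ⬝ᵥ V x + g x * dvg V x := by
  unfold dvg grad pd dotProduct
  rw [Finset.mul_sum, ← Finset.sum_add_distrib]
  refine Finset.sum_congr rfl fun i _ => ?_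
  have h1 : (fun y => (g y • V y) i) = fun y => g y * V y i := rfl
  rw [h1, fderiv_fun_mul hg (hV i)]
  simp
  ring

lemma hasFDerivAt_exp_scaled {d : ℕ} {f : (Fin d → ℝ) → ℝ} (hf : ContDiff ℝ ∞ f)
    (h : ℝ) (y : Fin d → ℝ) :
    HasFDerivAt (fun y => Real.exp (-f y / h))
      ((Real.exp (-f y / h) * (-(1/h))) • fderiv ℝ f y) y := by
  have hfy : HasFDerivAt f (fderiv ℝ f y) y :=
    ((hf.differentiable (by norm_num)).differentiableAt).hasFDerivAt
  have h1 : HasFDerivAt (fun y => -f y / h) ((-(1/h)) • fderiv ℝ f y) y := by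
    have h2 : (fun y => -f y / h) = fun y => (-(1/h)) * f y := by
      funext z; ring
    rw [h2]
    exact hfy.const_mul _
  have := h1.exp
  rw [smul_smul] at this
  convert this using 2

lemma pd_exp_scaled {d : ℕ} {f : (Fin d → ℝ) → ℝ} (hf : ContDiff ℝ ∞ f)
    (h : ℝ) (i : Fin d) (y : Fin d → ℝ) :
    pd i (fun y => Real.exp (-f y / h)) y
      = Real.exp (-f y / h) * (-(1/h)) * pd i f y := by
  unfold pd
  rw [(hasFDerivAt_exp_scaled hf h y).fderiv]
  simp [mul_comm]

lemma grad_exp_scaled {d : ℕ} {f : (Fin d → ℝ) → ℝ} (hf : ContDiff ℝ ∞ f)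
    (h : ℝ) (y : Fin d → ℝ) :
    grad (fun y => Real.exp (-f y / h)) y
      = (Real.exp (-f y / h) * (-(1/h))) • grad f y := by
  funext i
  simp [grad, pd_exp_scaled hf h i y, Pi.smul_apply, smul_eq_mul]

theorem eikonal_equations_of_gibbs
    (d : ℕ) (hd : 1 ≤ d)
    (A : (Fin d → ℝ) → Matrix (Fin d) (Fin d) ℝ)
    (b : (Fin d → ℝ) → (Fin d → ℝ)) (c f : (Fin d → ℝ) → ℝ)
    (hA : ∀ i j, ContDiff ℝ ∞ fun x => A x i j)
    (hAsymm : ∀ x, (A x)ᵀ = A x)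
    (hb : ∀ i, ContDiff ℝ ∞ fun x => b x i)
    (hc : ContDiff ℝ ∞ c) (hf : ContDiff ℝ ∞ f)
    (hP : ∀ h ∈ Set.Ioc (0 : ℝ) 1, ∀ x,
      FPop A b c h (fun y => Real.exp (-f y / h)) x = 0)
    (hPadj : ∀ h ∈ Set.Ioc (0 : ℝ) 1, ∀ x,
      FPadj A b c h (fun y => Real.exp (-f y / h)) x = 0) :
    ∀ x, (A x).mulVec (grad f x) ⬝ᵥ grad f x = c x ∧ b x ⬝ᵥ grad f x = 0 := by
  intro x
  -- the vector field W = A ∇f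
  set W : (Fin d → ℝ) → (Fin d → ℝ) := fun y => (A y).mulVec (grad f y) with hW
  have hWc : ∀ i, ContDiff ℝ ∞ (fun y => W y i) := by
    intro i
    have : (fun y => W y i) = fun y => ∑ j, A y i j * pd j f y := by
      funext y; simp [hW, Matrix.mulVec, dotProduct, grad]
    rw [this]
    exact ContDiff.sum fun j _ => (hA i j).mul (contDiff_pd hf j)
  -- abbreviations at the point x
  set G : Fin d → ℝ := grad f x with hG
  set K : ℝ := G ⬝ᵥ W x with hK
  set D : ℝ := dvg W x with hD
  set B : ℝ := b x ⬝ᵥ G with hB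
  set β : ℝ := dvg b x with hβ
  -- the key per-h identities
  have key : ∀ h ∈ Set.Ioc (0:ℝ) 1, K - h * D = c x ∧ -(2/h) * B + β = 0 := by
    intro h hh
    obtain ⟨hh0, hh1⟩ := hh
    set u : (Fin d → ℝ) → ℝ := fun y => Real.exp (-f y / h) with hu
    have hupos : 0 < u x := Real.exp_pos _
    have hudiff : ∀ y, DifferentiableAt ℝ u y := fun y =>
      (hasFDerivAt_exp_scaled hf h y).differentiableAt
    -- s = u * (-(1/h))
    set s : (Fin d → ℝ) → ℝ := fun y => u y * (-(1/h)) with hs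
    have hsdiff : DifferentiableAt ℝ s x := (hudiff x).mul_const _
    -- grad u at any point
    have hgradu : ∀ y, grad u y = (u y * (-(1/h))) • grad f y := fun y =>
      grad_exp_scaled hf h y
    -- first term: field equality
    have hfield : (fun y => (A y).mulVec (grad u y)) = fun y => s y • W y := by
      funext y
      rw [hgradu y, Matrix.mulVec_smul]
    have hT1 : dvg (fun y => (A y).mulVec (grad u y)) x
        = grad s x ⬝ᵥ W x + s x * D := by
      rw [hfield, dvg_smul hsdiff
        (fun i => ((hWc i).differentiable (by norm_num)).differentiableAt)]
    -- grad s
    have hgrads : grad s x = (u x * (1/h^2)) • G := by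
      funext i
      have hpd : pd i s x = pd i u x * (-(1/h)) := by
        unfold pd
        rw [show s = fun y => u y * (-(1/h)) from rfl,
          fderiv_mul_const (hudiff x)]
        simp [mul_comm]
      show pd i s x = u x * (1/h^2) * G i
      rw [hpd, pd_exp_scaled hf h i x]
      show Real.exp (-f x / h) * -(1 / h) * pd i f x * -(1 / h)
        = Real.exp (-f x / h) * (1 / h ^ 2) * pd i f x
      ring
    have hT1' : dvg (fun y => (A y).mulVec (grad u y)) x
        = u x * (1/h^2) * K + u x * (-(1/h)) * D := by
      rw [hT1, hgrads, smul_dotProduct]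
      simp [hK, hs, smul_eq_mul]
    -- second term
    have hbterm : b x ⬝ᵥ grad u x + dvg (fun y => u y • b y) x
        = u x * (-(1/h)) * (B + G ⬝ᵥ b x) + u x * β := by
      rw [hgradu x, dotProduct_smul,
        dvg_smul (hudiff x) (fun i => ((hb i).differentiable (by norm_num)).differentiableAt),
        hgradu x, smul_dotProduct]
      simp [hB, hG, smul_eq_mul]
      ring
    have hGb : G ⬝ᵥ b x = B := by rw [hB, dotProduct_comm]
    have hne : h ≠ 0 := ne_of_gt hh0
    -- use the two operator identities
    have e1 := hP h ⟨hh0, hh1⟩ x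
    have e2 := hPadj h ⟨hh0, hh1⟩ x
    rw [FPop] at e1
    rw [FPadj] at e2
    rw [hT1', hbterm, hGb] at e1 e2
    rw [show Real.exp (-f x / h) = u x from rfl] at e1 e2
    constructor
    · -- add the two equations
      have expand : -h^2 * (u x * (1/h^2) * K + u x * (-(1/h)) * D)
          = u x * (h * D - K) := by
        field_simp
        ring
      have hTc : u x * (h * D - K) + c x * u x = 0 := by linarith [e1, e2, expand]
      have hz : u x * (K - h * D - c x) = 0 := by linear_combination -hTc
      rcases mul_eq_zero.mp hz with h' | h'
      · exact absurd h' (ne_of_gt hupos)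
      · linarith
    · -- subtract the two equations
      have hS2 : h / 2 * (u x * (-(1/h)) * (B + B) + u x * β) = 0 := by linarith [e1, e2]
      have hS : u x * (-(1/h)) * (B + B) + u x * β = 0 := by
        rcases mul_eq_zero.mp hS2 with h' | h'
        · exact absurd h' (by positivity)
        · exact h'
      have hz : u x * (-(2/h) * B + β) = 0 := by linear_combination hS
      rcases mul_eq_zero.mp hz with h' | h'
      · exact absurd h' (ne_of_gt hupos)
      · linarith
  -- instantiate at h = 1 and h = 1/2
  have k1 := key 1 ⟨one_pos, le_refl 1⟩
  have k2 := key (1/2) ⟨by norm_num, by norm_num⟩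
  obtain ⟨a1, b1⟩ := k1
  obtain ⟨a2, b2⟩ := k2
  norm_num at a1 b1 a2 b2
  constructor
  · have hDzero : D = 0 := by linarith
    have : K = c x := by linarith
    rw [← this, hK, dotProduct_comm]
  · have : B = 0 := by linarith
    rw [← this, hB]
end
end

section
/- Let d ≥ 1, let A, B ∈ M_d(ℝ) with A symmetric positive semidefinite, and let T > 0. Suppose that the real symmetric matrix M := ∫_{−T}^{T} exp(−tB) · A · exp(−tBᵗ) dt is positive definite. Then for every z ∈ ℂ and every v ∈ ℂ^d, if A v = 0 and Bᵗ v = z v (with A and Bᵗ viewed as complex matrices), then v = 0; that is, ker(A) ∩ ker(Bᵗ − z·Id) = {0} in ℂ^d for every z ∈ ℂ. -/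
open Matrix

open NormedSpace in
lemma exp_mulVec_eigen {d : ℕ} (C : Matrix (Fin d) (Fin d) ℂ) (z : ℂ) (v : Fin d → ℂ)
    (h : C.mulVec v = z • v) :
    (exp C).mulVec v = exp z • v := by
  letI : SeminormedRing (Matrix (Fin d) (Fin d) ℂ) := Matrix.linftyOpSemiNormedRing
  letI : NormedRing (Matrix (Fin d) (Fin d) ℂ) := Matrix.linftyOpNormedRing
  letI : NormedAlgebra ℂ (Matrix (Fin d) (Fin d) ℂ) := Matrix.linftyOpNormedAlgebra
  have hpow : ∀ n : ℕ, (C ^ n).mulVec v = z ^ n • v := by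
    intro n
    induction n with
    | zero => simp
    | succ n ih =>
      rw [pow_succ, ← Matrix.mulVec_mulVec, h, Matrix.mulVec_smul, ih, smul_smul, pow_succ,
        mul_comm]
  let L : Matrix (Fin d) (Fin d) ℂ →ₗ[ℂ] (Fin d → ℂ) :=
    { toFun := fun X => X.mulVec v
      map_add' := fun X Y => Matrix.add_mulVec X Y v
      map_smul' := fun c X => Matrix.smul_mulVec c X v }
  let Lc : Matrix (Fin d) (Fin d) ℂ →L[ℂ] (Fin d → ℂ) := LinearMap.toContinuousLinearMap L
  have h1 : (exp C).mulVec v = Lc (exp C) := rfl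
  rw [h1, exp_eq_tsum (𝕂 := ℂ), ContinuousLinearMap.map_tsum Lc (expSeries_summable' (𝕂 := ℂ) C)]
  have h2 : ∀ n : ℕ, Lc (((n.factorial : ℂ))⁻¹ • C ^ n) = (((n.factorial : ℂ))⁻¹ * z ^ n) • v := by
    intro n
    rw [_root_.map_smul]
    show ((n.factorial : ℂ))⁻¹ • (C ^ n).mulVec v = _
    rw [hpow n, smul_smul]
  simp_rw [h2]
  rw [exp_eq_tsum (𝕂 := ℂ)]
  have hs : Summable fun n : ℕ => ((n.factorial : ℂ))⁻¹ * z ^ n := by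
    simpa [smul_eq_mul] using expSeries_summable' (𝕂 := ℂ) z
  rw [hs.tsum_smul_const v]
  simp [smul_eq_mul]

open NormedSpace in
lemma map_exp_real {d : ℕ} (X : Matrix (Fin d) (Fin d) ℝ) :
    (exp X).map (algebraMap ℝ ℂ) = exp (X.map (algebraMap ℝ ℂ)) := by
  letI : SeminormedRing (Matrix (Fin d) (Fin d) ℝ) := Matrix.linftyOpSemiNormedRing
  letI : NormedRing (Matrix (Fin d) (Fin d) ℝ) := Matrix.linftyOpNormedRing
  letI : NormedAlgebra ℝ (Matrix (Fin d) (Fin d) ℝ) := Matrix.linftyOpNormedAlgebra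
  letI : SeminormedRing (Matrix (Fin d) (Fin d) ℂ) := Matrix.linftyOpSemiNormedRing
  letI : NormedRing (Matrix (Fin d) (Fin d) ℂ) := Matrix.linftyOpNormedRing
  letI : NormedAlgebra ℝ (Matrix (Fin d) (Fin d) ℂ) := Matrix.linftyOpNormedAlgebra
  have hf : Continuous fun M : Matrix (Fin d) (Fin d) ℝ => M.map (algebraMap ℝ ℂ) :=
    continuous_id.matrix_map Complex.continuous_ofReal
  letI : NormedAlgebra ℚ (Matrix (Fin d) (Fin d) ℝ) := .restrictScalars ℚ ℝ _
  have := map_exp ((Algebra.ofId ℝ ℂ).mapMatrix (m := Fin d)) hf X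
  exact this

lemma exp_cont_aux {d : ℕ} (B : Matrix (Fin d) (Fin d) ℝ) :
    Continuous fun t : ℝ => NormedSpace.exp ((-t) • B) := by
  letI : SeminormedRing (Matrix (Fin d) (Fin d) ℝ) := Matrix.linftyOpSemiNormedRing
  letI : NormedRing (Matrix (Fin d) (Fin d) ℝ) := Matrix.linftyOpNormedRing
  letI : NormedAlgebra ℝ (Matrix (Fin d) (Fin d) ℝ) := Matrix.linftyOpNormedAlgebra
  letI : NormedAlgebra ℚ (Matrix (Fin d) (Fin d) ℝ) := .restrictScalars ℚ ℝ _
  exact NormedSpace.exp_continuous.comp (continuous_neg.smul continuous_const)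

theorem ker_A_inter_ker_Bt_sub_z_eq_bot
    (d : ℕ) (hd : 1 ≤ d) (A B : Matrix (Fin d) (Fin d) ℝ)
    (hAsymm : Aᵀ = A)
    (hApsd : ∀ x : Fin d → ℝ, 0 ≤ x ⬝ᵥ A.mulVec x)
    (T : ℝ) (hT : 0 < T)
    (M : Matrix (Fin d) (Fin d) ℝ)
    (hM : ∀ i j, M i j =
      ∫ t in (-T)..T,
        (NormedSpace.exp ((-t) • B) * A * NormedSpace.exp ((-t) • Bᵀ)) i j)
    (hMpos : ∀ x : Fin d → ℝ, x ≠ 0 → 0 < x ⬝ᵥ M.mulVec x)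
    (z : ℂ) (v : Fin d → ℂ)
    (hv1 : (A.map (algebraMap ℝ ℂ)).mulVec v = 0)
    (hv2 : (Bᵀ.map (algebraMap ℝ ℂ)).mulVec v = z • v) :
    v = 0 := by
  set g : ℝ → Matrix (Fin d) (Fin d) ℝ := fun t =>
    NormedSpace.exp ((-t) • B) * A * NormedSpace.exp ((-t) • Bᵀ) with hg
  have hsmulmap : ∀ (t : ℝ) (X : Matrix (Fin d) (Fin d) ℝ),
      ((-t) • X).map (algebraMap ℝ ℂ) = ((-t : ℂ)) • X.map (algebraMap ℝ ℂ) := by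
    intro t X
    ext i j
    simp [Matrix.map_apply]
  have hgv : ∀ t : ℝ, ((g t).map (algebraMap ℝ ℂ)).mulVec v = 0 := by
    intro t
    have hmap : (g t).map (algebraMap ℝ ℂ) =
        NormedSpace.exp ((-t : ℂ) • B.map (algebraMap ℝ ℂ)) *
          A.map (algebraMap ℝ ℂ) *
          NormedSpace.exp ((-t : ℂ) • Bᵀ.map (algebraMap ℝ ℂ)) := by
      rw [hg]
      rw [Matrix.map_mul, Matrix.map_mul, map_exp_real, map_exp_real, hsmulmap, hsmulmap]
    have heig : ((-t : ℂ) • Bᵀ.map (algebraMap ℝ ℂ)).mulVec v = ((-t : ℂ) * z) • v := by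
      rw [Matrix.smul_mulVec, hv2, smul_smul]
    rw [hmap, ← Matrix.mulVec_mulVec, ← Matrix.mulVec_mulVec,
      exp_mulVec_eigen _ _ _ heig, Matrix.mulVec_smul, hv1]
    simp
  have hgcont : Continuous g := by
    exact ((exp_cont_aux B).mul continuous_const).mul (exp_cont_aux Bᵀ)
  have hMv : (M.map (algebraMap ℝ ℂ)).mulVec v = 0 := by
    funext i
    have hint : ∀ j : Fin d, IntervalIntegrable
        (fun t => ((g t i j : ℂ)) * v j) MeasureTheory.volume (-T) T := by
      intro j
      apply Continuous.intervalIntegrable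
      exact (Complex.continuous_ofReal.comp
        (((continuous_apply j).comp (continuous_apply i)).comp hgcont)).mul continuous_const
    have h0 : (M.map (algebraMap ℝ ℂ)).mulVec v i
        = ∑ j, ((M i j : ℂ)) * v j := by
      simp [Matrix.mulVec, Matrix.map_apply, dotProduct]
    rw [h0]
    have hentry : ∀ j : Fin d, ((M i j : ℂ)) * v j
        = ∫ t in (-T)..T, ((g t i j : ℂ)) * v j := by
      intro j
      rw [hM i j, ← intervalIntegral.integral_ofReal,
        ← intervalIntegral.integral_mul_const]
    simp_rw [hentry]
    rw [← intervalIntegral.integral_finset_sum (fun j _ => hint j)]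
    have hzero : ∀ t : ℝ, (∑ j, ((g t i j : ℂ)) * v j) = 0 := by
      intro t
      have := congrFun (hgv t) i
      simpa [Matrix.mulVec, dotProduct, Matrix.map_apply] using this
    simp [hzero]
  have hker : ∀ x : Fin d → ℝ, M.mulVec x = 0 → x = 0 := by
    intro x hx
    by_contra hx0
    have := hMpos x hx0
    rw [hx] at this
    simp at this
  have hre : M.mulVec (fun j => (v j).re) = 0 := by
    funext i
    have h1 := congrFun hMv i
    have h2 : ((M.map (algebraMap ℝ ℂ)).mulVec v i).re = M.mulVec (fun j => (v j).re) i := by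
      simp [Matrix.mulVec, dotProduct, Matrix.map_apply, Complex.re_ofReal_mul]
    rw [h1] at h2
    simpa using h2.symm
  have him : M.mulVec (fun j => (v j).im) = 0 := by
    funext i
    have h1 := congrFun hMv i
    have h2 : ((M.map (algebraMap ℝ ℂ)).mulVec v i).im = M.mulVec (fun j => (v j).im) i := by
      simp [Matrix.mulVec, dotProduct, Matrix.map_apply]
    rw [h1] at h2
    simpa using h2.symm
  have hre0 := hker _ hre
  have him0 := hker _ him
  funext i
  exact Complex.ext (congrFun hre0 i) (congrFun him0 i)
end

section
/- Let d ≥ 1, let A, B ∈ M_d(ℝ) with A symmetric positive semidefinite, and let T > 0. Then the real symmetric matrix ∫_{−T}^{T} exp(−tB) · A · exp(−tBᵗ) dt is positive definite if and only if ⋂_{n=0}^{d−1} ker(A · (Bᵗ)ⁿ) = {0}, i.e. the only ξ ∈ ℝ^d with A (Bᵗ)ⁿ ξ = 0 for all n ∈ {0, …, d−1} is ξ = 0. -/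
open Matrix

/-- `M ↦ (A * M) *ᵥ ξ` as a linear map on matrices. -/
private def lmAux {d : ℕ} (A : Matrix (Fin d) (Fin d) ℝ) (ξ : Fin d → ℝ) :
    Matrix (Fin d) (Fin d) ℝ →ₗ[ℝ] (Fin d → ℝ) where
  toFun M := (A * M) *ᵥ ξ
  map_add' M N := by rw [mul_add, Matrix.add_mulVec]
  map_smul' c M := by rw [mul_smul_comm, Matrix.smul_mulVec]; rfl

private lemma kalman_all {d : ℕ} (A C : Matrix (Fin d) (Fin d) ℝ) (ξ : Fin d → ℝ)
    (h : ∀ n < d, (A * C ^ n) *ᵥ ξ = 0) (n : ℕ) : (A * C ^ n) *ᵥ ξ = 0 := by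
  induction n using Nat.strong_induction_on with
  | _ n ih =>
  by_cases hn : n < d
  · exact h n hn
  · push_neg at hn
    have hdeg : C.charpoly.natDegree = d := by simp
    have h0 : (Polynomial.aeval C) C.charpoly = 0 := C.aeval_self_charpoly
    rw [Polynomial.aeval_eq_sum_range, hdeg, Finset.sum_range_succ] at h0
    have hcd : C.charpoly.coeff d = 1 := by
      have := C.charpoly_monic.coeff_natDegree
      rwa [hdeg] at this
    rw [hcd, one_smul] at h0
    have hCd : C ^ d = -∑ i ∈ Finset.range d, C.charpoly.coeff i • C ^ i :=
      eq_neg_of_add_eq_zero_right h0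
    have hpow : C ^ n = C ^ (n - d) * C ^ d := by
      rw [← pow_add]; congr 1; omega
    have key : A * C ^ n =
        -∑ i ∈ Finset.range d, C.charpoly.coeff i • (A * C ^ (n - d + i)) := by
      rw [hpow, hCd, ← mul_assoc, mul_neg, Finset.mul_sum]
      congr 1
      refine Finset.sum_congr rfl fun i _ => ?_
      rw [mul_smul_comm, pow_add, mul_assoc]
    have h2 := congrArg (lmAux (1 : Matrix (Fin d) (Fin d) ℝ) ξ) key
    rw [map_neg, map_sum] at h2
    simp only [lmAux, LinearMap.coe_mk, AddHom.coe_mk, one_mul, _root_.map_smul] at h2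
    rw [h2, neg_eq_zero]
    refine Finset.sum_eq_zero fun i hi => ?_
    have h3 : (A * C ^ (n - d + i)) *ᵥ ξ = 0 := ih _ (by have := Finset.mem_range.mp hi; omega)
    rw [h3, smul_zero]

private lemma exp_mulVec_zero {d : ℕ} (A C : Matrix (Fin d) (Fin d) ℝ) (ξ : Fin d → ℝ)
    (h : ∀ n, (A * C ^ n) *ᵥ ξ = 0) (s : ℝ) :
    (A * NormedSpace.exp (s • C)) *ᵥ ξ = 0 := by
  letI : SeminormedRing (Matrix (Fin d) (Fin d) ℝ) := Matrix.linftyOpSemiNormedRing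
  letI : NormedRing (Matrix (Fin d) (Fin d) ℝ) := Matrix.linftyOpNormedRing
  letI : NormedAlgebra ℝ (Matrix (Fin d) (Fin d) ℝ) := Matrix.linftyOpNormedAlgebra
  have hsum : Summable fun n : ℕ => (n.factorial : ℝ)⁻¹ • (s • C) ^ n :=
    NormedSpace.expSeries_summable' (s • C)
  let L := LinearMap.toContinuousLinearMap (lmAux A ξ)
  have hL : ∀ M, L M = (A * M) *ᵥ ξ := fun M => rfl
  have : (A * NormedSpace.exp (s • C)) *ᵥ ξ = L (NormedSpace.exp (s • C)) := rfl
  rw [this, NormedSpace.exp_eq_tsum ℝ, L.map_tsum hsum]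
  have hz : ∀ n : ℕ, L ((n.factorial : ℝ)⁻¹ • (s • C) ^ n) = 0 := by
    intro n
    rw [_root_.map_smul, hL, smul_pow, mul_smul_comm, Matrix.smul_mulVec, h n, smul_zero, smul_zero]
  simp only [hz, tsum_zero]

private lemma deriv_kill {d : ℕ} (A C : Matrix (Fin d) (Fin d) ℝ) (x : Fin d → ℝ) {T : ℝ}
    (h0 : ∀ t ∈ Set.Ioo (-T) T, (A * NormedSpace.exp (t • C)) *ᵥ x = 0) :
    ∀ n, ∀ t ∈ Set.Ioo (-T) T, (A * C ^ n * NormedSpace.exp (t • C)) *ᵥ x = 0 := by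
  letI : SeminormedRing (Matrix (Fin d) (Fin d) ℝ) := Matrix.linftyOpSemiNormedRing
  letI : NormedRing (Matrix (Fin d) (Fin d) ℝ) := Matrix.linftyOpNormedRing
  letI : NormedAlgebra ℝ (Matrix (Fin d) (Fin d) ℝ) := Matrix.linftyOpNormedAlgebra
  intro n
  induction n with
  | zero => simpa using h0
  | succ n ih =>
    intro t ht
    set L := LinearMap.toContinuousLinearMap (lmAux (A * C ^ n) x) with hLdef
    have hL : ∀ M, L M = (A * C ^ n * M) *ᵥ x := fun M => rfl
    have hexp : HasDerivAt (fun u : ℝ => NormedSpace.exp (u • C))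
        (C * NormedSpace.exp (t • C)) t := hasDerivAt_exp_smul_const' C t
    have hd1 : HasDerivAt (fun u : ℝ => L (NormedSpace.exp (u • C)))
        (L (C * NormedSpace.exp (t • C))) t :=
      (L.hasFDerivAt).comp_hasDerivAt t hexp
    have heq : (fun u : ℝ => L (NormedSpace.exp (u • C))) =ᶠ[nhds t] fun _ => (0 : Fin d → ℝ) := by
      filter_upwards [Ioo_mem_nhds ht.1 ht.2] with u hu
      rw [hL]
      exact ih u hu
    have hd2 : HasDerivAt (fun _ : ℝ => (0 : Fin d → ℝ))
        (L (C * NormedSpace.exp (t • C))) t := hd1.congr_of_eventuallyEq heq.symm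
    have hzero : L (C * NormedSpace.exp (t • C)) = 0 :=
      (hd2.unique (hasDerivAt_const t 0))
    rw [hL] at hzero
    rw [show A * C ^ (n + 1) * NormedSpace.exp (t • C)
        = A * C ^ n * (C * NormedSpace.exp (t • C)) by
      rw [pow_succ, ← mul_assoc, mul_assoc (A * C ^ n)]]
    exact hzero
theorem posDef_integral_iff_kalman
    (d : ℕ) (hd : 1 ≤ d) (A B : Matrix (Fin d) (Fin d) ℝ)
    (hAsymm : Aᵀ = A)
    (hApsd : ∀ x : Fin d → ℝ, 0 ≤ x ⬝ᵥ A.mulVec x)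
    (T : ℝ) (hT : 0 < T)
    (M : Matrix (Fin d) (Fin d) ℝ)
    (hM : ∀ i j, M i j =
      ∫ t in (-T)..T,
        (NormedSpace.exp ((-t) • B) * A * NormedSpace.exp ((-t) • Bᵀ)) i j) :
    (∀ x : Fin d → ℝ, x ≠ 0 → 0 < x ⬝ᵥ M.mulVec x) ↔
      (∀ ξ : Fin d → ℝ, (∀ n < d, (A * Bᵀ ^ n).mulVec ξ = 0) → ξ = 0) := by
  let f : ℝ → Matrix (Fin d) (Fin d) ℝ :=
    fun t => NormedSpace.exp ((-t) • B) * A * NormedSpace.exp ((-t) • Bᵀ)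
  have hexpcont : ∀ D : Matrix (Fin d) (Fin d) ℝ,
      Continuous fun t : ℝ => NormedSpace.exp ((-t) • D) := by
    intro D
    letI : SeminormedRing (Matrix (Fin d) (Fin d) ℝ) := Matrix.linftyOpSemiNormedRing
    letI : NormedRing (Matrix (Fin d) (Fin d) ℝ) := Matrix.linftyOpNormedRing
    letI : NormedAlgebra ℝ (Matrix (Fin d) (Fin d) ℝ) := Matrix.linftyOpNormedAlgebra
    letI : NormedAlgebra ℚ (Matrix (Fin d) (Fin d) ℝ) := Matrix.linftyOpNormedAlgebra
    exact NormedSpace.exp_continuous.comp (continuous_neg.smul continuous_const)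
  have hfcont : Continuous f := by
    letI : SeminormedRing (Matrix (Fin d) (Fin d) ℝ) := Matrix.linftyOpSemiNormedRing
    letI : NormedRing (Matrix (Fin d) (Fin d) ℝ) := Matrix.linftyOpNormedRing
    letI : NormedAlgebra ℝ (Matrix (Fin d) (Fin d) ℝ) := Matrix.linftyOpNormedAlgebra
    exact ((hexpcont B).mul continuous_const).mul (hexpcont Bᵀ)
  have hentry : ∀ i j, Continuous fun t => f t i j := fun i j =>
    (continuous_apply j).comp ((continuous_apply i).comp hfcont)
  -- quadratic form identity
  have hquad : ∀ (x : Fin d → ℝ) (t : ℝ),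
      x ⬝ᵥ (f t) *ᵥ x =
        (NormedSpace.exp ((-t) • Bᵀ) *ᵥ x) ⬝ᵥ A *ᵥ (NormedSpace.exp ((-t) • Bᵀ) *ᵥ x) := by
    intro x t
    have h1 : NormedSpace.exp ((-t) • Bᵀ) = (NormedSpace.exp ((-t) • B))ᵀ := by
      rw [← Matrix.transpose_smul, Matrix.exp_transpose]
    show x ⬝ᵥ (NormedSpace.exp ((-t) • B) * A * NormedSpace.exp ((-t) • Bᵀ)) *ᵥ x = _
    rw [mul_assoc, ← Matrix.mulVec_mulVec, Matrix.dotProduct_mulVec, ← Matrix.mulVec_transpose,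
      ← h1, ← Matrix.mulVec_mulVec]
  -- integral representation of the quadratic form
  have hrep : ∀ x : Fin d → ℝ, x ⬝ᵥ M *ᵥ x = ∫ t in (-T)..T, x ⬝ᵥ (f t) *ᵥ x := by
    intro x
    have hsum1 : ∀ i, (M *ᵥ x) i = ∫ t in (-T)..T, ((f t) *ᵥ x) i := by
      intro i
      show ∑ j, M i j * x j = _
      have hj : ∀ j ∈ Finset.univ, M i j * x j = ∫ t in (-T)..T, f t i j * x j := fun j _ => by
        rw [hM i j, ← intervalIntegral.integral_mul_const]
      rw [Finset.sum_congr rfl hj, ← intervalIntegral.integral_finset_sum (f := fun j t => f t i j * x j)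
        (fun j _ => ((hentry i j).mul continuous_const).intervalIntegrable _ _)]
      rfl
    show ∑ i, x i * (M *ᵥ x) i = _
    have hi : ∀ i ∈ Finset.univ, x i * (M *ᵥ x) i
        = ∫ t in (-T)..T, x i * ((f t) *ᵥ x) i := fun i _ => by
      rw [hsum1 i, ← intervalIntegral.integral_const_mul]
    have hic : ∀ i, Continuous fun t => x i * ((f t) *ᵥ x) i := by
      intro i
      refine continuous_const.mul ?_
      show Continuous fun t => ∑ j, f t i j * x j
      exact continuous_finset_sum _ fun j _ => (hentry i j).mul continuous_const
    rw [Finset.sum_congr rfl hi, ← intervalIntegral.integral_finset_sum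
      (fun i _ => (hic i).intervalIntegrable _ _)]
    rfl
  -- positive semidefiniteness
  have hherm : A.IsHermitian := by
    show Aᴴ = A
    ext i j
    simpa [Matrix.conjTranspose_apply] using congrFun (congrFun hAsymm i) j
  have hpsd : A.PosSemidef := Matrix.posSemidef_iff_dotProduct_mulVec.mpr ⟨hherm, fun y => by simpa using hApsd y⟩
  have hzero_of : ∀ y : Fin d → ℝ, y ⬝ᵥ A *ᵥ y = 0 → A *ᵥ y = 0 := fun y hy =>
    (hpsd.dotProduct_mulVec_zero_iff y).mp (by simpa using hy)
  have hsm : ∀ t : ℝ, t • (-Bᵀ) = (-t) • Bᵀ := fun t => by rw [smul_neg, neg_smul]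
  constructor
  · -- positivity implies Kalman condition
    intro hpos ξ hker
    by_contra hne
    have hall := kalman_all A Bᵀ ξ hker
    have hexp0 : ∀ t : ℝ, ξ ⬝ᵥ (f t) *ᵥ ξ = 0 := by
      intro t
      rw [hquad, Matrix.mulVec_mulVec, exp_mulVec_zero A Bᵀ ξ hall (-t), dotProduct_zero]
    have h0 : ξ ⬝ᵥ M *ᵥ ξ = 0 := by
      rw [hrep ξ]
      simp only [hexp0, intervalIntegral.integral_zero]
    exact (hpos ξ hne).ne' h0
  · -- Kalman condition implies positivity
    intro hk x hx
    rw [hrep x]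
    have hcontq : ContinuousOn (fun t => x ⬝ᵥ (f t) *ᵥ x) (Set.Icc (-T) T) := by
      refine Continuous.continuousOn ?_
      show Continuous fun t => ∑ i, x i * ∑ j, f t i j * x j
      exact continuous_finset_sum _ fun i _ => continuous_const.mul
        (continuous_finset_sum _ fun j _ => (hentry i j).mul continuous_const)
    refine intervalIntegral.integral_pos (by linarith) hcontq
      (fun t _ => by rw [hquad]; exact hApsd _) ?_
    by_contra hnex
    push_neg at hnex
    have hzeroIoo : ∀ t ∈ Set.Ioo (-T) T, (A * NormedSpace.exp (t • (-Bᵀ))) *ᵥ x = 0 := by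
      intro t ht
      have hle : x ⬝ᵥ (f t) *ᵥ x ≤ 0 := hnex t (Set.Ioo_subset_Icc_self ht)
      rw [hquad] at hle
      have h1 : (NormedSpace.exp ((-t) • Bᵀ) *ᵥ x) ⬝ᵥ
          A *ᵥ (NormedSpace.exp ((-t) • Bᵀ) *ᵥ x) = 0 := le_antisymm hle (hApsd _)
      have h2 := hzero_of _ h1
      rw [hsm t, ← Matrix.mulVec_mulVec]
      exact h2
    have hkill := deriv_kill A (-Bᵀ) x hzeroIoo
    have h0mem : (0 : ℝ) ∈ Set.Ioo (-T) T := ⟨by linarith, hT⟩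
    have hn : ∀ n < d, (A * Bᵀ ^ n) *ᵥ x = 0 := by
      intro n _
      have h3 := hkill n 0 h0mem
      rw [zero_smul, NormedSpace.exp_zero, mul_one] at h3
      have hsgn : A * (-Bᵀ) ^ n = ((-1 : ℝ) ^ n) • (A * Bᵀ ^ n) := by
        rw [show -Bᵀ = (-1 : ℝ) • Bᵀ by simp, smul_pow, mul_smul_comm]
      rw [hsgn, Matrix.smul_mulVec, smul_eq_zero] at h3
      rcases h3 with h | h
      · exact absurd h (pow_ne_zero _ (by norm_num))
      · exact h
    exact absurd (hk x hn) hx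
end

section
/- Let d ≥ 1, let f : ℝ^d → ℝ be C², let b : ℝ^d → ℝ^d be continuous, and let A : ℝ^d → M_d(ℝ) and c : ℝ^d → ℝ be arbitrary functions. Assume the eikonal identities ⟨A(x)∇f(x), ∇f(x)⟩ = c(x) and ⟨b(x), ∇f(x)⟩ = 0 hold for all x ∈ ℝ^d. If u ∈ ℝ^d is a nondegenerate critical point of f (i.e. ∇f(u) = 0 and the Hessian matrix Hess f(u) is invertible), then b(u) = 0 and c(u) = 0. -/
open Matrix

noncomputable section

/-- Hessian matrix of second partial derivatives. -/
def hess {d : ℕ} (f : (Fin d → ℝ) → ℝ) (x : Fin d → ℝ) : Matrix (Fin d) (Fin d) ℝ :=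
  Matrix.of fun i j => pd i (pd j f) x

theorem b_and_c_vanish_at_nondegenerate_critical_points
    (d : ℕ) (hd : 1 ≤ d)
    (f : (Fin d → ℝ) → ℝ) (hf : ContDiff ℝ 2 f)
    (b : (Fin d → ℝ) → (Fin d → ℝ)) (hb : Continuous b)
    (A : (Fin d → ℝ) → Matrix (Fin d) (Fin d) ℝ) (c : (Fin d → ℝ) → ℝ)
    (heik1 : ∀ x, (A x).mulVec (grad f x) ⬝ᵥ grad f x = c x)
    (heik2 : ∀ x, b x ⬝ᵥ grad f x = 0)
    (u : Fin d → ℝ) (hu : grad f u = 0) (hHess : IsUnit (hess f u).det) :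
    b u = 0 ∧ c u = 0 := by
  have hc : c u = 0 := by
    have h := heik1 u
    rw [hu] at h
    simpa using h.symm
  refine ⟨?_, hc⟩
  -- setup the derivative of grad f
  have hf' : ContDiff ℝ 1 (fderiv ℝ f) := hf.fderiv_right (by norm_num)
  set Φ : ((Fin d → ℝ) →L[ℝ] ℝ) →L[ℝ] (Fin d → ℝ) :=
    ContinuousLinearMap.pi fun i => ContinuousLinearMap.apply ℝ ℝ (Pi.single i 1) with hΦ
  have hgrad : grad f = fun x => Φ (fderiv ℝ f x) := rfl
  have hgradC : ContDiff ℝ 1 (grad f) := by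
    rw [hgrad]; exact Φ.contDiff.comp hf'
  have hdd : DifferentiableAt ℝ (fderiv ℝ f) u :=
    (hf'.differentiable one_ne_zero).differentiableAt
  have hcomp : HasFDerivAt (grad f) (Φ.comp (fderiv ℝ (fderiv ℝ f) u)) u := by
    rw [hgrad]; exact Φ.hasFDerivAt.comp u hdd.hasFDerivAt
  -- the Hessian as continuous linear equiv
  set M := (hess f u)ᵀ with hMdef
  have hMdet : IsUnit M.det := by rwa [Matrix.det_transpose]
  haveI : Invertible M := M.invertibleOfIsUnitDet hMdet
  let e : (Fin d → ℝ) ≃L[ℝ] (Fin d → ℝ) :=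
    (M.toLinearEquiv' ‹Invertible M›).toContinuousLinearEquiv
  have he : (e : (Fin d → ℝ) →L[ℝ] (Fin d → ℝ)) = Φ.comp (fderiv ℝ (fderiv ℝ f) u) := by
    apply ContinuousLinearMap.coe_injective
    apply Module.Basis.ext (Pi.basisFun ℝ (Fin d))
    intro j
    funext i
    have h1 : (e : (Fin d → ℝ) →L[ℝ] (Fin d → ℝ)) (Pi.single j 1) i = M i j := by
      show M.mulVec (Pi.single j 1) i = M i j
      simp [Matrix.mulVec_single]
    have h2 : (Φ.comp (fderiv ℝ (fderiv ℝ f) u)) (Pi.single j 1) i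
        = fderiv ℝ (fderiv ℝ f) u (Pi.single j 1) (Pi.single i 1) := rfl
    have h3 : M i j = fderiv ℝ (fderiv ℝ f) u (Pi.single j 1) (Pi.single i 1) := by
      show pd j (pd i f) u = _
      have : pd i f = fun x => fderiv ℝ f x (Pi.single i 1) := rfl
      rw [pd, this, fderiv_clm_apply hdd (differentiableAt_const _)]
      simp
    simp only [Pi.basisFun_apply]
    exact h1.trans (h3.trans h2.symm)
  have hsd : HasStrictFDerivAt (grad f)
      (e : (Fin d → ℝ) →L[ℝ] (Fin d → ℝ)) u := by
    rw [he, ← hcomp.fderiv]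
    exact hgradC.contDiffAt.hasStrictFDerivAt one_ne_zero
  have hmap : Filter.map (grad f) (nhds u) = nhds (grad f u) :=
    hsd.map_nhds_eq_of_equiv
  rw [hu] at hmap
  -- suppose b u ≠ 0
  by_contra hbu
  have hpos : 0 < b u ⬝ᵥ b u := by
    have hnn : 0 ≤ b u ⬝ᵥ b u := Finset.sum_nonneg fun i _ => mul_self_nonneg _
    rcases lt_or_eq_of_le hnn with h | h
    · exact h
    · exact absurd (dotProduct_self_eq_zero.mp h.symm) hbu
  have hcont : ContinuousAt (fun x => b x ⬝ᵥ b u) u := by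
    apply Continuous.continuousAt
    exact continuous_finset_sum _ fun i _ => ((continuous_apply i).comp hb).mul continuous_const
  have hU : {x | 0 < b x ⬝ᵥ b u} ∈ nhds u := hcont.preimage_mem_nhds (Ioi_mem_nhds hpos)
  have himg : grad f '' {x | 0 < b x ⬝ᵥ b u} ∈ nhds (0 : Fin d → ℝ) := by
    rw [← hmap]; exact Filter.image_mem_map hU
  have ht : Filter.Tendsto (fun t : ℝ => t • b u) (nhdsWithin 0 (Set.Ioi 0)) (nhds 0) := by
    have : Filter.Tendsto (fun t : ℝ => t • b u) (nhds 0) (nhds ((0:ℝ) • b u)) :=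
      (continuous_id.smul continuous_const).tendsto 0
    simpa using this.mono_left nhdsWithin_le_nhds
  have hev : ∀ᶠ t in nhdsWithin (0:ℝ) (Set.Ioi 0),
      t • b u ∈ grad f '' {x | 0 < b x ⬝ᵥ b u} := ht.eventually_mem himg
  have hev2 : ∀ᶠ t in nhdsWithin (0:ℝ) (Set.Ioi 0), 0 < t := eventually_mem_nhdsWithin
  obtain ⟨t, hmem, htpos⟩ := (hev.and hev2).exists
  obtain ⟨x, hxU, hxg⟩ := hmem
  have h0 := heik2 x
  rw [hxg] at h0
  rw [dotProduct_smul] at h0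
  have : 0 < t * (b x ⬝ᵥ b u) := mul_pos htpos hxU
  simp only [smul_eq_mul] at h0
  linarith

end
end

section
/- Let d ≥ 1, let f : ℝ^d → ℝ be C², let b : ℝ^d → ℝ^d be differentiable at a point u ∈ ℝ^d, let A : ℝ^d → M_d(ℝ) and c : ℝ^d → ℝ. Assume the eikonal identities ⟨A(x)∇f(x), ∇f(x)⟩ = c(x) and ⟨b(x), ∇f(x)⟩ = 0 hold for all x ∈ ℝ^d. Suppose moreover that b(u) = 0, c(u) = 0, that A(u) is symmetric positive semidefinite, and that for some T > 0 the real symmetric matrix ∫_{−T}^{T} exp(−tB) · A(u) · exp(−tBᵗ) dt is positive definite, where B := Db(u) is the Jacobian matrix of b at u. Then ∇f(u) = 0, i.e. u is a critical point of f. -/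
open Matrix

noncomputable section

/-- Jacobian matrix of a vector field: `(jac b x) i j = ∂_j b_i (x)`. -/
def jac {d : ℕ} (b : (Fin d → ℝ) → (Fin d → ℝ)) (x : Fin d → ℝ) :
    Matrix (Fin d) (Fin d) ℝ :=
  Matrix.of fun i j => fderiv ℝ b x (Pi.single j 1) i

open NormedSpace in
lemma exp_mulVec_fixed {d : ℕ} (N : Matrix (Fin d) (Fin d) ℝ) (v : Fin d → ℝ)
    (h : N.mulVec v = 0) : (NormedSpace.exp N).mulVec v = v := by
  letI : SeminormedRing (Matrix (Fin d) (Fin d) ℝ) := Matrix.linftyOpSemiNormedRing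
  letI : NormedRing (Matrix (Fin d) (Fin d) ℝ) := Matrix.linftyOpNormedRing
  letI : NormedAlgebra ℝ (Matrix (Fin d) (Fin d) ℝ) := Matrix.linftyOpNormedAlgebra
  let L : Matrix (Fin d) (Fin d) ℝ →ₗ[ℝ] (Fin d → ℝ) :=
    { toFun := fun X => X.mulVec v
      map_add' := fun X Y => Matrix.add_mulVec X Y v
      map_smul' := fun c X => Matrix.smul_mulVec c X v }
  let Lc := LinearMap.toContinuousLinearMap L
  have hsum : Summable fun n : ℕ => ((Nat.factorial n : ℝ)⁻¹) • N ^ n := expSeries_summable' (𝕂 := ℝ) N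
  have : (NormedSpace.exp N).mulVec v = Lc (∑' n : ℕ, ((Nat.factorial n : ℝ)⁻¹) • N ^ n) := by
    rw [exp_eq_tsum ℝ]
    rfl
  rw [this, Lc.map_tsum hsum]
  have h0 : ∀ n : ℕ, n ≠ 0 → Lc (((Nat.factorial n : ℝ)⁻¹) • N ^ n) = 0 := by
    intro n hn
    obtain ⟨k, rfl⟩ := Nat.exists_eq_succ_of_ne_zero hn
    have : (N ^ (k + 1)).mulVec v = 0 := by
      rw [pow_succ, ← Matrix.mulVec_mulVec, h, Matrix.mulVec_zero]
    show (((Nat.factorial (k+1) : ℝ))⁻¹ • N ^ (k+1)).mulVec v = 0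
    rw [Matrix.smul_mulVec, this, smul_zero]
  rw [tsum_eq_single 0 h0]
  show (((Nat.factorial 0 : ℝ))⁻¹ • N ^ 0).mulVec v = v
  simp [Matrix.one_mulVec]

end

noncomputable section Main

theorem critical_point_of_controllability
    (d : ℕ) (hd : 1 ≤ d)
    (f : (Fin d → ℝ) → ℝ) (hf : ContDiff ℝ 2 f)
    (b : (Fin d → ℝ) → (Fin d → ℝ)) (u : Fin d → ℝ)
    (hb : DifferentiableAt ℝ b u)
    (A : (Fin d → ℝ) → Matrix (Fin d) (Fin d) ℝ) (c : (Fin d → ℝ) → ℝ)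
    (heik1 : ∀ x, (A x).mulVec (grad f x) ⬝ᵥ grad f x = c x)
    (heik2 : ∀ x, b x ⬝ᵥ grad f x = 0)
    (hbu : b u = 0) (hcu : c u = 0)
    (hAsymm : (A u)ᵀ = A u)
    (hApsd : ∀ x : Fin d → ℝ, 0 ≤ x ⬝ᵥ (A u).mulVec x)
    (T : ℝ) (hT : 0 < T)
    (M : Matrix (Fin d) (Fin d) ℝ)
    (hM : ∀ i j, M i j =
      ∫ t in (-T)..T,
        (NormedSpace.exp ((-t) • jac b u) * A u *
          NormedSpace.exp ((-t) • (jac b u)ᵀ)) i j)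
    (hMpos : ∀ x : Fin d → ℝ, x ≠ 0 → 0 < x ⬝ᵥ M.mulVec x) :
    grad f u = 0 := by
  set g := grad f u with hg
  set B := jac b u with hB
  -- Step 1 : Bᵀ *ᵥ g = 0
  have hgd : ∀ i, DifferentiableAt ℝ (fun x => grad f x i) u := by
    intro i
    have h1 : ContDiff ℝ 1 (fderiv ℝ f) := hf.fderiv_right (by norm_num)
    have := (ContinuousLinearMap.apply ℝ ℝ (Pi.single i 1)).differentiableAt.comp u
      ((h1.differentiable (by norm_num)) u)
    exact this
  have hsum0 : HasFDerivAt (fun x => ∑ i, b x i * grad f x i)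
      (∑ i, (((⇑(ContinuousLinearMap.proj i : (Fin d → ℝ) →L[ℝ] ℝ) ∘ b) u) •
          fderiv ℝ (fun x => grad f x i) u +
        (((ContinuousLinearMap.proj i : (Fin d → ℝ) →L[ℝ] ℝ).comp
          (fderiv ℝ b u)).smulRight (grad f u i)))) u := by
    apply HasFDerivAt.fun_sum
    intro i _
    exact (((ContinuousLinearMap.proj i
      : (Fin d → ℝ) →L[ℝ] ℝ).hasFDerivAt).comp u hb.hasFDerivAt).mul'
      ((hgd i).hasFDerivAt)
  have hphi : (fun x => ∑ i, b x i * grad f x i) = fun _ => (0:ℝ) := by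
    funext x
    rw [← heik2 x]
    simp [dotProduct]
  rw [hphi] at hsum0
  have hD0 := hsum0.unique (hasFDerivAt_const (0:ℝ) u)
  have hBTg : Bᵀ.mulVec g = 0 := by
    funext j
    have := congrArg (fun (L : (Fin d → ℝ) →L[ℝ] ℝ) => L (Pi.single j 1)) hD0
    simp only [ContinuousLinearMap.sum_apply, ContinuousLinearMap.add_apply,
      ContinuousLinearMap.smulRight_apply, ContinuousLinearMap.comp_apply,
      ContinuousLinearMap.coe_smul', Pi.smul_apply, ContinuousLinearMap.proj_apply,
      ContinuousLinearMap.zero_apply, Function.comp_apply, hbu] at this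
    simp only [Pi.zero_apply, zero_smul, zero_add, smul_eq_mul] at this
    show (Bᵀ *ᵥ g) j = 0
    simp only [Matrix.mulVec, dotProduct, Matrix.transpose_apply]
    rw [← this]
    exact Finset.sum_congr rfl fun i _ => by
      rw [zero_mul, zero_add]; rfl
  -- Step 2 : eikonal at u
  have hAg : (A u).mulVec g ⬝ᵥ g = 0 := by
    rw [hg]
    exact (heik1 u).trans hcu
  -- Step 3 : pointwise vanishing of the quadratic form of the integrand
  have hzero : ∀ t : ℝ,
      g ⬝ᵥ (NormedSpace.exp ((-t) • B) * A u *
        NormedSpace.exp ((-t) • Bᵀ)).mulVec g = 0 := by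
    intro t
    have hEg : (NormedSpace.exp ((-t) • Bᵀ)).mulVec g = g := by
      apply exp_mulVec_fixed
      rw [Matrix.smul_mulVec, hBTg, smul_zero]
    have hTr : (NormedSpace.exp ((-t) • B))ᵀ = NormedSpace.exp ((-t) • Bᵀ) := by
      rw [← Matrix.transpose_smul, Matrix.exp_transpose]
    have hvm : g ᵥ* (NormedSpace.exp ((-t) • B)) = g := by
      rw [← Matrix.mulVec_transpose, hTr, hEg]
    rw [← Matrix.mulVec_mulVec, hEg, ← Matrix.mulVec_mulVec,
      Matrix.dotProduct_mulVec, hvm, dotProduct_comm]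
    exact hAg
  -- Step 4 : quadratic form of M vanishes at g
  have hcont : ∀ i j : Fin d, Continuous fun t : ℝ =>
      (NormedSpace.exp ((-t) • B) * A u *
        NormedSpace.exp ((-t) • Bᵀ)) i j := by
    intro i j
    letI : SeminormedRing (Matrix (Fin d) (Fin d) ℝ) := Matrix.linftyOpSemiNormedRing
    letI : NormedRing (Matrix (Fin d) (Fin d) ℝ) := Matrix.linftyOpNormedRing
    letI : NormedAlgebra ℝ (Matrix (Fin d) (Fin d) ℝ) := Matrix.linftyOpNormedAlgebra
    letI : NormedAlgebra ℚ (Matrix (Fin d) (Fin d) ℝ) := NormedAlgebra.restrictScalars ℚ ℝ _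
    have hexp1 : Continuous fun t : ℝ => NormedSpace.exp ((-t) • B) :=
      NormedSpace.exp_continuous.comp (continuous_neg.smul continuous_const)
    have hexp2 : Continuous fun t : ℝ => NormedSpace.exp ((-t) • Bᵀ) :=
      NormedSpace.exp_continuous.comp (continuous_neg.smul continuous_const)
    have hm : Continuous fun t : ℝ =>
        NormedSpace.exp ((-t) • B) * A u * NormedSpace.exp ((-t) • Bᵀ) :=
      (hexp1.matrix_mul continuous_const).matrix_mul hexp2
    exact (continuous_apply j).comp ((continuous_apply i).comp hm)
  have hint : ∀ i j : Fin d, IntervalIntegrable (fun t : ℝ =>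
      g i * (NormedSpace.exp ((-t) • B) * A u *
        NormedSpace.exp ((-t) • Bᵀ)) i j * g j)
      MeasureTheory.volume (-T) T := fun i j =>
    ((continuous_const.mul (hcont i j)).mul continuous_const).intervalIntegrable _ _
  have hexpand : ∀ (N : Matrix (Fin d) (Fin d) ℝ),
      g ⬝ᵥ N.mulVec g = ∑ i, ∑ j, g i * N i j * g j := by
    intro N
    simp [dotProduct, Matrix.mulVec, Finset.mul_sum, mul_assoc]
  have hMg : g ⬝ᵥ M.mulVec g = 0 := by
    rw [hexpand M]
    have h2 : ∀ i j : Fin d, g i * M i j * g j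
        = ∫ t in (-T)..T, g i * (NormedSpace.exp ((-t) • B) * A u *
            NormedSpace.exp ((-t) • Bᵀ)) i j * g j := by
      intro i j
      rw [hM i j, ← intervalIntegral.integral_const_mul,
        ← intervalIntegral.integral_mul_const]
    calc ∑ i, ∑ j, g i * M i j * g j
        = ∑ i, ∑ j, ∫ t in (-T)..T, g i * (NormedSpace.exp ((-t) • B) * A u *
            NormedSpace.exp ((-t) • Bᵀ)) i j * g j := by
          exact Finset.sum_congr rfl fun i _ => Finset.sum_congr rfl fun j _ => h2 i j
      _ = ∑ i : Fin d, ∫ t in (-T)..T, ∑ j, g i * (NormedSpace.exp ((-t) • B) * A u *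
            NormedSpace.exp ((-t) • Bᵀ)) i j * g j := by
          refine Finset.sum_congr rfl fun i _ => ?_
          rw [intervalIntegral.integral_finset_sum (fun j _ => hint i j)]
      _ = ∫ t in (-T)..T, ∑ i, ∑ j, g i * (NormedSpace.exp ((-t) • B) * A u *
            NormedSpace.exp ((-t) • Bᵀ)) i j * g j := by
          have hsint : ∀ i : Fin d, IntervalIntegrable
              (fun t => ∑ j, g i * (NormedSpace.exp ((-t) • B) * A u *
                NormedSpace.exp ((-t) • Bᵀ)) i j * g j)
              MeasureTheory.volume (-T) T := by
            intro i
            exact (continuous_finset_sum Finset.univ (fun j _ =>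
              (continuous_const.mul (hcont i j)).mul continuous_const)).intervalIntegrable _ _
          exact (intervalIntegral.integral_finset_sum (fun i _ => hsint i)).symm
      _ = ∫ t in (-T)..T, (0:ℝ) := by
          refine intervalIntegral.integral_congr fun t _ => ?_
          rw [← hexpand, hzero t]
      _ = 0 := by simp
  by_contra hne
  exact (hMpos g hne).ne' hMg

end Main
end

section
/- Let d ≥ 1, let f : ℝ^d → ℝ be C², let b : ℝ^d → ℝ^d be differentiable at u ∈ ℝ^d, and assume ⟨b(x), ∇f(x)⟩ = 0 for all x ∈ ℝ^d. Suppose u is a critical point of f (∇f(u) = 0) with b(u) = 0, and set B := Db(u) (the Jacobian of b at u) and H := Hess f(u). Then the matrix BᵗH is antisymmetric, i.e. (BᵗH)ᵗ = −BᵗH. If moreover H is invertible, then J := H⁻¹Bᵗ is also antisymmetric. -/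
open Matrix Filter Topology

noncomputable section

lemma pi_single_decomp {d : ℕ} (v : Fin d → ℝ) :
    v = ∑ j, v j • (Pi.single j (1:ℝ) : Fin d → ℝ) := by
  funext i
  simp [Pi.single_apply, Finset.sum_apply]

lemma clm_apply_sum {d : ℕ} {F : Type*} [NormedAddCommGroup F] [NormedSpace ℝ F]
    (L : (Fin d → ℝ) →L[ℝ] F) (v : Fin d → ℝ) :
    L v = ∑ j, v j • L (Pi.single j 1) := by
  conv_lhs => rw [pi_single_decomp v]
  simp [map_sum]

theorem BtH_antisymmetric
    (d : ℕ) (hd : 1 ≤ d)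
    (f : (Fin d → ℝ) → ℝ) (hf : ContDiff ℝ 2 f)
    (b : (Fin d → ℝ) → (Fin d → ℝ)) (u : Fin d → ℝ)
    (hb : DifferentiableAt ℝ b u)
    (horth : ∀ x, b x ⬝ᵥ grad f x = 0)
    (hcrit : grad f u = 0) (hbu : b u = 0) :
    ((jac b u)ᵀ * hess f u)ᵀ = -((jac b u)ᵀ * hess f u) ∧
      (IsUnit (hess f u).det →
        ((hess f u)⁻¹ * (jac b u)ᵀ)ᵀ = -((hess f u)⁻¹ * (jac b u)ᵀ)) := by
  have hdf : Differentiable ℝ f := hf.differentiable two_ne_zero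
  have hdf' : Differentiable ℝ (fderiv ℝ f) :=
    (hf.fderiv_right (m := 1) (by norm_num)).differentiable one_ne_zero
  set G := fderiv ℝ (fderiv ℝ f) u with hG
  have hGsymm : ∀ v w, G v w = G w v := fun v w =>
    second_derivative_symmetric (fun y => (hdf y).hasFDerivAt) ((hdf' u).hasFDerivAt) v w
  -- Hessian entries via G
  have hHe : ∀ i j, hess f u i j = G (Pi.single i 1) (Pi.single j 1) := by
    intro i j
    have hder : HasFDerivAt (fun x => fderiv ℝ f x (Pi.single j 1))
        (((fderiv ℝ f u).comp (0 : (Fin d → ℝ) →L[ℝ] (Fin d → ℝ))) +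
          G.flip (Pi.single j 1)) u :=
      (hdf' u).hasFDerivAt.clm_apply (hasFDerivAt_const _ _)
    have : pd i (pd j f) u = G (Pi.single i 1) (Pi.single j 1) := by
      unfold pd
      rw [hder.fderiv]
      simp
    simpa [hess] using this
  have Hsymm : (hess f u)ᵀ = hess f u := by
    ext i j
    simp only [transpose_apply, hHe]
    exact hGsymm _ _
  -- grad has a derivative at u
  have hgradD : HasFDerivAt (grad f)
      (ContinuousLinearMap.pi fun i => G.flip (Pi.single i 1)) u := by
    apply hasFDerivAt_pi''
    intro i
    have hder : HasFDerivAt (fun x => fderiv ℝ f x (Pi.single i 1))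
        (((fderiv ℝ f u).comp (0 : (Fin d → ℝ) →L[ℝ] (Fin d → ℝ))) +
          G.flip (Pi.single i 1)) u :=
      (hdf' u).hasFDerivAt.clm_apply (hasFDerivAt_const _ _)
    have h0 : (fun x => grad f x i) = fun x => fderiv ℝ f x (Pi.single i 1) := rfl
    rw [h0]
    refine hder.congr_fderiv ?_
    ext v
    simp
  -- mulVec identities
  have hHv : ∀ v, hess f u *ᵥ v = fun i => G v (Pi.single i 1) := by
    intro v
    funext i
    have : G v (Pi.single i 1) = G (Pi.single i 1) v := hGsymm _ _
    rw [this, clm_apply_sum (G (Pi.single i 1)) v]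
    simp only [mulVec, dotProduct, hHe, smul_eq_mul]
    exact Finset.sum_congr rfl fun j _ => mul_comm _ _
  have hBv : ∀ v, jac b u *ᵥ v = fderiv ℝ b u v := by
    intro v
    funext i
    rw [clm_apply_sum (fderiv ℝ b u) v]
    simp only [mulVec, dotProduct, jac, Matrix.of_apply, Finset.sum_apply, Pi.smul_apply,
      smul_eq_mul]
    exact Finset.sum_congr rfl fun j _ => mul_comm _ _
  -- the key quadratic identity
  have key : ∀ v : Fin d → ℝ, (jac b u *ᵥ v) ⬝ᵥ (hess f u *ᵥ v) = 0 := by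
    intro v
    set φ : ℝ → (Fin d → ℝ) := fun t => b (u + t • v) with hφdef
    set ψ : ℝ → (Fin d → ℝ) := fun t => grad f (u + t • v) with hψdef
    have hc : HasDerivAt (fun t : ℝ => u + t • v) v 0 := by
      simpa using ((hasDerivAt_id (0:ℝ)).smul_const v).const_add u
    have hc0 : (fun t : ℝ => u + t • v) 0 = u := by simp
    have hφ : HasDerivAt φ (jac b u *ᵥ v) 0 := by
      rw [hBv]
      have hb' : HasFDerivAt b (fderiv ℝ b u) (u + (0:ℝ) • v) := by
        simpa using hb.hasFDerivAt
      exact hb'.comp_hasDerivAt 0 hc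
    have hψ : HasDerivAt ψ (hess f u *ᵥ v) 0 := by
      have hg' : HasFDerivAt (grad f)
          (ContinuousLinearMap.pi fun i => G.flip (Pi.single i 1)) (u + (0:ℝ) • v) := by
        simpa using hgradD
      have h := hg'.comp_hasDerivAt 0 hc
      refine h.congr_deriv ?_
      rw [hHv]
      rfl
    have hφ0 : φ 0 = 0 := by simp [hφdef, hbu]
    have hψ0 : ψ 0 = 0 := by simp [hψdef, hcrit]
    have h1 : Tendsto (slope φ 0) (𝓝[≠] 0) (𝓝 (jac b u *ᵥ v)) :=
      hasDerivAt_iff_tendsto_slope.1 hφ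
    have h2 : Tendsto (slope ψ 0) (𝓝[≠] 0) (𝓝 (hess f u *ᵥ v)) :=
      hasDerivAt_iff_tendsto_slope.1 hψ
    have h3 : Tendsto (fun t => slope φ 0 t ⬝ᵥ slope ψ 0 t) (𝓝[≠] (0:ℝ))
        (𝓝 ((jac b u *ᵥ v) ⬝ᵥ (hess f u *ᵥ v))) := by
      unfold dotProduct
      apply tendsto_finset_sum
      intro i _
      exact (((continuous_apply i).tendsto _).comp h1).mul
        (((continuous_apply i).tendsto _).comp h2)
    have h4 : (fun t => slope φ 0 t ⬝ᵥ slope ψ 0 t) =ᶠ[𝓝[≠] (0:ℝ)] fun _ => 0 := by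
      filter_upwards [self_mem_nhdsWithin] with t ht
      have : slope φ 0 t ⬝ᵥ slope ψ 0 t = t⁻¹ * (t⁻¹ * (φ t ⬝ᵥ ψ t)) := by
        simp [slope, hφ0, hψ0, smul_dotProduct, dotProduct_smul]
      rw [this]
      simp [hφdef, hψdef, horth (u + t • v)]
    have h5 : Tendsto (fun _ : ℝ => (0:ℝ)) (𝓝[≠] (0:ℝ))
        (𝓝 ((jac b u *ᵥ v) ⬝ᵥ (hess f u *ᵥ v))) := h3.congr' h4
    exact tendsto_nhds_unique h5 tendsto_const_nhds
  -- quadratic form of M := Bᵀ H vanishes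
  set M := (jac b u)ᵀ * hess f u with hM
  have quad : ∀ v, v ⬝ᵥ (M *ᵥ v) = 0 := by
    intro v
    rw [hM, ← mulVec_mulVec, dotProduct_mulVec, vecMul_transpose]
    exact key v
  have hdiag : ∀ i, M i i = 0 := by
    intro i
    have := quad (Pi.single i 1)
    simpa [mulVec_single, single_dotProduct] using this
  have part1 : Mᵀ = -M := by
    ext i j
    have h := quad (Pi.single i 1 + Pi.single j 1)
    simp only [mulVec_add, dotProduct_add, add_dotProduct, mulVec_single, single_dotProduct,
      mul_one, one_mul, MulOpposite.op_one, one_smul, Matrix.col_apply] at h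
    have hi := hdiag i
    have hj := hdiag j
    simp only [transpose_apply, Matrix.neg_apply]
    linarith
  refine ⟨part1, fun hH => ?_⟩
  have hinv : (hess f u)⁻¹ * hess f u = 1 := nonsing_inv_mul _ hH
  have hinv' : hess f u * (hess f u)⁻¹ = 1 := mul_nonsing_inv _ hH
  have hHB : hess f u * jac b u = -M := by
    calc hess f u * jac b u = ((jac b u)ᵀ * (hess f u)ᵀ)ᵀ := by
          simp [transpose_mul]
      _ = Mᵀ := by rw [Hsymm]
      _ = -M := part1
  have hBHinv : jac b u * (hess f u)⁻¹ = -((hess f u)⁻¹ * (jac b u)ᵀ) := by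
    calc jac b u * (hess f u)⁻¹
        = (hess f u)⁻¹ * (hess f u * (jac b u * (hess f u)⁻¹)) := by
          rw [← mul_assoc, hinv, one_mul]
      _ = (hess f u)⁻¹ * ((hess f u * jac b u) * (hess f u)⁻¹) := by rw [mul_assoc]
      _ = (hess f u)⁻¹ * ((-M) * (hess f u)⁻¹) := by rw [hHB]
      _ = -((hess f u)⁻¹ * (((jac b u)ᵀ * hess f u) * (hess f u)⁻¹)) := by
          rw [hM]; noncomm_ring
      _ = -((hess f u)⁻¹ * ((jac b u)ᵀ * (hess f u * (hess f u)⁻¹))) := by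
          rw [mul_assoc]
      _ = -((hess f u)⁻¹ * (jac b u)ᵀ) := by rw [hinv', mul_one]
  calc ((hess f u)⁻¹ * (jac b u)ᵀ)ᵀ = jac b u * ((hess f u)⁻¹)ᵀ := by
        rw [transpose_mul, transpose_transpose]
    _ = jac b u * ((hess f u)ᵀ)⁻¹ := by rw [transpose_nonsing_inv]
    _ = jac b u * (hess f u)⁻¹ := by rw [Hsymm]
    _ = -((hess f u)⁻¹ * (jac b u)ᵀ) := hBHinv

end
end

section
/- Let d ≥ 1, let H ∈ M_d(ℝ) be symmetric and invertible, let A ∈ M_d(ℝ) be symmetric positive semidefinite, and let J ∈ M_d(ℝ) be antisymmetric. Assume that for every z ∈ ℂ, the only vector v ∈ ℂ^d satisfying A v = 0 and (HJ) v = z v (matrices viewed as complex matrices) is v = 0. Then for every r ∈ [0,1], the matrix Λ_r := H · ( r(2A + J) + (1−r)·Id ) has no complex eigenvalue with real part equal to zero. -/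
open Matrix Polynomial
open scoped ComplexOrder

private lemma aux_quad_conj (d : ℕ) (S : Matrix (Fin d) (Fin d) ℝ) (v : Fin d → ℂ) :
    star (star v ⬝ᵥ (S.map (algebraMap ℝ ℂ)) *ᵥ v)
      = star v ⬝ᵥ (Sᵀ.map (algebraMap ℝ ℂ)) *ᵥ v := by
  simp only [dotProduct, mulVec, map_apply, transpose_apply, Pi.star_apply, star_sum, star_mul',
    Finset.mul_sum]
  rw [Finset.sum_comm]
  refine Finset.sum_congr rfl fun i _ => ?_
  refine Finset.sum_congr rfl fun j _ => ?_
  simp only [star_star, Complex.conj_conj, Complex.coe_algebraMap, Complex.star_def,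
    Complex.conj_ofReal]
  ring

private lemma aux_exists_eigvec (d : ℕ) (M : Matrix (Fin d) (Fin d) ℂ) (z : ℂ)
    (h : eval z M.charpoly = 0) :
    ∃ v, v ≠ 0 ∧ M *ᵥ v = z • v := by
  rw [charpoly, eval_det, matPolyEquiv_charmatrix, eval_sub, eval_X, eval_C] at h
  obtain ⟨v, hv, h0⟩ := (Matrix.exists_mulVec_eq_zero_iff).mpr h
  refine ⟨v, hv, ?_⟩
  have h2 : (scalar (Fin d) z) *ᵥ v = z • v := by
    funext i; simp [mulVec_diagonal]
  funext i
  have h3 := congrFun h0 i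
  simp only [sub_mulVec, Pi.sub_apply, Pi.zero_apply, sub_eq_zero, congrFun h2 i] at h3
  exact h3.symm

theorem no_purely_imaginary_eigenvalues
    (d : ℕ) (hd : 1 ≤ d)
    (H A J : Matrix (Fin d) (Fin d) ℝ)
    (hHsymm : Hᵀ = H) (hHinv : IsUnit H.det)
    (hAsymm : Aᵀ = A) (hApsd : ∀ x : Fin d → ℝ, 0 ≤ x ⬝ᵥ A.mulVec x)
    (hJanti : Jᵀ = -J)
    (hker : ∀ (z : ℂ) (v : Fin d → ℂ),
      (A.map (algebraMap ℝ ℂ)).mulVec v = 0 →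
      ((H * J).map (algebraMap ℝ ℂ)).mulVec v = z • v → v = 0)
    (r : ℝ) (hr0 : 0 ≤ r) (hr1 : r ≤ 1) :
    ∀ z ∈ (H * (r • ((2 : ℝ) • A + J) + (1 - r) • (1 : Matrix (Fin d) (Fin d) ℝ))).charpoly.aroots ℂ,
      z.re ≠ 0 := by
  intro z hz hre
  set N : Matrix (Fin d) (Fin d) ℝ :=
    r • ((2 : ℝ) • A + J) + (1 - r) • (1 : Matrix (Fin d) (Fin d) ℝ) with hNdef
  -- complexification shorthand
  set Ac := A.map (algebraMap ℝ ℂ) with hAc'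
  set Jc := J.map (algebraMap ℝ ℂ) with hJc'
  set Hc := H.map (algebraMap ℝ ℂ) with hHc'
  set Kc := (H⁻¹).map (algebraMap ℝ ℂ) with hKc'
  set Nc := N.map (algebraMap ℝ ℂ) with hNc'
  -- z is a root of the complexified charpoly; get an eigenvector
  have hzev : eval z ((H * N).map (algebraMap ℝ ℂ)).charpoly = 0 := by
    rw [Matrix.charpoly_map]
    have h2 := (Polynomial.mem_aroots'.mp hz).2
    rwa [Polynomial.aeval_def, Polynomial.eval₂_eq_eval_map] at h2
  obtain ⟨v, hv, heig⟩ := aux_exists_eigvec d _ z hzev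
  have hmapmul : ∀ (P Q : Matrix (Fin d) (Fin d) ℝ),
      (P * Q).map (algebraMap ℝ ℂ) = P.map (algebraMap ℝ ℂ) * Q.map (algebraMap ℝ ℂ) :=
    fun P Q => Matrix.map_mul
  have heig' : Hc *ᵥ (Nc *ᵥ v) = z • v := by
    rw [hmapmul H N] at heig
    rwa [mulVec_mulVec]
  -- invert H
  have hKH : Kc * Hc = 1 := by
    rw [hHc', hKc', ← hmapmul, Matrix.nonsing_inv_mul H hHinv, Matrix.map_one]
    · exact map_zero _
    · exact map_one _
  have hNv : Nc *ᵥ v = z • (Kc *ᵥ v) := by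
    have h3 : Kc *ᵥ (Hc *ᵥ (Nc *ᵥ v)) = Kc *ᵥ (z • v) := by rw [heig']
    rwa [mulVec_mulVec, hKH, one_mulVec, mulVec_smul] at h3
  -- quantities
  set qA := star v ⬝ᵥ Ac *ᵥ v with hqA'
  set qJ := star v ⬝ᵥ Jc *ᵥ v with hqJ'
  set qI := star v ⬝ᵥ v with hqI'
  set t := star v ⬝ᵥ Kc *ᵥ v with ht'
  -- decomposition of Nc
  have hNc2 : Nc = ((2 * r : ℝ) : ℂ) • Ac + ((r : ℝ) : ℂ) • Jc
      + ((1 - r : ℝ) : ℂ) • (1 : Matrix (Fin d) (Fin d) ℂ) := by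
    ext i j
    simp only [hNc', hNdef, hAc', hJc', Matrix.map_apply, Matrix.add_apply, Matrix.smul_apply,
      Matrix.one_apply, smul_eq_mul, mul_ite, mul_one, mul_zero, Complex.coe_algebraMap]
    split_ifs <;> push_cast <;> ring
  -- the key identity
  have key : ((2 * r : ℝ) : ℂ) * qA + ((r : ℝ) : ℂ) * qJ + ((1 - r : ℝ) : ℂ) * qI = z * t := by
    have h4 : star v ⬝ᵥ Nc *ᵥ v = z * t := by
      rw [hNv, dotProduct_smul, smul_eq_mul, ht']
    rw [← h4, hNc2]
    simp only [add_mulVec, smul_mulVec, one_mulVec, dotProduct_add, dotProduct_smul,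
      smul_eq_mul, hqA', hqJ', hqI']
  -- reality/imaginarity facts
  have hqA_star : star qA = qA := by
    rw [hqA', aux_quad_conj, hAsymm]
  have hqJ_star : star qJ = -qJ := by
    rw [hqJ', aux_quad_conj, hJanti]
    have : (-J).map (algebraMap ℝ ℂ) = -Jc := by
      ext i j; simp [hJc', Matrix.map_apply]
    rw [this, neg_mulVec, dotProduct_neg]
  have ht_star : star t = t := by
    rw [ht', aux_quad_conj, Matrix.transpose_nonsing_inv, hHsymm]
  have hqA_im : qA.im = 0 := by
    have := congrArg Complex.im hqA_star
    simp only [Complex.star_def, Complex.conj_im] at this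
    linarith
  have hqJ_re : qJ.re = 0 := by
    have := congrArg Complex.re hqJ_star
    simp only [Complex.star_def, Complex.conj_re, Complex.neg_re] at this
    linarith
  have ht_im : t.im = 0 := by
    have := congrArg Complex.im ht_star
    simp only [Complex.star_def, Complex.conj_im] at this
    linarith
  have hqI_im : qI.im = 0 := by
    have h5 : star qI = qI := by
      rw [hqI']
      exact (star_dotProduct v v).symm
    have := congrArg Complex.im h5
    simp only [Complex.star_def, Complex.conj_im] at this
    linarith
  -- real part of the key identity
  have hre_eq : (2 * r) * qA.re + r * qJ.re + (1 - r) * qI.re = z.re * t.re - z.im * t.im := by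
    have := congrArg Complex.re key
    simpa only [Complex.add_re, Complex.mul_re, Complex.ofReal_re, Complex.ofReal_im, zero_mul,
      sub_zero] using this
  rw [hqJ_re, ht_im, hre, mul_zero, zero_mul, mul_zero, sub_zero, add_zero] at hre_eq
  -- positivity of qA and qI
  -- A is positive semidefinite over ℝ, so A = Bᵀ * B
  have hApsd' : A.PosSemidef := by
    rw [posSemidef_iff_dotProduct_mulVec]
    constructor
    · show Aᴴ = A
      ext i j
      simp only [conjTranspose_apply, star_trivial]
      exact congrFun (congrFun hAsymm i) j
    · intro x
      simpa using hApsd x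
  obtain ⟨B, hB⟩ : ∃ B : Matrix (Fin d) (Fin d) ℝ, A = Bᴴ * B := by
    open scoped MatrixOrder in
    exact CStarAlgebra.nonneg_iff_eq_star_mul_self.mp (nonneg_iff_posSemidef.mpr hApsd')
  set Bc := B.map (algebraMap ℝ ℂ) with hBc'
  have hBcH : Bcᴴ = Bᴴ.map (algebraMap ℝ ℂ) := by
    ext i j
    simp [hBc', conjTranspose_apply, Matrix.map_apply, Complex.conj_ofReal]
  have hAcB : Ac = Bcᴴ * Bc := by
    rw [hAc', hB, hmapmul, hBcH]
  set w := Bc *ᵥ v with hw'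
  have hqAw : qA = star w ⬝ᵥ w := by
    rw [hqA', hAcB, ← mulVec_mulVec, dotProduct_mulVec, ← star_mulVec, hw']
  have hqA_nonneg : (0 : ℂ) ≤ qA := by
    rw [hqAw]; exact dotProduct_star_self_nonneg w
  have hqA_re_nonneg : 0 ≤ qA.re := (Complex.le_def.mp hqA_nonneg).1
  have hqI_nonneg : (0 : ℂ) ≤ qI := dotProduct_star_self_nonneg v
  have hqI_re_nonneg : 0 ≤ qI.re := (Complex.le_def.mp hqI_nonneg).1
  have hqI_ne : qI ≠ 0 := fun h => hv (dotProduct_star_self_eq_zero.mp h)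
  have hqI_re_pos : 0 < qI.re := by
    rcases hqI_re_nonneg.lt_or_eq with h | h
    · exact h
    · exact absurd (Complex.ext h.symm hqI_im) hqI_ne
  -- case split on r
  rcases hr1.lt_or_eq with hrlt | hreq
  · -- r < 1 : contradiction from positivity
    nlinarith [mul_nonneg (by linarith : (0:ℝ) ≤ 2 * r) hqA_re_nonneg,
      mul_pos (by linarith : (0:ℝ) < 1 - r) hqI_re_pos]
  · -- r = 1
    subst hreq
    have hqA_re : qA.re = 0 := by linarith
    have hqA0 : qA = 0 := Complex.ext hqA_re hqA_im
    have hw0 : w = 0 := dotProduct_star_self_eq_zero.mp (hqAw ▸ hqA0)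
    have hAv : Ac *ᵥ v = 0 := by
      rw [hAcB, ← mulVec_mulVec, ← hw', hw0, mulVec_zero]
    have hJv : ((H * J).map (algebraMap ℝ ℂ)) *ᵥ v = z • v := by
      rw [hmapmul, ← mulVec_mulVec, ← hJc', ← hHc']
      have hNcv : Nc *ᵥ v = Jc *ᵥ v := by
        rw [hNc2]
        simp only [add_mulVec, smul_mulVec, one_mulVec]
        rw [hAv]
        push_cast
        simp
      rw [← hNcv, heig']
    exact hv (hker z v hAv hJv)
end

section
/- Let d ≥ 1, let H ∈ M_d(ℝ) be symmetric and invertible, let A ∈ M_d(ℝ) be symmetric, let J ∈ M_d(ℝ) be antisymmetric, let η ∈ ℝ^d and μ ∈ ℝ with μ ≠ 0. Assume H(2A + J)η = μη and ⟨Aη, η⟩ = −μ. Then ⟨H⁻¹η, η⟩ = −2 and det(H + ηηᵗ) = −det(H). -/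
open Matrix

theorem inner_Hinv_eta_and_det_identity
    (d : ℕ) (hd : 1 ≤ d)
    (H A J : Matrix (Fin d) (Fin d) ℝ)
    (hHsymm : Hᵀ = H) (hHinv : IsUnit H.det)
    (hAsymm : Aᵀ = A) (hJanti : Jᵀ = -J)
    (η : Fin d → ℝ) (μ : ℝ) (hμ : μ ≠ 0)
    (heig : (H * ((2 : ℝ) • A + J)).mulVec η = μ • η)
    (hnorm : A.mulVec η ⬝ᵥ η = -μ) :
    H⁻¹.mulVec η ⬝ᵥ η = -2 ∧ (H + vecMulVec η η).det = -H.det := by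
  set w : Fin d → ℝ := ((2 : ℝ) • A + J).mulVec η with hw
  have hHw : H.mulVec w = μ • η := by
    rw [hw, mulVec_mulVec]; exact heig
  have hJ : J.mulVec η ⬝ᵥ η = 0 := by
    have h1 : J.mulVec η ⬝ᵥ η = η ⬝ᵥ J.mulVec η := dotProduct_comm _ _
    have h2 : η ⬝ᵥ J.mulVec η = Jᵀ.mulVec η ⬝ᵥ η := by
      rw [dotProduct_mulVec, mulVec_transpose]
    rw [hJanti, neg_mulVec, neg_dotProduct] at h2
    linarith [h1, h2]
  have hwη : w ⬝ᵥ η = -(2 * μ) := by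
    rw [hw, add_mulVec, smul_mulVec, add_dotProduct, smul_dotProduct, hnorm, hJ, smul_eq_mul]
    ring
  have hinvη : H⁻¹.mulVec η = μ⁻¹ • w := by
    have := congrArg (fun v => H⁻¹.mulVec v) hHw
    simp only [mulVec_mulVec, Matrix.nonsing_inv_mul H hHinv, one_mulVec,
      mulVec_smul] at this
    rw [this, smul_smul, inv_mul_cancel₀ hμ, one_smul]
  have h1 : H⁻¹.mulVec η ⬝ᵥ η = -2 := by
    rw [hinvη, smul_dotProduct, hwη]
    rw [smul_eq_mul]
    field_simp
  refine ⟨h1, ?_⟩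
  have hvv : vecMulVec η η = replicateCol (Fin 1) η * replicateRow (Fin 1) η := vecMulVec_eq _ _ _
  rw [hvv]
  have hentry : ∀ i j, (replicateRow (Fin 1) η * H⁻¹ * replicateCol (Fin 1) η) i j
      = H⁻¹.mulVec η ⬝ᵥ η := by
    intro i j
    simp [Matrix.mul_apply, replicateRow, replicateCol, dotProduct, mulVec, Finset.mul_sum, Finset.sum_mul]
    rw [Finset.sum_comm]
    congr 1; ext i; congr 1; ext j; ring
  conv_lhs => erw [det_add_replicateCol_mul_replicateRow (ι := Fin 1) hHinv]
  set D := H.det with hD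
  simp only [det_unique, Matrix.add_apply, Matrix.one_apply_eq]
  rw [hentry, h1]
  ring
end

section
/- Let d ≥ 1, let Λ, A ∈ M_d(ℝ), let η ∈ ℝ^d and μ ∈ ℝ. Assume Λη = μη and ⟨Aη, η⟩ = −μ. Set Υ := Λ + 2ηηᵗA. Then the characteristic polynomials satisfy the identity (X − μ) · charpoly(Υ) = (X + μ) · charpoly(Λ) in ℝ[X], where charpoly(M) = det(X·Id − M). In particular every eigenvalue of Υ is either an eigenvalue of Λ or equals −μ. -/
open Matrix Polynomial

/-- The general **matrix determinant lemma** over a commutative ring. -/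
lemma det_add_vecMulVec_aux {n α : Type*} [Fintype n] [DecidableEq n] [CommRing α]
    (M : Matrix n n α) (u v : n → α) :
    (M + vecMulVec u v).det = M.det + v ⬝ᵥ (M.adjugate *ᵥ u) := by
  classical
  set f := (detRowAlternating : (n → α) [⋀^n]→ₗ[α] α) with hf
  set m : n → n → α := fun i => M i with hm
  set m' : n → n → α := fun i => u i • v with hm'
  have hMm : (M + vecMulVec u v).det = f (m + m') := rfl
  have hzero : ∀ s : Finset n, 1 < sᶜ.card → f (s.piecewise m m') = 0 := by
    intro s hs
    obtain ⟨j, hj, k, hk, hjk⟩ := Finset.one_lt_card.mp hs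
    rw [Finset.mem_compl] at hj hk
    set x := s.piecewise m m' with hx
    have hxj : x j = u j • v := Finset.piecewise_eq_of_notMem _ _ _ hj
    have hxk : x k = u k • v := Finset.piecewise_eq_of_notMem _ _ _ hk
    have e1 : x = Function.update x k (u k • v) := by
      rw [← hxk, Function.update_eq_self]
    rw [e1, f.map_update_smul]
    have hyj : (Function.update x k v) j = u j • v := by
      rw [Function.update_of_ne hjk]; exact hxj
    have e2 : Function.update (Function.update x k v) j (u j • v)
        = Function.update x k v := by
      rw [← hyj, Function.update_eq_self]
    rw [← e2, f.map_update_smul]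
    have e3 : f (Function.update (Function.update x k v) j v) = 0 := by
      apply f.map_eq_zero_of_eq _ _ hjk
      rw [Function.update_self, Function.update_of_ne (Ne.symm hjk), Function.update_self]
    rw [e3, smul_zero, smul_zero]
  have hsum : f (m + m') = ∑ s : Finset n, f (s.piecewise m m') :=
    f.toMultilinearMap.map_add_univ m m'
  have hfilter :
      ∑ s : Finset n, f (s.piecewise m m')
        = ∑ s ∈ Finset.univ.filter
            (fun s : Finset n => s = Finset.univ ∨ ∃ i, s = Finset.univ.erase i),
            f (s.piecewise m m') := by
    symm
    apply Finset.sum_filter_of_ne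
    intro s _ hsne
    by_contra hcon
    push_neg at hcon
    obtain ⟨h1, h2⟩ := hcon
    apply hsne
    apply hzero
    by_contra hlt
    push_neg at hlt
    interval_cases hcard : sᶜ.card
    · exact h1 (by simpa using Finset.card_eq_zero.mp hcard)
    · obtain ⟨i, hi⟩ := Finset.card_eq_one.mp hcard
      refine h2 i ?_
      have h3 := congrArg (fun t : Finset n => tᶜ) hi
      simpa [Finset.compl_singleton] using h3
  have hset : Finset.univ.filter
        (fun s : Finset n => s = Finset.univ ∨ ∃ i, s = Finset.univ.erase i)
      = insert Finset.univ (Finset.univ.image fun i : n => Finset.univ.erase i) := by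
    ext s
    simp [eq_comm]
  have hnotmem : (Finset.univ : Finset n) ∉
      (Finset.univ.image fun i : n => Finset.univ.erase i) := by
    simp only [Finset.mem_image, Finset.mem_univ, true_and]
    rintro ⟨i, hi⟩
    have h4 : i ∈ Finset.univ.erase i := by rw [hi]; exact Finset.mem_univ i
    simp at h4
  have hinj : ∀ x ∈ (Finset.univ : Finset n), ∀ y ∈ (Finset.univ : Finset n),
      Finset.univ.erase x = Finset.univ.erase y → x = y := by
    intro i _ j _ hij
    by_contra hne
    have h5 : i ∈ Finset.univ.erase j := by
      simp [Finset.mem_erase, hne]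
    rw [← hij] at h5
    simp at h5
  rw [hMm, hsum, hfilter, hset, Finset.sum_insert hnotmem, Finset.sum_image hinj]
  congr 1
  · rw [Finset.piecewise_univ]; rfl
  · have hterm : ∀ i : n, f ((Finset.univ.erase i).piecewise m m')
        = u i * (M.updateRow i v).det := by
      intro i
      rw [Finset.piecewise_erase_univ]
      have hmi : m' i = u i • v := rfl
      rw [hmi, f.map_update_smul, smul_eq_mul]
      have hupd : Function.update m i v = M.updateRow i v := by
        funext a b
        by_cases hab : a = i
        · subst hab; simp [Matrix.updateRow_apply]
        · simp [Matrix.updateRow_apply, hab, Function.update_of_ne hab, hm]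
      rw [hupd]; rfl
    rw [Finset.sum_congr rfl fun i _ => hterm i]
    calc ∑ i, u i * (M.updateRow i v).det
        = ∑ i, u i * cramer Mᵀ v i := by
          refine Finset.sum_congr rfl fun i _ => ?_
          rw [← cramer_transpose_apply]
      _ = u ⬝ᵥ cramer Mᵀ v := rfl
      _ = u ⬝ᵥ (Mᵀ.adjugate *ᵥ v) := by rw [cramer_eq_adjugate_mulVec]
      _ = u ⬝ᵥ (M.adjugateᵀ *ᵥ v) := by rw [Matrix.adjugate_transpose]
      _ = u ⬝ᵥ (v ᵥ* M.adjugate) := by rw [Matrix.mulVec_transpose]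
      _ = (v ᵥ* M.adjugate) ⬝ᵥ u := dotProduct_comm _ _
      _ = v ⬝ᵥ (M.adjugate *ᵥ u) := (Matrix.dotProduct_mulVec _ _ _).symm

set_option maxHeartbeats 1000000 in
theorem charpoly_of_rank_one_update
    (d : ℕ) (hd : 1 ≤ d)
    (Λ A : Matrix (Fin d) (Fin d) ℝ)
    (η : Fin d → ℝ) (μ : ℝ)
    (heig : Λ.mulVec η = μ • η)
    (hnorm : A.mulVec η ⬝ᵥ η = -μ) :
    (X - C μ) * (Λ + (2 : ℝ) • (vecMulVec η η * A)).charpoly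
      = (X + C μ) * Λ.charpoly ∧
    ∀ z : ℂ, ((Λ + (2 : ℝ) • (vecMulVec η η * A)).charpoly.map
        (algebraMap ℝ ℂ)).IsRoot z →
      (Λ.charpoly.map (algebraMap ℝ ℂ)).IsRoot z ∨ z = -(μ : ℂ) := by
  classical
  set u : Fin d → ℝ[X] := fun i => C (η i) with hu
  set v : Fin d → ℝ[X] := fun j => C (-(2 * (η ᵥ* A) j)) with hv
  set M : Matrix (Fin d) (Fin d) ℝ[X] := charmatrix Λ with hM
  -- the entries of the rank-one update
  have hB : ∀ i j, ((2 : ℝ) • (vecMulVec η η * A)) i j = η i * (2 * (η ᵥ* A) j) := by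
    intro i j
    have hvA : (η ᵥ* A) j = ∑ k, η k * A k j := by
      simp [Matrix.vecMul, dotProduct]
    rw [hvA]
    simp only [Matrix.smul_apply, Matrix.mul_apply, vecMulVec_apply, smul_eq_mul]
    rw [Finset.mul_sum, Finset.mul_sum, Finset.mul_sum]
    refine Finset.sum_congr rfl fun k _ => ?_
    ring
  -- charmatrix of the updated matrix
  have hmat : charmatrix (Λ + (2 : ℝ) • (vecMulVec η η * A)) = M + vecMulVec u v := by
    refine Matrix.ext fun i j => ?_
    simp only [hM, Matrix.add_apply, charmatrix_apply, vecMulVec_apply, hu, hv]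
    rw [hB i j]
    have hC : C (η i) * C (-(2 * (η ᵥ* A) j)) = -C (η i * (2 * (η ᵥ* A) j)) := by
      rw [← map_neg C, ← C_mul]; ring_nf
    rw [hC, map_add]
    ring
  -- M *ᵥ u = (X - C μ) • u
  have hMu : M *ᵥ u = (X - C μ) • u := by
    funext i
    have hei : ∑ j, Λ i j * η j = μ * η i := by
      have h := congrFun heig i
      simpa [Matrix.mulVec, dotProduct] using h
    simp only [Matrix.mulVec, dotProduct, hM, charmatrix_apply, hu,
      Pi.smul_apply, smul_eq_mul]
    simp only [sub_mul, Finset.sum_sub_distrib]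
    have h1 : ∑ j, Matrix.diagonal (fun _ => (X : ℝ[X])) i j * C (η j)
        = X * C (η i) := by
      rw [Finset.sum_eq_single i]
      · rw [Matrix.diagonal_apply_eq]
      · intro b _ hb
        rw [Matrix.diagonal_apply_ne _ (Ne.symm hb), zero_mul]
      · intro h; exact absurd (Finset.mem_univ i) h
    have h2 : ∑ j, C (Λ i j) * C (η j) = C (μ * η i) := by
      have hc : ∀ j : Fin d, C (Λ i j) * C (η j) = C (Λ i j * η j) :=
        fun j => C_mul.symm
      rw [Finset.sum_congr rfl fun j _ => hc j, ← map_sum, hei]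
    rw [h1, h2, C_mul]
  -- the key determinant identity
  have hdet : (Λ + (2 : ℝ) • (vecMulVec η η * A)).charpoly
      = Λ.charpoly + v ⬝ᵥ (M.adjugate *ᵥ u) := by
    rw [Matrix.charpoly, hmat, det_add_vecMulVec_aux]
    rfl
  -- (X - C μ) • (adjugate M *ᵥ u) = charpoly Λ • u
  have hadj : (X - C μ) • (M.adjugate *ᵥ u) = Λ.charpoly • u := by
    calc (X - C μ) • (M.adjugate *ᵥ u)
        = M.adjugate *ᵥ ((X - C μ) • u) := by rw [Matrix.mulVec_smul]
      _ = M.adjugate *ᵥ (M *ᵥ u) := by rw [hMu]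
      _ = (M.adjugate * M) *ᵥ u := by rw [Matrix.mulVec_mulVec]
      _ = (M.det • (1 : Matrix (Fin d) (Fin d) ℝ[X])) *ᵥ u := by rw [Matrix.adjugate_mul]
      _ = M.det • ((1 : Matrix (Fin d) (Fin d) ℝ[X]) *ᵥ u) := by
          rw [Matrix.smul_mulVec]
      _ = Λ.charpoly • u := by rw [Matrix.one_mulVec]; rfl
  -- v ⬝ᵥ u = C (2 * μ)
  have hvu : v ⬝ᵥ u = C (2 * μ) := by
    have hw : (η ᵥ* A) ⬝ᵥ η = -μ := by
      rw [← Matrix.dotProduct_mulVec, dotProduct_comm, hnorm]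
    have hsum : ∑ j, -(2 * (η ᵥ* A) j) * η j = -2 * ((η ᵥ* A) ⬝ᵥ η) := by
      simp only [dotProduct, Finset.mul_sum]
      refine Finset.sum_congr rfl fun j _ => ?_
      ring
    simp only [dotProduct, hv, hu, ← C_mul, ← map_sum]
    rw [hsum, hw]
    ring_nf
  -- first part
  have hmain : (X - C μ) * (Λ + (2 : ℝ) • (vecMulVec η η * A)).charpoly
      = (X + C μ) * Λ.charpoly := by
    rw [hdet, mul_add]
    have e1 : (X - C μ) * (v ⬝ᵥ (M.adjugate *ᵥ u)) = v ⬝ᵥ ((X - C μ) • (M.adjugate *ᵥ u)) := by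
      rw [dotProduct_smul, smul_eq_mul, mul_comm]
    rw [e1, hadj]
    have e2 : v ⬝ᵥ (Λ.charpoly • u) = Λ.charpoly * (v ⬝ᵥ u) := by
      rw [dotProduct_smul, smul_eq_mul]
    rw [e2, hvu]
    have hC2 : C (2 * μ) = 2 * C μ := by
      rw [C_mul, map_ofNat]
    rw [hC2]
    ring
  refine ⟨hmain, ?_⟩
  intro z hz
  have hmapped := congrArg (Polynomial.map (algebraMap ℝ ℂ)) hmain
  simp only [Polynomial.map_mul, Polynomial.map_sub, Polynomial.map_add,
    Polynomial.map_X, Polynomial.map_C] at hmapped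
  have heval := congrArg (Polynomial.eval z) hmapped
  simp only [eval_mul, eval_sub, eval_add, eval_X, eval_C] at heval
  have hz0 : ((Λ + (2 : ℝ) • (vecMulVec η η * A)).charpoly.map
      (algebraMap ℝ ℂ)).eval z = 0 := hz
  rw [hz0, mul_zero] at heval
  rcases mul_eq_zero.mp heval.symm with h | h
  · right
    have : z = -(algebraMap ℝ ℂ μ) := by linear_combination h
    simpa using this
  · left
    exact h
end

section
/- Let d ≥ 1 and m ≥ 1 be integers and let A ∈ M_d(ℂ) be such that every eigenvalue of A has strictly positive real part. Let P^m_hom denote the ℂ-vector space of homogeneous polynomials of degree m in d variables X_1, …, X_d, and let L_A : P^m_hom → P^m_hom be the linear endomorphism L_A p = Σ_{i,j=1}^{d} A_{ij} X_j · (∂p/∂X_i) (i.e. p ↦ (AX)·∇p). Then every eigenvalue of L_A has strictly positive real part. -/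
open Matrix Polynomial MvPolynomial

noncomputable def subst {d : ℕ} (S : Matrix (Fin d) (Fin d) ℂ) :
    MvPolynomial (Fin d) ℂ →ₐ[ℂ] MvPolynomial (Fin d) ℂ :=
  aeval (fun i => ∑ j, S i j • X j)

lemma subst_X {d : ℕ} (S : Matrix (Fin d) (Fin d) ℂ) (i : Fin d) :
    subst S (X i) = ∑ j, S i j • X j := by simp [subst]

lemma pderiv_linear {d : ℕ} (c : Fin d → ℂ) (i : Fin d) :
    pderiv i (∑ j, c j • (X j : MvPolynomial (Fin d) ℂ)) = MvPolynomial.C (c i) := by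
  rw [map_sum]
  rw [Finset.sum_eq_single i]
  · simp [MvPolynomial.smul_eq_C_mul]
  · intro b _ hb
    simp [MvPolynomial.smul_eq_C_mul, pderiv_X, hb]
  · simp

lemma pderiv_subst {d : ℕ} (S : Matrix (Fin d) (Fin d) ℂ) (i : Fin d)
    (p : MvPolynomial (Fin d) ℂ) :
    pderiv i (subst S p) = ∑ k, S k i • subst S (pderiv k p) := by
  induction p using MvPolynomial.induction_on with
  | C a => simp
  | add p q hp hq => simp [map_add, hp, hq, Finset.sum_add_distrib, smul_add]
  | mul_X p n ih =>
    rw [_root_.map_mul, subst_X, pderiv_mul, ih, pderiv_linear]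
    have : ∀ k, pderiv k (p * X n) = pderiv k p * X n + (if k = n then p else 0) := by
      intro k
      rw [pderiv_mul, pderiv_X]
      by_cases h : k = n <;> simp [h, Pi.single_apply, mul_comm]
    simp only [this, map_add, _root_.map_mul, subst_X, smul_add, Finset.sum_add_distrib]
    congr 1
    · rw [Finset.sum_mul]
      exact Finset.sum_congr rfl fun k _ => smul_mul_assoc _ _ _
    · rw [Finset.sum_eq_single n]
      · simp [MvPolynomial.smul_eq_C_mul, mul_comm]
      · intro b _ hb; simp [hb]
      · simp

noncomputable def Lop {d : ℕ} (A : Matrix (Fin d) (Fin d) ℂ) (p : MvPolynomial (Fin d) ℂ) :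
    MvPolynomial (Fin d) ℂ :=
  ∑ i, ∑ j, A i j • (X j * pderiv i p)

lemma Lop_subst {d : ℕ} (A S B : Matrix (Fin d) (Fin d) ℂ) (h : S * B = A * S)
    (p : MvPolynomial (Fin d) ℂ) :
    Lop B (subst S p) = subst S (Lop A p) := by
  unfold Lop
  simp only [map_sum, _root_.map_smul, _root_.map_mul, subst_X, pderiv_subst,
    Finset.mul_sum, Finset.smul_sum, smul_smul, mul_smul_comm, Finset.sum_mul, smul_mul_assoc]
  have L : ∀ G : Fin d → Fin d → Fin d → MvPolynomial (Fin d) ℂ,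
      ∑ i, ∑ j, ∑ k, G i j k = ∑ k, ∑ j, ∑ i, G i j k := by
    intro G
    calc ∑ i, ∑ j, ∑ k, G i j k
        = ∑ i, ∑ k, ∑ j, G i j k := Finset.sum_congr rfl fun i _ => Finset.sum_comm
      _ = ∑ k, ∑ i, ∑ j, G i j k := Finset.sum_comm
      _ = ∑ k, ∑ j, ∑ i, G i j k := Finset.sum_congr rfl fun k _ => Finset.sum_comm
  conv_lhs => rw [L]
  refine Finset.sum_congr rfl fun k _ => ?_
  conv_rhs => rw [Finset.sum_comm]
  refine Finset.sum_congr rfl fun j _ => ?_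
  rw [← Finset.sum_smul, ← Finset.sum_smul]
  congr 1
  have h1 : ∑ i, B i j * S k i = (S * B) k j := by
    rw [Matrix.mul_apply]; exact Finset.sum_congr rfl fun i _ => mul_comm _ _
  have h2 : ∑ l, A k l * S l j = (A * S) k j := (Matrix.mul_apply).symm
  rw [h1, h2, h]

lemma subst_subst {d : ℕ} (S S' : Matrix (Fin d) (Fin d) ℂ) (p : MvPolynomial (Fin d) ℂ) :
    subst S (subst S' p) = subst (S' * S) p := by
  induction p using MvPolynomial.induction_on with
  | C a => simp [subst]
  | add p q hp hq => simp [map_add, hp, hq]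
  | mul_X p n ih =>
    rw [_root_.map_mul, _root_.map_mul, ih, _root_.map_mul]
    refine congrArg (fun x => subst (S' * S) p * x) ?_
    rw [subst_X, subst_X, map_sum]
    simp only [_root_.map_smul, subst_X, Finset.smul_sum, smul_smul]
    rw [Finset.sum_comm]
    refine Finset.sum_congr rfl fun x _ => ?_
    rw [← Finset.sum_smul, Matrix.mul_apply]

lemma subst_one {d : ℕ} (p : MvPolynomial (Fin d) ℂ) : subst 1 p = p := by
  have : (fun i => ∑ j, (1 : Matrix (Fin d) (Fin d) ℂ) i j • X j) = (X : Fin d → MvPolynomial (Fin d) ℂ) := by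
    funext i
    rw [Finset.sum_eq_single i]
    · simp
    · intro b _ hb; simp [Matrix.one_apply, Ne.symm hb]
    · simp
  rw [subst, this, MvPolynomial.aeval_X_left_apply]

lemma subst_ne_zero {d : ℕ} (S S' : Matrix (Fin d) (Fin d) ℂ) (h : S * S' = 1)
    (p : MvPolynomial (Fin d) ℂ) (hp : p ≠ 0) : subst S p ≠ 0 := by
  intro h0
  apply hp
  have := congrArg (subst S') h0
  rwa [subst_subst, h, subst_one, map_zero] at this

lemma constantCoeff_subst {d : ℕ} (S : Matrix (Fin d) (Fin d) ℂ) (p : MvPolynomial (Fin d) ℂ) :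
    constantCoeff (subst S p) = constantCoeff p := by
  induction p using MvPolynomial.induction_on with
  | C a => simp [subst]
  | add p q hp hq => simp [map_add, hp, hq]
  | mul_X p n ih => simp [_root_.map_mul, ih, subst_X]

lemma coeff_pderiv {d : ℕ} (i : Fin d) (β : Fin d →₀ ℕ) (q : MvPolynomial (Fin d) ℂ) :
    coeff β (pderiv i q) = (β i + 1 : ℕ) * coeff (β + Finsupp.single i 1) q := by
  induction q using MvPolynomial.induction_on' with
  | monomial u a =>
    rw [pderiv_monomial, MvPolynomial.coeff_monomial, MvPolynomial.coeff_monomial]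
    by_cases h : u = β + Finsupp.single i 1
    · have h1 : u - Finsupp.single i 1 = β := by
        rw [h]; exact add_tsub_cancel_right _ _
      have h2 : u i = β i + 1 := by
        rw [h]; simp
      rw [if_pos h1, h2, if_pos h]
      push_cast
      ring
    · rw [if_neg h, mul_zero]
      by_cases h1 : u - Finsupp.single i 1 = β
      · rw [if_pos h1]
        by_cases h2 : u i = 0
        · simp [h2]
        · exfalso
          apply h
          rw [← h1, tsub_add_cancel_of_le]
          rwa [Finsupp.single_le_iff, Nat.one_le_iff_ne_zero]
      · rw [if_neg h1]
  | add p q hp hq => simp [map_add, hp, hq, mul_add]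

noncomputable def wt {d : ℕ} (β : Fin d →₀ ℕ) : ℕ := ∑ k : Fin d, (d - (k : ℕ)) * β k

lemma wt_add_single {d : ℕ} (γ : Fin d →₀ ℕ) (i : Fin d) :
    wt (γ + Finsupp.single i 1) = wt γ + (d - (i : ℕ)) := by
  unfold wt
  have : ∀ k : Fin d, (d - (k : ℕ)) * ((γ + Finsupp.single i 1 : Fin d →₀ ℕ) k)
      = (d - (k : ℕ)) * γ k + (d - (k : ℕ)) * ((Finsupp.single i 1 : Fin d →₀ ℕ) k) := by
    intro k; rw [Finsupp.add_apply, mul_add]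
  rw [Finset.sum_congr rfl fun k _ => this k, Finset.sum_add_distrib]
  congr 1
  rw [Finset.sum_eq_single i]
  · simp
  · intro b _ hb; simp [Finsupp.single_apply, Ne.symm hb]
  · simp

lemma eigen_of_upperTriangular {d : ℕ} (T : Matrix (Fin d) (Fin d) ℂ)
    (hT : T.BlockTriangular id) (z : ℂ) (q : MvPolynomial (Fin d) ℂ) (hq : q ≠ 0)
    (h0 : constantCoeff q = 0) (heq : Lop T q = z • q) :
    ∃ α : Fin d →₀ ℕ, α ≠ 0 ∧ z = ∑ i, (α i : ℂ) * T i i := by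
  have hsupp : q.support.Nonempty := by
    rw [Finset.nonempty_iff_ne_empty]
    intro h; exact hq (MvPolynomial.support_eq_empty.mp h)
  obtain ⟨α, hαs, hmax⟩ := q.support.exists_max_image wt hsupp
  have hcα : coeff α q ≠ 0 := MvPolynomial.mem_support_iff.mp hαs
  have hα0 : α ≠ 0 := by
    intro h
    apply hcα
    rw [h]
    exact h0
  refine ⟨α, hα0, ?_⟩
  -- key: per-term coefficient
  have key : ∀ i j : Fin d, T i j * coeff α (X j * pderiv i q)
      = (if i = j then T i i * ((α i : ℂ) * coeff α q) else 0) := by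
    intro i j
    rcases lt_trichotomy (i : Fin d) j with hij | hij | hij
    · -- i < j : coefficient vanishes by maximality
      rw [if_neg (ne_of_lt hij)]
      rw [MvPolynomial.coeff_X_mul']
      by_cases hj : j ∈ α.support
      · rw [if_pos hj, coeff_pderiv]
        have hle : Finsupp.single j 1 ≤ α := by
          rw [Finsupp.single_le_iff, Nat.one_le_iff_ne_zero]
          exact Finsupp.mem_support_iff.mp hj
        set γ := α - Finsupp.single j 1 with hγ
        have hαγ : α = γ + Finsupp.single j 1 := (tsub_add_cancel_of_le hle).symm
        have hz : coeff (γ + Finsupp.single i 1) q = 0 := by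
          by_contra hc
          have hmem : γ + Finsupp.single i 1 ∈ q.support := MvPolynomial.mem_support_iff.mpr hc
          have h1 := hmax _ hmem
          rw [wt_add_single, hαγ, wt_add_single] at h1
          have : d - (j : ℕ) < d - (i : ℕ) := by
            have hi : (i : ℕ) < (j : ℕ) := hij
            have hjd : (j : ℕ) < d := j.isLt
            omega
          omega
        rw [hz, mul_zero, mul_zero]
      · rw [if_neg hj, mul_zero]
    · -- diagonal
      subst hij
      rw [if_pos rfl]
      congr 1
      rw [MvPolynomial.coeff_X_mul']
      by_cases hj : i ∈ α.support
      · rw [if_pos hj, coeff_pderiv]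
        have hle : Finsupp.single i 1 ≤ α := by
          rw [Finsupp.single_le_iff, Nat.one_le_iff_ne_zero]
          exact Finsupp.mem_support_iff.mp hj
        rw [tsub_add_cancel_of_le hle]
        have h1 : ((α - Finsupp.single i 1 : Fin d →₀ ℕ) i) + 1 = α i := by
          have h2 : 1 ≤ α i := Finsupp.single_le_iff.mp hle
          rw [Finsupp.tsub_apply, Finsupp.single_apply, if_pos rfl]
          omega
        rw [h1]
      · rw [if_neg hj]
        have : α i = 0 := by
          by_contra hc
          exact hj (Finsupp.mem_support_iff.mpr hc)
        rw [this]
        simp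
    · -- i > j : T i j = 0
      rw [hT hij, zero_mul, if_neg (ne_of_gt hij)]
  have hL : coeff α (Lop T q) = (∑ i, (α i : ℂ) * T i i) * coeff α q := by
    unfold Lop
    rw [MvPolynomial.coeff_sum]
    have : ∀ i : Fin d, coeff α (∑ j, T i j • (X j * pderiv i q))
        = T i i * ((α i : ℂ) * coeff α q) := by
      intro i
      rw [MvPolynomial.coeff_sum]
      simp only [MvPolynomial.coeff_smul, smul_eq_mul]
      rw [Finset.sum_congr rfl fun j _ => key i j]
      simp
    rw [Finset.sum_congr rfl fun i _ => this i, Finset.sum_mul]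
    exact Finset.sum_congr rfl fun i _ => by ring
  have hR : coeff α (z • q) = z * coeff α q := by
    rw [MvPolynomial.coeff_smul, smul_eq_mul]
  rw [heq, hR] at hL
  exact mul_right_cancel₀ hcα hL

lemma charpoly_conj' {d : ℕ} (S S' A : Matrix (Fin d) (Fin d) ℂ)
    (h1 : S * S' = 1) (h2 : S' * S = 1) :
    (S' * A * S).charpoly = A.charpoly := by
  have hsc : ∀ N : Matrix (Fin d) (Fin d) ℂ[X],
      N * Matrix.scalar (Fin d) (X : ℂ[X]) = Matrix.scalar (Fin d) (X : ℂ[X]) * N := by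
    intro N
    rw [Matrix.scalar_commute (X : ℂ[X]) (fun r => Commute.all _ _) N]
  have key : charmatrix (S' * A * S)
      = (C : ℂ →+* ℂ[X]).mapMatrix S' * charmatrix A * (C : ℂ →+* ℂ[X]).mapMatrix S := by
    unfold charmatrix
    rw [mul_sub, sub_mul]
    congr 1
    · rw [mul_assoc, ← hsc, ← mul_assoc, ← _root_.map_mul, h2, _root_.map_one, one_mul]
    · rw [← _root_.map_mul, ← _root_.map_mul]
  rw [Matrix.charpoly, key, det_mul, det_mul, Matrix.charpoly]
  have hd : ((C : ℂ →+* ℂ[X]).mapMatrix S').det * ((C : ℂ →+* ℂ[X]).mapMatrix S).det = 1 := by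
    rw [← det_mul, ← _root_.map_mul, h2, _root_.map_one, det_one]
  calc ((C : ℂ →+* ℂ[X]).mapMatrix S').det * (charmatrix A).det * ((C : ℂ →+* ℂ[X]).mapMatrix S).det
      = ((C : ℂ →+* ℂ[X]).mapMatrix S').det * ((C : ℂ →+* ℂ[X]).mapMatrix S).det * (charmatrix A).det := by ring
    _ = (charmatrix A).det := by rw [hd, one_mul]

noncomputable def lift1 {d : ℕ} (B : Matrix (Fin d) (Fin d) ℂ) :
    Matrix (Fin (d + 1)) (Fin (d + 1)) ℂ :=
  Matrix.of fun i j =>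
    if h : i = 0 then (if j = 0 then 1 else 0)
    else if h' : j = 0 then 0 else B (i.pred h) (j.pred h')

lemma lift1_zero_zero {d : ℕ} (B : Matrix (Fin d) (Fin d) ℂ) : lift1 B 0 0 = 1 := by
  simp [lift1]

lemma lift1_zero_succ {d : ℕ} (B : Matrix (Fin d) (Fin d) ℂ) (j : Fin d) :
    lift1 B 0 j.succ = 0 := by
  simp [lift1, Fin.succ_ne_zero]

lemma lift1_succ_zero {d : ℕ} (B : Matrix (Fin d) (Fin d) ℂ) (i : Fin d) :
    lift1 B i.succ 0 = 0 := by
  simp [lift1, Fin.succ_ne_zero]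

lemma lift1_succ_succ {d : ℕ} (B : Matrix (Fin d) (Fin d) ℂ) (i j : Fin d) :
    lift1 B i.succ j.succ = B i j := by
  simp [lift1, Fin.succ_ne_zero]

lemma lift1_one {d : ℕ} : lift1 (1 : Matrix (Fin d) (Fin d) ℂ) = 1 := by
  ext i j
  induction i using Fin.cases with
  | zero =>
    induction j using Fin.cases with
    | zero => simp [lift1_zero_zero, Matrix.one_apply]
    | succ j => simp [lift1_zero_succ, Matrix.one_apply, (Fin.succ_ne_zero j).symm]
  | succ i =>
    induction j using Fin.cases with
    | zero => simp [lift1_succ_zero, Matrix.one_apply, Fin.succ_ne_zero i]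
    | succ j => simp [lift1_succ_succ, Matrix.one_apply, Fin.succ_inj]

-- column 0 of N * lift1 B is column 0 of N
lemma mul_lift1_zero {d : ℕ} (N : Matrix (Fin (d + 1)) (Fin (d + 1)) ℂ)
    (B : Matrix (Fin d) (Fin d) ℂ) (i : Fin (d + 1)) :
    (N * lift1 B) i 0 = N i 0 := by
  rw [Matrix.mul_apply, Fin.sum_univ_succ, lift1_zero_zero]
  simp [lift1_succ_zero]

lemma mul_lift1_succ {d : ℕ} (N : Matrix (Fin (d + 1)) (Fin (d + 1)) ℂ)
    (B : Matrix (Fin d) (Fin d) ℂ) (i : Fin (d + 1)) (j : Fin d) :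
    (N * lift1 B) i j.succ = ∑ b, N i b.succ * B b j := by
  rw [Matrix.mul_apply, Fin.sum_univ_succ, lift1_zero_succ]
  simp [lift1_succ_succ]

lemma lift1_mul_zero {d : ℕ} (N : Matrix (Fin (d + 1)) (Fin (d + 1)) ℂ)
    (B : Matrix (Fin d) (Fin d) ℂ) (j : Fin (d + 1)) :
    (lift1 B * N) 0 j = N 0 j := by
  rw [Matrix.mul_apply, Fin.sum_univ_succ, lift1_zero_zero]
  simp [lift1_zero_succ]

lemma lift1_mul_succ {d : ℕ} (N : Matrix (Fin (d + 1)) (Fin (d + 1)) ℂ)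
    (B : Matrix (Fin d) (Fin d) ℂ) (i : Fin d) (j : Fin (d + 1)) :
    (lift1 B * N) i.succ j = ∑ a, B i a * N a.succ j := by
  rw [Matrix.mul_apply, Fin.sum_univ_succ, lift1_succ_zero]
  simp [lift1_succ_succ]

lemma lift1_mul_lift1 {d : ℕ} (B C : Matrix (Fin d) (Fin d) ℂ) :
    lift1 B * lift1 C = lift1 (B * C) := by
  ext i j
  induction i using Fin.cases with
  | zero =>
    rw [lift1_mul_zero]
    induction j using Fin.cases with
    | zero => rw [lift1_zero_zero, lift1_zero_zero]
    | succ j => rw [lift1_zero_succ, lift1_zero_succ]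
  | succ i =>
    induction j using Fin.cases with
    | zero =>
      rw [mul_lift1_zero, lift1_succ_zero, lift1_succ_zero]
    | succ j =>
      rw [lift1_succ_succ, lift1_mul_succ, Matrix.mul_apply]
      exact Finset.sum_congr rfl fun a _ => by rw [lift1_succ_succ]

lemma exists_triangularization : ∀ (d : ℕ) (A : Matrix (Fin d) (Fin d) ℂ),
    ∃ S S' : Matrix (Fin d) (Fin d) ℂ,
      S * S' = 1 ∧ S' * S = 1 ∧ (S' * A * S).BlockTriangular id := by
  intro d
  induction d with
  | zero =>
    intro A
    exact ⟨1, 1, by simp, by simp, fun i => i.elim0⟩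
  | succ d ih =>
    intro A
    -- eigenvector
    obtain ⟨μ, hμ⟩ := Module.End.exists_eigenvalue (Matrix.mulVecLin A)
    obtain ⟨v, hv⟩ := hμ.exists_hasEigenvector
    have hv0 : v ≠ 0 := hv.right
    have hAv : A *ᵥ v = μ • v := hv.apply_eq_smul
    obtain ⟨k, hk⟩ : ∃ k, v k ≠ 0 := by
      by_contra h
      push_neg at h
      exact hv0 (funext fun k => h k)
    -- permutation matrix for swap 0 k
    set τ := Equiv.swap (0 : Fin (d + 1)) k with hτ
    set P : Matrix (Fin (d + 1)) (Fin (d + 1)) ℂ :=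
      Matrix.of (fun i j => if i = τ j then 1 else 0) with hP
    have hPP : P * P = 1 := by
      ext i j
      rw [Matrix.mul_apply, Finset.sum_eq_single (τ j)]
      · simp [hP, hτ, Matrix.one_apply, Equiv.swap_apply_self]
      · intro b _ hb
        simp [hP, hb]
      · simp
    set M : Matrix (Fin (d + 1)) (Fin (d + 1)) ℂ := Matrix.updateCol 1 k v with hM
    have hdetM : M.det = v k := by
      rw [hM, ← Matrix.cramer_apply, Matrix.cramer_one]
      rfl
    set S₁ : Matrix (Fin (d + 1)) (Fin (d + 1)) ℂ := M * P with hS₁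
    have hdetS₁ : IsUnit S₁.det := by
      rw [hS₁, det_mul]
      apply IsUnit.mul
      · rw [hdetM]; exact Ne.isUnit hk
      · exact IsUnit.of_mul_eq_one _ (by rw [← det_mul, hPP, det_one])
    have hS₁inv : S₁ * S₁⁻¹ = 1 := Matrix.mul_nonsing_inv _ hdetS₁
    have hS₁inv' : S₁⁻¹ * S₁ = 1 := Matrix.nonsing_inv_mul _ hdetS₁
    have hcol : ∀ i, S₁ i 0 = v i := by
      intro i
      rw [hS₁, Matrix.mul_apply, Finset.sum_eq_single k]
      · have : P k 0 = 1 := by simp [hP, hτ]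
        rw [this, mul_one, hM, Matrix.updateCol_self]
      · intro b _ hb
        have : P b 0 = 0 := by
          simp only [hP, Matrix.of_apply, hτ, Equiv.swap_apply_left]
          simp [hb]
        rw [this, mul_zero]
      · simp
    set T₁ := S₁⁻¹ * A * S₁ with hT₁def
    have hT₁col : ∀ i, T₁ i 0 = if i = 0 then μ else 0 := by
      intro i
      have hAS : ∀ l, (A * S₁) l 0 = μ * v l := by
        intro l
        rw [Matrix.mul_apply]
        have : ∀ x, A l x * S₁ x 0 = A l x * v x := fun x => by rw [hcol]
        rw [Finset.sum_congr rfl fun x _ => this x]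
        have := congrFun hAv l
        simpa [Matrix.mulVec, dotProduct] using this
      have : T₁ i 0 = (S₁⁻¹ * (A * S₁)) i 0 := by rw [hT₁def, Matrix.mul_assoc]
      rw [this, Matrix.mul_apply]
      have h2 : ∀ x, S₁⁻¹ i x * (A * S₁) x 0 = μ * (S₁⁻¹ i x * S₁ x 0) := by
        intro x; rw [hAS, hcol]; ring
      rw [Finset.sum_congr rfl fun x _ => h2 x, ← Finset.mul_sum]
      have : ∑ x, S₁⁻¹ i x * S₁ x 0 = (S₁⁻¹ * S₁) i 0 := (Matrix.mul_apply).symm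
      rw [this, hS₁inv']
      by_cases h : i = 0 <;> simp [h, Matrix.one_apply]
    -- inductive step on the lower-right block
    set A' : Matrix (Fin d) (Fin d) ℂ := Matrix.of (fun i j => T₁ i.succ j.succ) with hA'
    obtain ⟨S', S'', hSS1, hSS2, htri⟩ := ih A'
    refine ⟨S₁ * lift1 S', lift1 S'' * S₁⁻¹, ?_, ?_, ?_⟩
    · calc S₁ * lift1 S' * (lift1 S'' * S₁⁻¹)
          = S₁ * (lift1 S' * lift1 S'') * S₁⁻¹ := by simp only [Matrix.mul_assoc]
        _ = 1 := by rw [lift1_mul_lift1, hSS1, lift1_one, Matrix.mul_one, hS₁inv]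
    · calc lift1 S'' * S₁⁻¹ * (S₁ * lift1 S')
          = lift1 S'' * (S₁⁻¹ * S₁) * lift1 S' := by simp only [Matrix.mul_assoc]
        _ = 1 := by rw [hS₁inv', Matrix.mul_one, lift1_mul_lift1, hSS2, lift1_one]
    · have hmid : lift1 S'' * S₁⁻¹ * A * (S₁ * lift1 S') = lift1 S'' * T₁ * lift1 S' := by
        rw [hT₁def]; simp only [Matrix.mul_assoc]
      rw [hmid]
      intro i j hij
      induction i using Fin.cases with
      | zero => exact absurd hij (by simp)
      | succ i =>
        induction j using Fin.cases with
        | zero =>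
          rw [Matrix.mul_assoc, lift1_mul_succ]
          have : ∀ a, S'' i a * (T₁ * lift1 S') a.succ 0 = 0 := by
            intro a
            rw [mul_lift1_zero, hT₁col, if_neg (Fin.succ_ne_zero a), mul_zero]
          rw [Finset.sum_congr rfl fun a _ => this a, Finset.sum_const_zero]
        | succ j =>
          have hji : j < i := by
            simpa [Fin.succ_lt_succ_iff] using hij
          rw [Matrix.mul_assoc, lift1_mul_succ]
          have : ∀ a, S'' i a * (T₁ * lift1 S') a.succ j.succ
              = S'' i a * ∑ b, A' a b * S' b j := by
            intro a
            rw [mul_lift1_succ]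
            congr 1
          rw [Finset.sum_congr rfl fun a _ => this a]
          have hgoal : ∑ a, S'' i a * ∑ b, A' a b * S' b j = (S'' * A' * S') i j := by
            rw [Matrix.mul_assoc, Matrix.mul_apply]
            exact Finset.sum_congr rfl fun a _ => by rw [Matrix.mul_apply]
          rw [hgoal]
          exact htri hji

theorem transport_operator_spectrum
    (d m : ℕ) (hd : 1 ≤ d) (hm : 1 ≤ m)
    (A : Matrix (Fin d) (Fin d) ℂ)
    (hA : ∀ z ∈ A.charpoly.roots, 0 < z.re) :
    ∀ (z : ℂ) (p : MvPolynomial (Fin d) ℂ),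
      p ∈ MvPolynomial.homogeneousSubmodule (Fin d) ℂ m → p ≠ 0 →
      (∑ i, ∑ j, A i j • (MvPolynomial.X j * MvPolynomial.pderiv i p)) = z • p →
      0 < z.re := by
  intro z p hhom hp heig
  obtain ⟨S, S', h1, h2, htri⟩ := exists_triangularization d A
  set T := S' * A * S with hT
  have hST : S * T = A * S := by
    rw [hT, ← Matrix.mul_assoc, ← Matrix.mul_assoc, h1, Matrix.one_mul]
  set q := subst S p with hqdef
  have hq0 : q ≠ 0 := subst_ne_zero S S' h1 p hp
  have hc0 : constantCoeff q = 0 := by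
    rw [hqdef, constantCoeff_subst]
    by_contra hc
    have := ((MvPolynomial.mem_homogeneousSubmodule _ _).mp hhom) hc
    simp at this
    omega
  have heq : Lop T q = z • q := by
    rw [hqdef, Lop_subst A S T hST p]
    have : Lop A p = z • p := heig
    rw [this, _root_.map_smul]
  obtain ⟨α, hα0, hz⟩ := eigen_of_upperTriangular T htri z q hq0 hc0 heq
  -- diagonal entries are roots of the charpoly
  have hdiag : ∀ i : Fin d, 0 < (T i i).re := by
    intro i
    apply hA
    have hcp : T.charpoly = ∏ j, (Polynomial.X - Polynomial.C (T j j)) :=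
      Matrix.charpoly_of_upperTriangular T htri
    have hconj : T.charpoly = A.charpoly := charpoly_conj' S S' A h1 h2
    rw [← hconj, hcp, Polynomial.mem_roots']
    constructor
    · apply Polynomial.Monic.ne_zero
      exact Polynomial.monic_prod_of_monic _ _ fun j _ => Polynomial.monic_X_sub_C _
    · rw [Polynomial.IsRoot, Polynomial.eval_prod]
      apply Finset.prod_eq_zero (Finset.mem_univ i)
      simp
  rw [hz]
  have hre : (∑ i, (α i : ℂ) * T i i).re = ∑ i, (α i : ℝ) * (T i i).re := by
    rw [Complex.re_sum]
    exact Finset.sum_congr rfl fun i _ => by simp [Complex.mul_re]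
  rw [hre]
  obtain ⟨i₀, hi₀⟩ : ∃ i, α i ≠ 0 := by
    by_contra h
    push_neg at h
    exact hα0 (Finsupp.ext fun i => h i)
  apply Finset.sum_pos'
  · intro i _
    exact mul_nonneg (Nat.cast_nonneg _) (le_of_lt (hdiag i))
  · exact ⟨i₀, Finset.mem_univ i₀,
      mul_pos (by exact_mod_cast Nat.pos_of_ne_zero hi₀) (hdiag i₀)⟩
end

section
/- Let d ≥ 1 and let A, B, H ∈ M_d(ℝ) with A symmetric, H symmetric and invertible, and BᵗH = −HB. Define F₊ := i(2AH + B) ∈ M_d(ℂ) and let F ∈ M_{2d}(ℂ) be the block matrix with blocks F = [[iB, 2A], [−2HAH, −iBᵗ]]. Then for every λ ∈ ℂ, det(λ·Id_{2d} − F) = det(λ·Id_d − F₊) · det(λ·Id_d + F₊). In particular, the spectrum of F equals σ(F₊) ∪ (−σ(F₊)). -/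
open Matrix

private theorem aux_det
    (d : ℕ)
    (A' B' H' : Matrix (Fin d) (Fin d) ℂ)
    (hAT : A'ᵀ = A') (hHT : H'ᵀ = H')
    (hBH' : B'ᵀ * H' = -(H' * B'))
    (lam : ℂ) :
      (lam • (1 : Matrix (Fin d ⊕ Fin d) (Fin d ⊕ Fin d) ℂ) -
        Matrix.fromBlocks (Complex.I • B') ((2 : ℂ) • A')
          (-((2 : ℂ) • (H' * A' * H'))) (-(Complex.I • B'ᵀ))).det =
      (lam • (1 : Matrix (Fin d) (Fin d) ℂ) -
        Complex.I • ((2 : ℂ) • (A' * H') + B')).det *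
      (lam • (1 : Matrix (Fin d) (Fin d) ℂ) +
        Complex.I • ((2 : ℂ) • (A' * H') + B')).det := by
    set P : Matrix (Fin d ⊕ Fin d) (Fin d ⊕ Fin d) ℂ :=
      Matrix.fromBlocks 1 0 (Complex.I • H') 1 with hP
    set Fp : Matrix (Fin d) (Fin d) ℂ := Complex.I • ((2 : ℂ) • (A' * H') + B') with hFp
    set T : Matrix (Fin d ⊕ Fin d) (Fin d ⊕ Fin d) ℂ :=
      Matrix.fromBlocks (lam • 1 - Fp) (-((2 : ℂ) • A')) 0
        ((lam • 1 + Fp)ᵀ) with hT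
    have hPdet : P.det = 1 := by
      rw [hP, Matrix.det_fromBlocks_zero₁₂]
      simp
    have key : (lam • (1 : Matrix (Fin d ⊕ Fin d) (Fin d ⊕ Fin d) ℂ) -
        Matrix.fromBlocks (Complex.I • B') ((2 : ℂ) • A')
          (-((2 : ℂ) • (H' * A' * H'))) (-(Complex.I • B'ᵀ))) * P = P * T := by
      rw [hP, hT, ← Matrix.fromBlocks_one (l := Fin d) (m := Fin d),
        Matrix.fromBlocks_smul, sub_eq_add_neg, Matrix.fromBlocks_neg, Matrix.fromBlocks_add,
        Matrix.fromBlocks_multiply, Matrix.fromBlocks_multiply]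
      rw [Matrix.fromBlocks_inj]
      refine ⟨?_, ?_, ?_, ?_⟩
      · rw [hFp]
        simp only [Matrix.mul_one, Matrix.mul_zero, Matrix.zero_mul, Matrix.one_mul,
          add_zero, zero_add, smul_zero, Matrix.mul_smul, Matrix.smul_mul, smul_smul,
          smul_add, smul_neg, neg_smul, Matrix.mul_add, Matrix.add_mul, Matrix.mul_sub,
          Matrix.sub_mul, Matrix.neg_mul, Matrix.mul_neg, neg_neg, sub_eq_add_neg,
          Matrix.transpose_add, Matrix.transpose_smul, Matrix.transpose_one,
          Matrix.transpose_mul, hAT, hHT, ← Matrix.mul_assoc]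
        module
      · simp
      · rw [hFp]
        simp only [Matrix.mul_one, Matrix.mul_zero, Matrix.zero_mul, Matrix.one_mul,
          add_zero, zero_add, smul_zero, Matrix.mul_smul, Matrix.smul_mul, smul_smul,
          smul_add, smul_neg, neg_smul, Matrix.mul_add, Matrix.add_mul, Matrix.mul_sub,
          Matrix.sub_mul, Matrix.neg_mul, Matrix.mul_neg, neg_neg, sub_eq_add_neg,
          Matrix.transpose_add, Matrix.transpose_smul, Matrix.transpose_one,
          Matrix.transpose_mul, hAT, hHT, ← Matrix.mul_assoc]
        rw [show B'ᵀ * H' = -(H' * B') from hBH']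
        match_scalars <;> first | ring1 | (ring_nf; simp [Complex.I_sq])
      · rw [hFp]
        simp only [Matrix.mul_one, Matrix.mul_zero, Matrix.zero_mul, Matrix.one_mul,
          add_zero, zero_add, smul_zero, Matrix.mul_smul, Matrix.smul_mul, smul_smul,
          smul_add, smul_neg, neg_smul, Matrix.mul_add, Matrix.add_mul, Matrix.mul_sub,
          Matrix.sub_mul, Matrix.neg_mul, Matrix.mul_neg, neg_neg, sub_eq_add_neg,
          Matrix.transpose_add, Matrix.transpose_smul, Matrix.transpose_one,
          Matrix.transpose_mul, hAT, hHT, ← Matrix.mul_assoc]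
        module
    have h2 := congrArg Matrix.det key
    rw [Matrix.det_mul, Matrix.det_mul, hPdet, mul_one, one_mul] at h2
    rw [h2, hT, Matrix.det_fromBlocks_zero₂₁, Matrix.det_transpose]

theorem block_fundamental_matrix_det_split
    (d : ℕ) (hd : 1 ≤ d)
    (A B H : Matrix (Fin d) (Fin d) ℝ)
    (hAsymm : Aᵀ = A) (hHsymm : Hᵀ = H) (hHinv : IsUnit H.det)
    (hBH : Bᵀ * H = -(H * B)) :
    (∀ lam : ℂ,
      (lam • (1 : Matrix (Fin d ⊕ Fin d) (Fin d ⊕ Fin d) ℂ) -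
        Matrix.fromBlocks
          (Complex.I • B.map (algebraMap ℝ ℂ))
          ((2 : ℂ) • A.map (algebraMap ℝ ℂ))
          (-((2 : ℂ) • (H.map (algebraMap ℝ ℂ) * A.map (algebraMap ℝ ℂ) *
              H.map (algebraMap ℝ ℂ))))
          (-(Complex.I • Bᵀ.map (algebraMap ℝ ℂ)))).det =
      (lam • (1 : Matrix (Fin d) (Fin d) ℂ) -
        Complex.I • ((2 : ℂ) • (A.map (algebraMap ℝ ℂ) * H.map (algebraMap ℝ ℂ)) +
          B.map (algebraMap ℝ ℂ))).det *
      (lam • (1 : Matrix (Fin d) (Fin d) ℂ) +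
        Complex.I • ((2 : ℂ) • (A.map (algebraMap ℝ ℂ) * H.map (algebraMap ℝ ℂ)) +
          B.map (algebraMap ℝ ℂ))).det) ∧
    {z : ℂ |
      (z • (1 : Matrix (Fin d ⊕ Fin d) (Fin d ⊕ Fin d) ℂ) -
        Matrix.fromBlocks
          (Complex.I • B.map (algebraMap ℝ ℂ))
          ((2 : ℂ) • A.map (algebraMap ℝ ℂ))
          (-((2 : ℂ) • (H.map (algebraMap ℝ ℂ) * A.map (algebraMap ℝ ℂ) *
              H.map (algebraMap ℝ ℂ))))
          (-(Complex.I • Bᵀ.map (algebraMap ℝ ℂ)))).det = 0} =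
    {z : ℂ |
      (z • (1 : Matrix (Fin d) (Fin d) ℂ) -
        Complex.I • ((2 : ℂ) • (A.map (algebraMap ℝ ℂ) * H.map (algebraMap ℝ ℂ)) +
          B.map (algebraMap ℝ ℂ))).det = 0} ∪
    {z : ℂ |
      ((-z) • (1 : Matrix (Fin d) (Fin d) ℂ) -
        Complex.I • ((2 : ℂ) • (A.map (algebraMap ℝ ℂ) * H.map (algebraMap ℝ ℂ)) +
          B.map (algebraMap ℝ ℂ))).det = 0} := by
  
  simp only [Matrix.transpose_map]
  set A' := A.map (algebraMap ℝ ℂ) with hA'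
  set B' := B.map (algebraMap ℝ ℂ) with hB'
  set H' := H.map (algebraMap ℝ ℂ) with hH'
  have hAT : A'ᵀ = A' := by rw [hA', ← Matrix.transpose_map, hAsymm]
  have hHT : H'ᵀ = H' := by rw [hH', ← Matrix.transpose_map, hHsymm]
  have hBH' : B'ᵀ * H' = -(H' * B') := by
    have h := congrArg ((algebraMap ℝ ℂ).mapMatrix) hBH
    simp only [_root_.map_mul, _root_.map_neg, RingHom.mapMatrix_apply] at h
    rw [hB', hH', ← Matrix.transpose_map]
    exact h
  have main := fun lam => aux_det d A' B' H' hAT hHT hBH' lam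
  refine ⟨main, ?_⟩
  ext z
  have hneg : ((-z) • (1 : Matrix (Fin d) (Fin d) ℂ) - Complex.I • ((2:ℂ) • (A' * H') + B'))
      = -(z • (1 : Matrix (Fin d) (Fin d) ℂ) + Complex.I • ((2:ℂ) • (A' * H') + B')) := by
    rw [neg_smul]; abel
  have hpow : ((-1 : ℂ) ^ d) ≠ 0 := pow_ne_zero _ (by norm_num)
  simp only [Set.mem_setOf_eq, Set.mem_union, main z, mul_eq_zero, hneg, Matrix.det_neg,
    Fintype.card_fin]
  constructor
  · rintro (h | h)
    · exact Or.inl h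
    · exact Or.inr (Or.inr h)
  · rintro (h | h | h)
    · exact Or.inl h
    · exact absurd h hpow
    · exact Or.inr h
end

section
/- Let d₁, d₂, d₃ ≥ 1 and let M be a complex (d₁+d₂+d₃) × (d₁+d₂+d₃) matrix written in blocks M = [[A, B, C], [D, E, F], [G, H, I]] with A of size d₁×d₁, E of size d₂×d₂ and I of size d₃×d₃. Assume that A is invertible and that the (d₁+d₂) × (d₁+d₂) block matrix [[A, B], [D, E]] is invertible. Then the Schur complement E − D A⁻¹ B is invertible, and the two iterated Schur complements agree: I − [G, H] · [[A, B],[D, E]]⁻¹ · [C; F] = (I − G A⁻¹ C) − (H − G A⁻¹ B)(E − D A⁻¹ B)⁻¹(F − D A⁻¹ C). Equivalently, the Schur complement of the block I in M equals the Schur complement of the corresponding block in the Schur complement of the block [[E,F],[H,I]] of M. -/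
open Matrix

theorem iterated_schur_complement
    (d₁ d₂ d₃ : ℕ) (h₁ : 1 ≤ d₁) (h₂ : 1 ≤ d₂) (h₃ : 1 ≤ d₃)
    (A : Matrix (Fin d₁) (Fin d₁) ℂ) (B : Matrix (Fin d₁) (Fin d₂) ℂ)
    (C : Matrix (Fin d₁) (Fin d₃) ℂ) (D : Matrix (Fin d₂) (Fin d₁) ℂ)
    (E : Matrix (Fin d₂) (Fin d₂) ℂ) (F : Matrix (Fin d₂) (Fin d₃) ℂ)
    (G : Matrix (Fin d₃) (Fin d₁) ℂ) (H : Matrix (Fin d₃) (Fin d₂) ℂ)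
    (I : Matrix (Fin d₃) (Fin d₃) ℂ)
    (hA : IsUnit A.det)
    (hAE : IsUnit (Matrix.fromBlocks A B D E).det) :
    IsUnit (E - D * A⁻¹ * B).det ∧
      I - Matrix.fromCols G H * (Matrix.fromBlocks A B D E)⁻¹ * Matrix.fromRows C F
        = (I - G * A⁻¹ * C) -
          (H - G * A⁻¹ * B) * (E - D * A⁻¹ * B)⁻¹ * (F - D * A⁻¹ * C) := by
  have hA' : IsUnit A := (isUnit_iff_isUnit_det A).mpr hA
  letI := hA'.invertible
  have hinvA : ⅟A = A⁻¹ := invOf_eq_nonsing_inv A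
  have hM : IsUnit (Matrix.fromBlocks A B D E) :=
    (isUnit_iff_isUnit_det _).mpr hAE
  have hS : IsUnit (E - D * A⁻¹ * B) := by
    have := (isUnit_fromBlocks_iff_of_invertible₁₁
      (A := A) (B := B) (C := D) (D := E)).mp hM
    rwa [hinvA] at this
  letI := hM.invertible
  letI iS : Invertible (E - D * ⅟A * B) := by rw [hinvA]; exact hS.invertible
  refine ⟨(isUnit_iff_isUnit_det _).mp hS, ?_⟩
  have hinv : (Matrix.fromBlocks A B D E)⁻¹ =
      Matrix.fromBlocks (A⁻¹ + A⁻¹ * B * (E - D * A⁻¹ * B)⁻¹ * D * A⁻¹)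
        (-(A⁻¹ * B * (E - D * A⁻¹ * B)⁻¹))
        (-((E - D * A⁻¹ * B)⁻¹ * D * A⁻¹)) ((E - D * A⁻¹ * B)⁻¹) := by
    rw [← invOf_eq_nonsing_inv, invOf_fromBlocks₁₁_eq]
    simp only [invOf_eq_nonsing_inv]
  rw [hinv, fromCols_mul_fromBlocks, fromCols_mul_fromRows]
  simp only [Matrix.mul_add, Matrix.add_mul, Matrix.mul_sub, Matrix.sub_mul,
    Matrix.mul_neg, Matrix.neg_mul, Matrix.mul_assoc, sub_eq_add_neg, neg_add, neg_neg]
  abel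
end

section
/- Let d ≥ 2 and write points of ℝ^d as (y, z) ∈ ℝ^{d−1} × ℝ. Let U be an open neighborhood of 0 in ℝ^d and let g : U → ℝ be C^∞. Assume that g(y, 0) = 0 and ∂_z g(y, 0) = 0 for every (y,0) ∈ U, and that ∂²_{zz} g(0, 0) > 0. Then there exist an open neighborhood V ⊆ U of 0 and a C^∞ function ℓ : V → ℝ such that 2 g(y,z) = ℓ(y,z)² for all (y,z) ∈ V and ∂_z ℓ(0) ≠ 0 (in particular ∇ℓ(0) ≠ 0). -/
open MeasureTheory Set Metric intervalIntegral
open scoped ContDiff Interval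

set_option maxHeartbeats 1000000 in
set_option synthInstance.maxHeartbeats 400000 in
lemma key_aux (m : ℕ) {E : Type} [NormedAddCommGroup E] [NormedSpace ℝ E] [ProperSpace E]
    {O : Set (E × ℝ)} (hO : IsOpen O) {V : Set E} (hV : IsOpen V)
    (hVO : ∀ x ∈ V, ∀ t ∈ Icc (0:ℝ) 1, ((x, t) : E × ℝ) ∈ O) :
    ∀ {F : Type} [NormedAddCommGroup F] [NormedSpace ℝ F] [CompleteSpace F]
    (Φ : E × ℝ → F), ContDiffOn ℝ ∞ Φ O →
    ContDiffOn ℝ m (fun x => ∫ t in (0:ℝ)..1, Φ (x, t)) V := by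
  induction m with
  | zero =>
    intro F _ _ _ Φ hΦ
    rw [Nat.cast_zero, contDiffOn_zero]
    intro x₀ hx₀
    -- setup
    obtain ⟨ε, hε, hball⟩ : ∃ ε > 0, closedBall x₀ ε ⊆ V :=
      (Metric.nhds_basis_closedBall.mem_iff).1 (hV.mem_nhds hx₀)
    have hK : IsCompact (closedBall x₀ ε ×ˢ Icc (0:ℝ) 1) :=
      (isCompact_closedBall _ _).prod isCompact_Icc
    have hKO : closedBall x₀ ε ×ˢ Icc (0:ℝ) 1 ⊆ O := fun p hp =>
      hVO p.1 (hball hp.1) p.2 hp.2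
    obtain ⟨C, hC⟩ := hK.exists_bound_of_continuousOn (hΦ.continuousOn.mono hKO)
    have hIoc : Ι (0:ℝ) 1 = Ioc 0 1 := uIoc_of_le (by norm_num)
    have hmeas : ∀ x ∈ closedBall x₀ ε,
        AEStronglyMeasurable (fun t => Φ (x, t)) (volume.restrict (Ι (0:ℝ) 1)) := by
      intro x hx
      rw [hIoc]
      refine ContinuousOn.aestronglyMeasurable ?_ measurableSet_Ioc
      have : ContinuousOn (fun t : ℝ => ((x, t) : E × ℝ)) (Ioc (0:ℝ) 1) :=
        (continuous_const.prodMk continuous_id).continuousOn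
      exact (hΦ.continuousOn.comp this (fun t ht => hVO x (hball hx) t (Ioc_subset_Icc_self ht)))
    refine ContinuousAt.continuousWithinAt ?_
    refine intervalIntegral.continuousAt_of_dominated_interval
      (bound := fun _ => C) ?_ ?_ intervalIntegrable_const ?_
    · filter_upwards [closedBall_mem_nhds x₀ hε] with x hx using hmeas x hx
    · filter_upwards [closedBall_mem_nhds x₀ hε] with x hx
      refine Filter.Eventually.of_forall fun t ht => ?_
      exact hC (x, t) ⟨hx, Ioc_subset_Icc_self (hIoc ▸ ht)⟩
    · refine Filter.Eventually.of_forall fun t ht => ?_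
      have h1 : ContinuousAt Φ (x₀, t) :=
        hΦ.continuousOn.continuousAt (hO.mem_nhds
          (hVO x₀ hx₀ t (Ioc_subset_Icc_self (hIoc ▸ ht))))
      have h2 : ContinuousAt (fun x : E => ((x, t) : E × ℝ)) x₀ :=
        (continuous_id.prodMk continuous_const).continuousAt
      exact ContinuousAt.comp (f := fun x : E => ((x, t) : E × ℝ)) h1 h2
  | succ k ih =>
    intro F _ _ _ Φ hΦ
    set Ψ : E × ℝ → (E →L[ℝ] F) :=
      fun p => (fderiv ℝ Φ p).comp (ContinuousLinearMap.inl ℝ E ℝ) with hΨdef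
    have hΨ : ContDiffOn ℝ ∞ Ψ O := by
      have h1 : ContDiffOn ℝ ∞ (fderiv ℝ Φ) O := hΦ.fderiv_of_isOpen hO (by simp)
      exact h1.clm_comp contDiffOn_const
    have key : ∀ x₀ ∈ V, HasFDerivAt (fun x => ∫ t in (0:ℝ)..1, Φ (x, t))
        (∫ t in (0:ℝ)..1, Ψ (x₀, t)) x₀ := by
      intro x₀ hx₀
      obtain ⟨ε, hε, hball⟩ : ∃ ε > 0, closedBall x₀ ε ⊆ V :=
        (Metric.nhds_basis_closedBall.mem_iff).1 (hV.mem_nhds hx₀)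
      have hK : IsCompact (closedBall x₀ ε ×ˢ Icc (0:ℝ) 1) :=
        (isCompact_closedBall _ _).prod isCompact_Icc
      have hKO : closedBall x₀ ε ×ˢ Icc (0:ℝ) 1 ⊆ O := fun p hp =>
        hVO p.1 (hball hp.1) p.2 hp.2
      obtain ⟨C, hC⟩ := hK.exists_bound_of_continuousOn (hΨ.continuousOn.mono hKO)
      have hIoc : Ι (0:ℝ) 1 = Ioc 0 1 := uIoc_of_le (by norm_num)
      have hcontx : ∀ x ∈ closedBall x₀ ε, ∀ s : Set ℝ, s ⊆ Icc 0 1 →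
          ContinuousOn (fun t => Φ (x, t)) s := by
        intro x hx s hs
        exact hΦ.continuousOn.comp (continuous_const.prodMk continuous_id).continuousOn
          (fun t ht => hVO x (hball hx) t (hs ht))
      have hmeas : ∀ x ∈ closedBall x₀ ε,
          AEStronglyMeasurable (fun t => Φ (x, t)) (volume.restrict (Ι (0:ℝ) 1)) := by
        intro x hx
        rw [hIoc]
        exact (hcontx x hx _ Ioc_subset_Icc_self).aestronglyMeasurable measurableSet_Ioc
      refine intervalIntegral.hasFDerivAt_integral_of_dominated_of_fderiv_le
        (F' := fun x t => Ψ (x, t)) (bound := fun _ => C) (ball_mem_nhds x₀ hε) ?_ ?_ ?_ ?_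
        intervalIntegrable_const ?_
      · filter_upwards [closedBall_mem_nhds x₀ hε] with x hx using hmeas x hx
      · refine ContinuousOn.intervalIntegrable ?_
        rw [uIcc_of_le (by norm_num : (0:ℝ) ≤ 1)]
        exact hcontx x₀ (mem_closedBall_self hε.le) _ le_rfl
      · rw [hIoc]
        refine ContinuousOn.aestronglyMeasurable ?_ measurableSet_Ioc
        exact hΨ.continuousOn.comp (continuous_const.prodMk continuous_id).continuousOn
          (fun t ht => hVO x₀ hx₀ t (Ioc_subset_Icc_self ht))
      · refine Filter.Eventually.of_forall fun t ht x hx => ?_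
        exact hC (x, t) ⟨ball_subset_closedBall hx, Ioc_subset_Icc_self (hIoc ▸ ht)⟩
      · refine Filter.Eventually.of_forall fun t ht x hx => ?_
        have hmem : ((x, t) : E × ℝ) ∈ O :=
          hVO x (hball (ball_subset_closedBall hx)) t (Ioc_subset_Icc_self (hIoc ▸ ht))
        have hdiff : HasFDerivAt Φ (fderiv ℝ Φ (x, t)) (x, t) :=
          ((hΦ.contDiffAt (hO.mem_nhds hmem)).differentiableAt (by simp)).hasFDerivAt
        have hmk : HasFDerivAt (fun x : E => ((x, t) : E × ℝ))
            (ContinuousLinearMap.inl ℝ E ℝ) x :=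
          (hasFDerivAt_id x).prodMk (hasFDerivAt_const t x)
        exact hdiff.comp x hmk
    have hdiffOn : DifferentiableOn ℝ (fun x => ∫ t in (0:ℝ)..1, Φ (x, t)) V :=
      fun x hx => ((key x hx).differentiableAt).differentiableWithinAt
    have hfd : ∀ x ∈ V, fderiv ℝ (fun x => ∫ t in (0:ℝ)..1, Φ (x, t)) x
        = ∫ t in (0:ℝ)..1, Ψ (x, t) := fun x hx => (key x hx).fderiv
    have : ContDiffOn ℝ ((k:ℕ∞) : WithTop ℕ∞) (fderiv ℝ (fun x => ∫ t in (0:ℝ)..1, Φ (x, t))) V := by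
      refine ContDiffOn.congr (ih Ψ hΨ) (fun x hx => hfd x hx)
    rw [show (((k+1:ℕ)) : WithTop ℕ∞) = (k : WithTop ℕ∞) + 1 by push_cast; ring]
    rw [contDiffOn_succ_iff_fderiv_of_isOpen hV]
    refine ⟨hdiffOn, ?_, this⟩
    intro h
    exact absurd h (by simp)

set_option maxHeartbeats 1000000 in
theorem smooth_square_root_near_saddle
    (n : ℕ) (hn : 1 ≤ n)
    (U : Set ((Fin n → ℝ) × ℝ)) (hU : IsOpen U) (h0U : (0 : (Fin n → ℝ) × ℝ) ∈ U)
    (g : ((Fin n → ℝ) × ℝ) → ℝ) (hg : ContDiffOn ℝ ∞ g U)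
    (hval : ∀ y : Fin n → ℝ, ((y, 0) : (Fin n → ℝ) × ℝ) ∈ U → g (y, 0) = 0)
    (hder : ∀ y : Fin n → ℝ, ((y, 0) : (Fin n → ℝ) × ℝ) ∈ U →
      fderiv ℝ g (y, 0) (0, 1) = 0)
    (hsec : 0 < fderiv ℝ (fun p => fderiv ℝ g p (0, 1)) 0 (0, 1)) :
    ∃ V : Set ((Fin n → ℝ) × ℝ), IsOpen V ∧ V ⊆ U ∧ (0 : (Fin n → ℝ) × ℝ) ∈ V ∧
      ∃ ℓ : ((Fin n → ℝ) × ℝ) → ℝ, ContDiffOn ℝ ∞ ℓ V ∧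
        (∀ p ∈ V, 2 * g p = (ℓ p) ^ 2) ∧
        fderiv ℝ ℓ 0 (0, 1) ≠ 0 := by
  set g1 : ((Fin n → ℝ) × ℝ) → ℝ := fun p => fderiv ℝ g p (0, 1) with hg1def
  have hg1 : ContDiffOn ℝ ∞ g1 U := by
    rw [hg1def]; exact (hg.fderiv_of_isOpen hU le_rfl).clm_apply contDiffOn_const
  set g2 : ((Fin n → ℝ) × ℝ) → ℝ := fun p => fderiv ℝ g1 p (0, 1) with hg2def
  have hg2 : ContDiffOn ℝ ∞ g2 U := by
    rw [hg2def]; exact (hg1.fderiv_of_isOpen hU le_rfl).clm_apply contDiffOn_const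
  have hsec2 : 0 < g2 0 := by simp only [hg2def]; exact hsec
  -- directional derivative helpers
  have hdg : ∀ (y : Fin n → ℝ) (z t : ℝ), ((y, t * z) : ((Fin n → ℝ) × ℝ)) ∈ U →
      HasDerivAt (fun t : ℝ => g (y, t * z)) (z * g1 (y, t * z)) t := by
    intro y z t hmem
    have hc : HasDerivAt (fun t : ℝ => ((y, t * z) : ((Fin n → ℝ) × ℝ))) ((0 : Fin n → ℝ), z) t :=
      (hasDerivAt_const t y).prodMk (by simpa using (hasDerivAt_id t).mul_const z)
    have hgd : HasFDerivAt g (fderiv ℝ g (y, t * z)) (y, t * z) :=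
      ((hg.contDiffAt (hU.mem_nhds hmem)).differentiableAt (by simp)).hasFDerivAt
    have := hgd.comp_hasDerivAt t hc
    refine this.congr_deriv ?_
    symm
    have hv : ((0 : Fin n → ℝ), z) = z • (((0 : Fin n → ℝ), (1:ℝ)) : ((Fin n → ℝ) × ℝ)) := by
      simp [Prod.smul_mk]
    rw [hv, ContinuousLinearMap.map_smul, smul_eq_mul]
  have hdg1 : ∀ (y : Fin n → ℝ) (z t : ℝ), ((y, t * z) : ((Fin n → ℝ) × ℝ)) ∈ U →
      HasDerivAt (fun t : ℝ => g1 (y, t * z)) (z * g2 (y, t * z)) t := by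
    intro y z t hmem
    have hc : HasDerivAt (fun t : ℝ => ((y, t * z) : ((Fin n → ℝ) × ℝ))) ((0 : Fin n → ℝ), z) t :=
      (hasDerivAt_const t y).prodMk (by simpa using (hasDerivAt_id t).mul_const z)
    have hgd : HasFDerivAt g1 (fderiv ℝ g1 (y, t * z)) (y, t * z) :=
      ((hg1.contDiffAt (hU.mem_nhds hmem)).differentiableAt (by simp)).hasFDerivAt
    have := hgd.comp_hasDerivAt t hc
    refine this.congr_deriv ?_
    symm
    have hv : ((0 : Fin n → ℝ), z) = z • (((0 : Fin n → ℝ), (1:ℝ)) : ((Fin n → ℝ) × ℝ)) := by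
      simp [Prod.smul_mk]
    rw [hv, ContinuousLinearMap.map_smul, smul_eq_mul]
  -- the open set O and integrand Φ
  set σ : ((Fin n → ℝ) × ℝ) × ℝ → ((Fin n → ℝ) × ℝ) := fun q => (q.1.1, q.2 * q.1.2) with hσdef
  have hσ : ContDiff ℝ ∞ σ := (contDiff_fst.fst).prodMk (contDiff_snd.mul contDiff_fst.snd)
  set O : Set (((Fin n → ℝ) × ℝ) × ℝ) := σ ⁻¹' U with hOdef
  have hO : IsOpen O := hU.preimage hσ.continuous
  set Φ : ((Fin n → ℝ) × ℝ) × ℝ → ℝ := fun q => (1 - q.2) * g2 (σ q) with hΦdef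
  have hΦ : ContDiffOn ℝ ∞ Φ O := by
    refine ContDiffOn.mul ?_ ?_
    · exact (contDiff_const.sub contDiff_snd).contDiffOn
    · exact hg2.comp (hσ.contDiffOn) (fun q hq => hq)
  -- the ball V₀
  obtain ⟨r, hr, hrU⟩ : ∃ r > 0, ball (0 : ((Fin n → ℝ) × ℝ)) r ⊆ U := Metric.mem_nhds_iff.1 (hU.mem_nhds h0U)
  have hstar : ∀ x ∈ ball (0 : ((Fin n → ℝ) × ℝ)) r, ∀ t ∈ Icc (0:ℝ) 1, ((x.1, t * x.2) : ((Fin n → ℝ) × ℝ)) ∈ ball (0 : ((Fin n → ℝ) × ℝ)) r := by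
    rintro ⟨y, z⟩ hx t ht
    rw [mem_ball_zero_iff] at hx ⊢
    have h1 : ‖((y, t * z) : ((Fin n → ℝ) × ℝ))‖ = max ‖y‖ ‖t * z‖ := rfl
    have h2 : ‖((y, z) : ((Fin n → ℝ) × ℝ))‖ = max ‖y‖ ‖z‖ := rfl
    rw [h1]
    rw [h2] at hx
    have : ‖t * z‖ ≤ ‖z‖ := by
      rw [norm_mul]
      calc ‖t‖ * ‖z‖ ≤ 1 * ‖z‖ := by
            apply mul_le_mul_of_nonneg_right _ (norm_nonneg z)
            rw [Real.norm_eq_abs, abs_le]; exact ⟨by linarith [ht.1], ht.2⟩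
        _ = ‖z‖ := one_mul _
    exact lt_of_le_of_lt (max_le_max le_rfl this) hx
  have hVO : ∀ x ∈ ball (0 : ((Fin n → ℝ) × ℝ)) r, ∀ t ∈ Icc (0:ℝ) 1, ((x, t) : ((Fin n → ℝ) × ℝ) × ℝ) ∈ O := by
    intro x hx t ht
    exact hrU (hstar x hx t ht)
  -- the function h
  set h : ((Fin n → ℝ) × ℝ) → ℝ := fun x => ∫ t in (0:ℝ)..1, Φ (x, t) with hhdef
  have hh : ContDiffOn ℝ ∞ h (ball (0 : ((Fin n → ℝ) × ℝ)) r) := by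
    rw [show (∞ : WithTop ℕ∞) = ((⊤ : ℕ∞) : WithTop ℕ∞) from rfl, contDiffOn_infty]
    exact fun m => key_aux m hO isOpen_ball hVO Φ hΦ
  -- value of h at 0
  have hΦ0 : ∀ t : ℝ, Φ ((0 : ((Fin n → ℝ) × ℝ)), t) = (1 - t) * g2 0 := by
    intro t
    simp only [hΦdef, hσdef]
    norm_num
    exact Or.inl rfl
  have hh0 : h 0 = g2 0 / 2 := by
    rw [hhdef]
    simp only [hΦ0]
    rw [intervalIntegral.integral_mul_const]
    have : ∫ t in (0:ℝ)..1, (1 - t) = 1/2 := by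
      rw [intervalIntegral.integral_sub intervalIntegrable_const intervalIntegrable_id]
      simp
      norm_num
    rw [this]; ring
  have hh0pos : 0 < h 0 := by rw [hh0]; positivity
  -- Taylor identity
  have taylor : ∀ p ∈ ball (0 : ((Fin n → ℝ) × ℝ)) r, g p = p.2 ^ 2 * h p := by
    rintro ⟨y, z⟩ hp
    have hstar' : ∀ t ∈ Icc (0:ℝ) 1, ((y, t * z) : ((Fin n → ℝ) × ℝ)) ∈ U := fun t ht =>
      hrU (hstar (y, z) hp t ht)
    set ψ : ℝ → ℝ := fun t => g (y, t * z) + (1 - t) * (z * g1 (y, t * z)) with hψdef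
    have hψd : ∀ t ∈ uIcc (0:ℝ) 1, HasDerivAt ψ ((1 - t) * (z ^ 2 * g2 (y, t * z))) t := by
      intro t ht
      rw [uIcc_of_le (by norm_num : (0:ℝ) ≤ 1)] at ht
      have hmem := hstar' t ht
      have h1 := hdg y z t hmem
      have h2 := hdg1 y z t hmem
      have h3 : HasDerivAt (fun t : ℝ => (1 - t) * (z * g1 (y, t * z)))
          ((-1) * (z * g1 (y, t * z)) + (1 - t) * (z * (z * g2 (y, t * z)))) t := by
        have := ((hasDerivAt_const t (1:ℝ)).sub (hasDerivAt_id t)).mul (h2.const_mul z)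
        refine this.congr_deriv ?_
        simp
      have := h1.add h3
      refine this.congr_deriv ?_
      ring
    have hcont : ContinuousOn (fun t : ℝ => (1 - t) * (z ^ 2 * g2 (y, t * z))) (uIcc (0:ℝ) 1) := by
      rw [uIcc_of_le (by norm_num : (0:ℝ) ≤ 1)]
      refine ContinuousOn.mul (Continuous.continuousOn (by continuity)) ?_
      refine ContinuousOn.mul continuousOn_const ?_
      have hc : ContinuousOn (fun t : ℝ => ((y, t * z) : ((Fin n → ℝ) × ℝ))) (Icc (0:ℝ) 1) :=
        (continuous_const.prodMk (continuous_id.mul continuous_const)).continuousOn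
      exact hg2.continuousOn.comp hc hstar'
    have hint := intervalIntegral.integral_eq_sub_of_hasDerivAt hψd
      (hcont.intervalIntegrable)
    have hψ1 : ψ 1 = g (y, z) := by simp [hψdef]
    have hψ0 : ψ 0 = 0 := by
      have hU0 : ((y, (0:ℝ)) : ((Fin n → ℝ) × ℝ)) ∈ U := by
        have := hstar' 0 (by norm_num)
        simpa using this
      simp only [hψdef, zero_mul]
      rw [hval y hU0]
      simp [hg1def, hder y hU0]
    rw [hψ1, hψ0, sub_zero] at hint
    have heq : (fun t : ℝ => (1 - t) * (z ^ 2 * g2 (y, t * z)))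
        = fun t : ℝ => z ^ 2 * ((1 - t) * g2 (y, t * z)) := by
      funext t; ring
    rw [heq] at hint
    rw [intervalIntegral.integral_const_mul] at hint
    rw [← hint]
  -- define V
  set V : Set ((Fin n → ℝ) × ℝ) := ball (0 : ((Fin n → ℝ) × ℝ)) r ∩ h ⁻¹' (Ioi 0) with hVdef
  have hVopen : IsOpen V :=
    hh.continuousOn.isOpen_inter_preimage isOpen_ball isOpen_Ioi
  have h0V : (0 : ((Fin n → ℝ) × ℝ)) ∈ V := ⟨mem_ball_self hr, hh0pos⟩
  have hVsub : V ⊆ ball (0 : ((Fin n → ℝ) × ℝ)) r := inter_subset_left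
  refine ⟨V, hVopen, fun p hp => hrU (hVsub hp), h0V, ?_⟩
  -- define ℓ
  set s : ((Fin n → ℝ) × ℝ) → ℝ := fun x => Real.sqrt (2 * h x) with hsdef
  refine ⟨fun x => x.2 * s x, ?_, ?_, ?_⟩
  · -- smoothness
    intro x hx
    have hhx : ContDiffWithinAt ℝ ∞ (fun x => 2 * h x) V x :=
      (contDiffWithinAt_const.mul ((hh.mono hVsub) x hx))
    have hpos : (0:ℝ) < 2 * h x := by
      have := hx.2
      simp only [mem_preimage, mem_Ioi] at this
      linarith
    have hsq : ContDiffAt ℝ ∞ Real.sqrt (2 * h x) := Real.contDiffAt_sqrt (ne_of_gt hpos)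
    exact (contDiff_snd.contDiffWithinAt).mul (hsq.comp_contDiffWithinAt x hhx)
  · -- square identity
    intro p hp
    have hpos : (0:ℝ) ≤ 2 * h p := by
      have := hp.2
      simp only [mem_preimage, mem_Ioi] at this
      linarith
    have : (p.2 * s p) ^ 2 = p.2 ^ 2 * (2 * h p) := by
      rw [mul_pow, hsdef]
      rw [Real.sq_sqrt hpos]
    rw [this, taylor p (hVsub hp)]
    ring
  · -- derivative at 0
    have hhat : ContDiffAt ℝ ∞ h 0 := hh.contDiffAt (isOpen_ball.mem_nhds (mem_ball_self hr))
    have h2pos : (0:ℝ) < 2 * h 0 := by linarith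
    have hsdiff : DifferentiableAt ℝ s 0 := by
      have : ContDiffAt ℝ ∞ s 0 :=
        (Real.contDiffAt_sqrt (ne_of_gt h2pos)).comp 0 (contDiffAt_const.mul hhat)
      exact this.differentiableAt (by simp)
    have hmul : HasFDerivAt (fun x : ((Fin n → ℝ) × ℝ) => x.2 * s x)
        ((0 : ((Fin n → ℝ) × ℝ)).2 • fderiv ℝ s 0 + s 0 • (ContinuousLinearMap.snd ℝ (Fin n → ℝ) ℝ)) 0 :=
      (hasFDerivAt_snd.mul hsdiff.hasFDerivAt)
    rw [hmul.fderiv]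
    have hs0 : 0 < s 0 := Real.sqrt_pos.2 h2pos
    simp only [ContinuousLinearMap.add_apply, ContinuousLinearMap.smul_apply,
      ContinuousLinearMap.coe_snd', Prod.snd_zero, zero_smul, smul_eq_mul, mul_one, zero_add]
    exact ne_of_gt hs0
end

section
/- Let d ≥ 1 and let U ⊆ ℝ^d be open. Let A : U → M_d(ℝ) be continuous with A(x) symmetric for every x, let b : U → ℝ^d and c : U → ℝ be continuous, let f, φ, ℓ : U → ℝ be C¹, and let κ ∈ ℝ. Assume: (i) ⟨A∇φ, ∇φ⟩ + ⟨b, ∇φ⟩ = c on U; (ii) ⟨A∇f, ∇f⟩ + ⟨b, ∇f⟩ = c on U; (iii) φ = f − κ + ℓ²/2 on U; and (iv) the set {x ∈ U : ℓ(x) ≠ 0} is dense in U. Then the transport (eikonal) equation 2⟨A∇f, ∇ℓ⟩ + ⟨A∇ℓ, ∇ℓ⟩·ℓ + ⟨b, ∇ℓ⟩ = 0 holds everywhere on U. -/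
open Matrix

noncomputable section

theorem transport_equation_from_eikonal
    (d : ℕ) (hd : 1 ≤ d)
    (U : Set (Fin d → ℝ)) (hU : IsOpen U)
    (A : (Fin d → ℝ) → Matrix (Fin d) (Fin d) ℝ)
    (hA : ∀ i j, ContinuousOn (fun x => A x i j) U)
    (hAsymm : ∀ x ∈ U, (A x)ᵀ = A x)
    (b : (Fin d → ℝ) → (Fin d → ℝ)) (hb : ∀ i, ContinuousOn (fun x => b x i) U)
    (c : (Fin d → ℝ) → ℝ) (hc : ContinuousOn c U)
    (f φ ℓ : (Fin d → ℝ) → ℝ) (κ : ℝ)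
    (hf : ContDiffOn ℝ 1 f U) (hφ : ContDiffOn ℝ 1 φ U)
    (hℓ : ContDiffOn ℝ 1 ℓ U)
    (heikφ : ∀ x ∈ U,
      (A x).mulVec (grad φ x) ⬝ᵥ grad φ x + b x ⬝ᵥ grad φ x = c x)
    (heikf : ∀ x ∈ U,
      (A x).mulVec (grad f x) ⬝ᵥ grad f x + b x ⬝ᵥ grad f x = c x)
    (hφeq : ∀ x ∈ U, φ x = f x - κ + (ℓ x) ^ 2 / 2)
    (hdense : ∀ x ∈ U, x ∈ closure {y | y ∈ U ∧ ℓ y ≠ 0}) :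
    ∀ x ∈ U,
      2 * ((A x).mulVec (grad f x) ⬝ᵥ grad ℓ x)
        + ((A x).mulVec (grad ℓ x) ⬝ᵥ grad ℓ x) * ℓ x
        + b x ⬝ᵥ grad ℓ x = 0 := by
  -- abbreviate the transport expression
  set g : (Fin d → ℝ) → ℝ := fun x =>
    2 * ((A x).mulVec (grad f x) ⬝ᵥ grad ℓ x)
      + ((A x).mulVec (grad ℓ x) ⬝ᵥ grad ℓ x) * ℓ x
      + b x ⬝ᵥ grad ℓ x with hg_def
  -- gradient of φ
  have hgradφ : ∀ x ∈ U, grad φ x = grad f x + ℓ x • grad ℓ x := by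
    intro x hx
    have hfd : DifferentiableAt ℝ f x :=
      (hf.contDiffAt (hU.mem_nhds hx)).differentiableAt one_ne_zero
    have hld : DifferentiableAt ℝ ℓ x :=
      (hℓ.contDiffAt (hU.mem_nhds hx)).differentiableAt one_ne_zero
    have h2 : HasFDerivAt (fun y => ℓ y ^ 2 / 2) (ℓ x • fderiv ℝ ℓ x) x := by
      have h := (hld.hasFDerivAt.mul hld.hasFDerivAt).const_smul ((1:ℝ)/2)
      have hfun : (fun y => ℓ y ^ 2 / 2) = fun y => ((1:ℝ)/2) • (ℓ y * ℓ y) := by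
        funext y; simp [smul_eq_mul]; ring
      rw [hfun]
      refine HasFDerivAt.congr_fderiv h ?_
      ext v
      simp [smul_eq_mul]
      ring
    have H : HasFDerivAt (fun y => f y - κ + ℓ y ^ 2 / 2)
        (fderiv ℝ f x + ℓ x • fderiv ℝ ℓ x) x :=
      (hfd.hasFDerivAt.sub_const κ).add h2
    have heq : φ =ᶠ[nhds x] fun y => f y - κ + ℓ y ^ 2 / 2 := by
      filter_upwards [hU.mem_nhds hx] with y hy using hφeq y hy
    have hder : fderiv ℝ φ x = fderiv ℝ f x + ℓ x • fderiv ℝ ℓ x := by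
      rw [heq.fderiv_eq, H.fderiv]
    funext i
    simp [grad, pd, hder]
  -- ℓ · g = 0 on U
  have hkey : ∀ x ∈ U, ℓ x * g x = 0 := by
    intro x hx
    have h := heikφ x hx
    rw [hgradφ x hx] at h
    have h' : (A x).mulVec (grad f x + ℓ x • grad ℓ x) ⬝ᵥ (grad f x + ℓ x • grad ℓ x)
        + b x ⬝ᵥ (grad f x + ℓ x • grad ℓ x)
        = (A x).mulVec (grad f x) ⬝ᵥ grad f x + b x ⬝ᵥ grad f x := by
      rw [h, heikf x hx]
    have hsym : (A x).mulVec (grad ℓ x) ⬝ᵥ grad f x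
        = (A x).mulVec (grad f x) ⬝ᵥ grad ℓ x := by
      rw [dotProduct_comm, dotProduct_mulVec, ← mulVec_transpose, hAsymm x hx,
        dotProduct_comm]
    simp only [mulVec_add, mulVec_smul, add_dotProduct, dotProduct_add, smul_dotProduct,
      dotProduct_smul, smul_eq_mul] at h'
    rw [hsym] at h'
    simp only [hg_def]
    linear_combination h'
  -- continuity of g on U
  have hgradc : ∀ (u : (Fin d → ℝ) → ℝ), ContDiffOn ℝ 1 u U →
      ∀ i, ContinuousOn (fun x => grad u x i) U := by
    intro u hu i
    exact (hu.continuousOn_fderiv_of_isOpen hU le_rfl).clm_apply continuousOn_const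
  have hgf := hgradc f hf
  have hgl := hgradc ℓ hℓ
  have hlc : ContinuousOn ℓ U := hℓ.continuousOn
  have hgc : ContinuousOn g U := by
    simp only [hg_def, Matrix.mulVec, dotProduct]
    fun_prop
  -- conclude by density
  intro x hx
  have hx' := hdense x hx
  have h1 : Filter.Tendsto g (nhdsWithin x {y | y ∈ U ∧ ℓ y ≠ 0}) (nhds (g x)) :=
    ((hgc.continuousAt (hU.mem_nhds hx)).continuousWithinAt)
  have h2 : Filter.Tendsto g (nhdsWithin x {y | y ∈ U ∧ ℓ y ≠ 0}) (nhds 0) := by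
    apply Filter.Tendsto.congr' _ tendsto_const_nhds
    filter_upwards [self_mem_nhdsWithin] with y hy
    exact ((mul_eq_zero.mp (hkey y hy.1)).resolve_left hy.2).symm
  have hne : (nhdsWithin x {y | y ∈ U ∧ ℓ y ≠ 0}).NeBot :=
    mem_closure_iff_nhdsWithin_neBot.mp hx'
  exact tendsto_nhds_unique h1 h2

end
end

section
/- Let d ≥ 1 and let s ∈ ℝ^d. Let A : ℝ^d → M_d(ℝ) be continuous at s with A(s) symmetric, let b : ℝ^d → ℝ^d be differentiable at s, let f : ℝ^d → ℝ be C², and let ℓ : ℝ^d → ℝ be C¹. Assume that on some neighborhood of s one has 2⟨A∇f, ∇ℓ⟩ + ⟨A∇ℓ, ∇ℓ⟩·ℓ + ⟨b, ∇ℓ⟩ = 0, and that ∇f(s) = 0, b(s) = 0, ℓ(s) = 0. Set η := ∇ℓ(s), H := Hess f(s) and B := Db(s) (the Jacobian of b at s). Then ( 2 H A(s) + Bᵗ ) η = −⟨A(s)η, η⟩ · η; that is, η is an eigenvector of Λ := 2HA(s) + Bᵗ with eigenvalue −⟨A(s)η, η⟩. -/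
open Matrix Filter
open Asymptotics

noncomputable section

lemma hasFDerivAt_mul_cont {E : Type*} [NormedAddCommGroup E] [NormedSpace ℝ E]
    {g c : E → ℝ} {g' : E →L[ℝ] ℝ} {s : E}
    (hg : HasFDerivAt g g' s) (hgs : g s = 0) (hc : ContinuousAt c s) :
    HasFDerivAt (fun x => g x * c x) (c s • g') s := by
  rw [hasFDerivAt_iff_isLittleO]
  have h1 : (fun x => c s * (g x - g s - g' (x - s))) =o[nhds s] (fun x => x - s) :=
    hg.isLittleO.const_mul_left (c s)
  have hb : (fun x => g x - g s) =O[nhds s] (fun x => ‖x - s‖) := hg.isBigO_sub.norm_right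
  have hcs : (fun x => c x - c s) =o[nhds s] (fun _ => (1:ℝ)) := by
    rw [isLittleO_one_iff]
    have := hc.tendsto.sub (tendsto_const_nhds (x := c s))
    simpa using this
  have h2 : (fun x => (g x - g s) * (c x - c s)) =o[nhds s] (fun x => x - s) := by
    have h := hb.mul_isLittleO hcs
    simp only [mul_one] at h
    simpa using h.of_norm_right
  have h := h1.add h2
  refine h.congr' ?_ EventuallyEq.rfl
  filter_upwards with x
  simp only [hgs, sub_zero, ContinuousLinearMap.smul_apply, smul_eq_mul]
  ring

lemma hasFDerivAt_dot_cont {d n : ℕ} {g c : (Fin d → ℝ) → (Fin n → ℝ)}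
    {g' : (Fin d → ℝ) →L[ℝ] (Fin n → ℝ)} {s : Fin d → ℝ}
    (hg : HasFDerivAt g g' s) (hgs : g s = 0) (hc : ContinuousAt c s) :
    HasFDerivAt (fun x => g x ⬝ᵥ c x)
      (∑ i, c s i • ((ContinuousLinearMap.proj i).comp g')) s := by
  have : ∀ i : Fin n, HasFDerivAt (fun x => g x i * c x i)
      (c s i • ((ContinuousLinearMap.proj (R := ℝ) (φ := fun _ : Fin n => ℝ) i).comp g')) s := by
    intro i
    refine hasFDerivAt_mul_cont ?_ (by simp [hgs]) ((continuous_apply i).continuousAt.comp hc)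
    exact ((ContinuousLinearMap.proj (R := ℝ) (φ := fun _ : Fin n => ℝ) i).hasFDerivAt).comp s hg
  have hsum := HasFDerivAt.fun_sum (fun i (_ : i ∈ Finset.univ) => this i)
  simpa [dotProduct] using hsum

theorem eigenvector_from_transport_equation
    (d : ℕ) (hd : 1 ≤ d) (s : Fin d → ℝ)
    (A : (Fin d → ℝ) → Matrix (Fin d) (Fin d) ℝ)
    (hA : ∀ i j, ContinuousAt (fun x => A x i j) s)
    (hAsymm : (A s)ᵀ = A s)
    (b : (Fin d → ℝ) → (Fin d → ℝ)) (hb : DifferentiableAt ℝ b s)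
    (f : (Fin d → ℝ) → ℝ) (hf : ContDiff ℝ 2 f)
    (ℓ : (Fin d → ℝ) → ℝ) (hℓ : ContDiff ℝ 1 ℓ)
    (htransport : ∀ᶠ x in nhds s,
      2 * ((A x).mulVec (grad f x) ⬝ᵥ grad ℓ x)
        + ((A x).mulVec (grad ℓ x) ⬝ᵥ grad ℓ x) * ℓ x
        + b x ⬝ᵥ grad ℓ x = 0)
    (hcrit : grad f s = 0) (hbs : b s = 0) (hℓs : ℓ s = 0) :
    ((2 : ℝ) • (hess f s * A s) + (jac b s)ᵀ).mulVec (grad ℓ s)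
      = (-((A s).mulVec (grad ℓ s) ⬝ᵥ grad ℓ s)) • grad ℓ s := by
  classical
  set η := grad ℓ s with hη
  -- the "evaluation at coordinate directions" continuous linear map
  set P : ((Fin d → ℝ) →L[ℝ] ℝ) →L[ℝ] (Fin d → ℝ) :=
    ContinuousLinearMap.pi (fun i => ContinuousLinearMap.apply ℝ ℝ (Pi.single i 1)) with hP
  -- derivative of the gradient of f
  have hφ1 : ContDiff ℝ 1 (fderiv ℝ f) := hf.fderiv_right (by norm_num)
  set Dφ := fderiv ℝ (fderiv ℝ f) s with hDφ
  have hφd : HasFDerivAt (fderiv ℝ f) Dφ s := (hφ1.differentiable (by norm_num) s).hasFDerivAt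
  have hgradf : HasFDerivAt (grad f) (P.comp Dφ) s := by
    have := P.hasFDerivAt.comp s hφd
    exact this
  -- hessian identification
  have hessG : ∀ i j : Fin d, hess f s j i = P (Dφ (Pi.single j 1)) i := by
    intro i j
    have hi : HasFDerivAt (fun x => fderiv ℝ f x (Pi.single i 1))
        ((ContinuousLinearMap.apply ℝ ℝ (Pi.single i 1)).comp Dφ) s := by
      have := (ContinuousLinearMap.apply ℝ ℝ (Pi.single i 1)).hasFDerivAt.comp s hφd
      exact this
    have h2 : hess f s j i = fderiv ℝ (fun x => fderiv ℝ f x (Pi.single i 1)) s (Pi.single j 1) := rfl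
    rw [h2, hi.fderiv]
    rfl
  -- continuity of grad ℓ
  have hgl : Continuous (grad ℓ) := by
    have h1 : Continuous (fderiv ℝ ℓ) := hℓ.continuous_fderiv (by norm_num)
    exact P.continuous.comp h1
  -- ℓ and b derivatives
  have hℓd : HasFDerivAt ℓ (fderiv ℝ ℓ s) s := (hℓ.differentiable (by norm_num) s).hasFDerivAt
  set Db := fderiv ℝ b s with hDb
  have hbd : HasFDerivAt b Db s := hb.hasFDerivAt
  -- continuity of coefficient functions
  set c1 : (Fin d → ℝ) → (Fin d → ℝ) := fun x => ((A x)ᵀ).mulVec (grad ℓ x) with hc1def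
  have hc1 : ContinuousAt c1 s := by
    rw [continuousAt_pi]
    intro i
    have : (fun x => c1 x i) = fun x => ∑ j, A x j i * grad ℓ x j := by
      funext x; simp [hc1def, Matrix.mulVec, dotProduct]
    rw [this]
    exact tendsto_finset_sum _ fun j _ =>
      (hA j i).mul ((continuous_apply j).continuousAt.comp hgl.continuousAt)
  set c2 : (Fin d → ℝ) → ℝ := fun x => (A x).mulVec (grad ℓ x) ⬝ᵥ grad ℓ x with hc2def
  have hc2 : ContinuousAt c2 s := by
    have : c2 = fun x => ∑ i, (∑ j, A x i j * grad ℓ x j) * grad ℓ x i := by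
      funext x; simp [hc2def, Matrix.mulVec, dotProduct]
    rw [this]
    exact tendsto_finset_sum _ fun i _ =>
      ContinuousAt.mul
        (tendsto_finset_sum _ fun j _ =>
          (hA i j).mul ((continuous_apply j).continuousAt.comp hgl.continuousAt))
        ((continuous_apply i).continuousAt.comp hgl.continuousAt)
  -- the three derivative facts
  have T1 := hasFDerivAt_dot_cont hgradf hcrit hc1
  have T2 := hasFDerivAt_mul_cont hℓd hℓs hc2
  have T3 := hasFDerivAt_dot_cont hbd hbs hgl.continuousAt
  have hF : HasFDerivAt
      (fun x => 2 * (grad f x ⬝ᵥ c1 x) + ℓ x * c2 x + b x ⬝ᵥ grad ℓ x)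
      (((2:ℝ) • (∑ i, c1 s i • ((ContinuousLinearMap.proj i).comp (P.comp Dφ)))
        + c2 s • fderiv ℝ ℓ s)
        + ∑ i, grad ℓ s i • ((ContinuousLinearMap.proj i).comp Db)) s :=
    ((T1.const_mul 2).add T2).add T3
  -- the function is eventually zero
  have hFeq : (fun x => 2 * (grad f x ⬝ᵥ c1 x) + ℓ x * c2 x + b x ⬝ᵥ grad ℓ x)
      =ᶠ[nhds s] (fun _ => (0:ℝ)) := by
    filter_upwards [htransport] with x hx
    rw [← hx]
    have e1 : grad f x ⬝ᵥ c1 x = (A x).mulVec (grad f x) ⬝ᵥ grad ℓ x := by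
      simp only [hc1def, Matrix.mulVec_transpose]
      rw [dotProduct_comm ((A x).mulVec (grad f x)), Matrix.dotProduct_mulVec,
        dotProduct_comm]
    rw [e1]; ring
  have hzero : HasFDerivAt
      (fun x => 2 * (grad f x ⬝ᵥ c1 x) + ℓ x * c2 x + b x ⬝ᵥ grad ℓ x)
      (0 : (Fin d → ℝ) →L[ℝ] ℝ) s :=
    (hasFDerivAt_const (0:ℝ) s).congr_of_eventuallyEq hFeq
  have hL0 := hF.unique hzero
  -- evaluate at coordinate directions
  have key : ∀ j : Fin d,
      2 * (∑ i, c1 s i * hess f s j i) + c2 s * η j + ∑ i, η i * Db (Pi.single j 1) i = 0 := by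
    intro j
    have h0 := DFunLike.congr_fun hL0 (Pi.single j 1)
    simp only [ContinuousLinearMap.add_apply, ContinuousLinearMap.smul_apply,
      ContinuousLinearMap.sum_apply, ContinuousLinearMap.coe_comp', Function.comp_apply,
      ContinuousLinearMap.proj_apply, smul_eq_mul, ContinuousLinearMap.zero_apply] at h0
    have hG : ∀ i : Fin d, P (Dφ (Pi.single j 1)) i = hess f s j i :=
      fun i => (hessG i j).symm
    have hη' : fderiv ℝ ℓ s (Pi.single j 1) = η j := rfl
    rw [hη'] at h0
    simp only [hG] at h0
    exact h0
  -- simplify c1 s using symmetry, and Db using jac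
  have hc1s : c1 s = (A s).mulVec η := by
    show (A s)ᵀ.mulVec (grad ℓ s) = _
    rw [hAsymm]
  have hDbj : ∀ i j : Fin d, Db (Pi.single j 1) i = jac b s i j := fun i j => rfl
  -- finish
  funext j
  have k := key j
  rw [hc1s] at k
  simp only [hDbj] at k
  have c2s : c2 s = (A s).mulVec η ⬝ᵥ η := rfl
  rw [c2s] at k
  have e1 : ((2 : ℝ) • (hess f s * A s) + (jac b s)ᵀ).mulVec η j
      = 2 * (∑ i, (A s).mulVec η i * hess f s j i) + ∑ i, η i * jac b s i j := by
    simp only [Matrix.add_mulVec, Matrix.smul_mulVec, Pi.add_apply, Pi.smul_apply,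
      smul_eq_mul]
    congr 1
    · rw [← Matrix.mulVec_mulVec]
      simp only [Matrix.mulVec, dotProduct]
      rw [Finset.mul_sum, Finset.mul_sum]
      exact Finset.sum_congr rfl fun i _ => by ring
    · simp only [Matrix.mulVec, dotProduct, Matrix.transpose_apply]
      exact Finset.sum_congr rfl fun i _ => by ring
  rw [Pi.smul_apply, smul_eq_mul]
  rw [e1]
  linarith [k]


end
end

section
/- Let d ≥ 1, let S ∈ M_d(ℝ) be symmetric whose eigenvalues, counted with multiplicity, consist of exactly one simple negative eigenvalue λ₁ < 0 and d − 1 positive eigenvalues, and let γ > 0. Consider the 2d × 2d real block matrix M = [[0, −S], [Id, γ·Id]]. Then the characteristic polynomial of M has exactly one root with negative real part, counted with multiplicity; this root is real and equals (γ − √(γ² − 4λ₁)) / 2. -/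
open Matrix Polynomial

lemma eval_charpoly' {n R : Type*} [Fintype n] [DecidableEq n] [CommRing R]
    (M : Matrix n n R) (x : R) :
    M.charpoly.eval x = (x • (1 : Matrix n n R) - M).det := by
  rw [Matrix.charpoly, ← Polynomial.coe_evalRingHom, RingHom.map_det]
  congr 1
  ext i j
  by_cases h : i = j <;>
    simp [charmatrix_apply, Matrix.one_apply, h, Matrix.smul_apply, Matrix.sub_apply,
      Matrix.diagonal_apply]

lemma quad_monic {K : Type*} [CommRing K] [Nontrivial K] (a b : K) :
    (X ^ 2 - C a * X + C b : K[X]).Monic := by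
  monicity!

lemma quad_monic_c (a b : ℂ) : (X ^ 2 - C a * X + C b : ℂ[X]).Monic := quad_monic a b

lemma charpoly_blocks (d : ℕ) (S : Matrix (Fin d) (Fin d) ℝ) (γ : ℝ)
    (hsplit : S.charpoly = (S.charpoly.roots.map (fun μ => X - C μ)).prod)
    (hcard : S.charpoly.roots.card = d) :
    (Matrix.fromBlocks (0 : Matrix (Fin d) (Fin d) ℝ) (-S)
          (1 : Matrix (Fin d) (Fin d) ℝ) (γ • (1 : Matrix (Fin d) (Fin d) ℝ))).charpoly
      = (S.charpoly.roots.map (fun μ => X ^ 2 - C γ * X + C μ)).prod := by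
  apply Polynomial.eq_of_infinite_eval_eq
  apply Set.Infinite.mono (s := ({(0:ℝ)} : Set ℝ)ᶜ)
  swap
  · exact Set.Finite.infinite_compl (Set.finite_singleton 0)
  intro x hx
  have hx : x ≠ 0 := by simpa using hx
  simp only [Set.mem_setOf_eq]
  rw [eval_charpoly']
  -- rewrite the matrix as a block matrix
  have hM : x • (1 : Matrix (Fin d ⊕ Fin d) (Fin d ⊕ Fin d) ℝ) -
      Matrix.fromBlocks (0 : Matrix (Fin d) (Fin d) ℝ) (-S)
        (1 : Matrix (Fin d) (Fin d) ℝ) (γ • (1 : Matrix (Fin d) (Fin d) ℝ)) =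
      Matrix.fromBlocks (x • 1) S (-1) ((x - γ) • 1) := by
    rw [← Matrix.fromBlocks_one, Matrix.fromBlocks_smul]
    ext i j
    rcases i with i | i <;> rcases j with j | j <;>
      simp [Matrix.fromBlocks, sub_smul, Matrix.sub_apply, Matrix.smul_apply, smul_eq_mul,
        mul_comm, sub_mul]
  rw [hM]
  letI : Invertible (x • (1 : Matrix (Fin d) (Fin d) ℝ)) :=
    ⟨x⁻¹ • 1, by rw [Matrix.smul_mul, Matrix.mul_smul, smul_smul, one_mul,
        inv_mul_cancel₀ hx, one_smul],
      by rw [Matrix.smul_mul, Matrix.mul_smul, smul_smul, one_mul,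
        mul_inv_cancel₀ hx, one_smul]⟩
  have hinv : ⅟(x • (1 : Matrix (Fin d) (Fin d) ℝ)) = x⁻¹ • 1 := rfl
  rw [Matrix.det_fromBlocks₁₁, hinv]
  have h1 : ((-1 : Matrix (Fin d) (Fin d) ℝ)) * (x⁻¹ • 1) * S = -(x⁻¹ • S) := by
    rw [Matrix.neg_mul, Matrix.one_mul, Matrix.neg_mul, Matrix.smul_mul, Matrix.one_mul]
  rw [h1, sub_neg_eq_add]
  have h2 : Matrix.det (x • (1 : Matrix (Fin d) (Fin d) ℝ)) = x ^ d := by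
    rw [Matrix.det_smul, Matrix.det_one, mul_one, Fintype.card_fin]
  rw [h2]
  have h3' : ((x * (x - γ)) • (1 : Matrix (Fin d) (Fin d) ℝ) + S)
      = x • ((x - γ) • (1 : Matrix (Fin d) (Fin d) ℝ) + x⁻¹ • S) := by
    rw [smul_add, smul_smul, smul_smul, mul_inv_cancel₀ hx, one_smul]
  have h3 : x ^ d * ((x - γ) • (1 : Matrix (Fin d) (Fin d) ℝ) + x⁻¹ • S).det
      = ((x * (x - γ)) • (1 : Matrix (Fin d) (Fin d) ℝ) + S).det := by
    rw [h3', Matrix.det_smul, Fintype.card_fin]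
  rw [h3]
  set t := x * (x - γ) with ht
  -- det (t • 1 + S) = ∏ (t + μ)
  have h4 : ((t • (1 : Matrix (Fin d) (Fin d) ℝ) + S)).det
      = (S.charpoly.roots.map (fun μ => t + μ)).prod := by
    have hneg : ((-t) • (1 : Matrix (Fin d) (Fin d) ℝ) - S) = -(t • 1 + S) := by
      rw [neg_smul, neg_add, sub_eq_add_neg]
    have h5 : S.charpoly.eval (-t) = ((-t) • (1 : Matrix (Fin d) (Fin d) ℝ) - S).det :=
      eval_charpoly' S (-t)
    rw [hneg, Matrix.det_neg, Fintype.card_fin] at h5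
    have h6 : S.charpoly.eval (-t)
        = (S.charpoly.roots.map (fun μ => -t - μ)).prod := by
      conv_lhs => rw [hsplit]
      rw [eval_multiset_prod, Multiset.map_map]
      simp
    have h7 : (S.charpoly.roots.map (fun μ => -t - μ)).prod
        = (-1 : ℝ) ^ d * (S.charpoly.roots.map (fun μ => t + μ)).prod := by
      have : (S.charpoly.roots.map (fun μ => -t - μ))
          = S.charpoly.roots.map (fun μ => (-1) * (t + μ)) := by
        apply Multiset.map_congr rfl
        intro μ _
        ring
      rw [this, Multiset.prod_map_mul, Multiset.map_const', Multiset.prod_replicate, hcard]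
    have hsign : ((-1 : ℝ) ^ d) * ((-1 : ℝ) ^ d) = 1 := by
      rw [← pow_add]
      exact (neg_one_pow_eq_one_iff_even (by norm_num)).2 (Even.add_self d)
    have := h5.symm.trans (h6.trans h7)
    exact mul_left_cancel₀ (pow_ne_zero d (by norm_num : (-1:ℝ) ≠ 0)) this
  rw [h4, eval_multiset_prod, Multiset.map_map]
  apply congr_arg
  apply Multiset.map_congr rfl
  intro μ _
  simp only [Function.comp_apply, eval_add, eval_sub, eval_pow, eval_mul, eval_X, eval_C]
  ring

lemma quad_root_iff (γ μ : ℝ) (z : ℂ) :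
    z ∈ ((X ^ 2 - C (γ:ℂ) * X + C (μ:ℂ)) : ℂ[X]).roots ↔ z ^ 2 - γ * z + μ = 0 := by
  rw [mem_roots (quad_monic (γ:ℂ) (μ:ℂ)).ne_zero]
  simp [IsRoot]

lemma quad_pos_no_neg_root (γ μ : ℝ) (hγ : 0 < γ) (hμ : 0 < μ) (z : ℂ)
    (hz : z ^ 2 - (γ:ℂ) * z + (μ:ℂ) = 0) : ¬ z.re < 0 := by
  intro ha
  have hre : (z ^ 2 - (γ:ℂ) * z + (μ:ℂ)).re = 0 := by rw [hz]; rfl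
  have him : (z ^ 2 - (γ:ℂ) * z + (μ:ℂ)).im = 0 := by rw [hz]; rfl
  simp only [pow_two, Complex.add_re, Complex.sub_re, Complex.mul_re, Complex.mul_im,
    Complex.add_im, Complex.sub_im, Complex.ofReal_re, Complex.ofReal_im] at hre him
  have hb : z.im * (2 * z.re - γ) = 0 := by linarith
  have hb0 : z.im = 0 := by
    rcases mul_eq_zero.1 hb with h | h
    · exact h
    · nlinarith
  rw [hb0] at hre
  nlinarith

lemma quad_neg_roots (γ lam₁ : ℝ) (hγ : 0 < γ) (hl : lam₁ < 0) :
    ((X ^ 2 - C (γ:ℂ) * X + C (lam₁:ℂ)) : ℂ[X]).roots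
      = {(((γ - Real.sqrt (γ ^ 2 - 4 * lam₁)) / 2 : ℝ) : ℂ),
         (((γ + Real.sqrt (γ ^ 2 - 4 * lam₁)) / 2 : ℝ) : ℂ)} := by
  set s := Real.sqrt (γ ^ 2 - 4 * lam₁) with hsdef
  have hDpos : (0:ℝ) < γ ^ 2 - 4 * lam₁ := by nlinarith
  have hs2 : s ^ 2 = γ ^ 2 - 4 * lam₁ := Real.sq_sqrt hDpos.le
  have h1 : ((((γ - s) / 2 : ℝ) : ℂ)) + (((γ + s) / 2 : ℝ) : ℂ) = (γ:ℂ) := by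
    push_cast; ring
  have h2 : ((((γ - s) / 2 : ℝ) : ℂ)) * (((γ + s) / 2 : ℝ) : ℂ) = (lam₁:ℂ) := by
    have : ((γ - s) / 2) * ((γ + s) / 2) = lam₁ := by nlinarith [hs2]
    push_cast [← this]
    ring
  have hfac : (X ^ 2 - C (γ:ℂ) * X + C (lam₁:ℂ) : ℂ[X])
      = (X - C (((γ - s) / 2 : ℝ) : ℂ)) * (X - C (((γ + s) / 2 : ℝ) : ℂ)) := by
    rw [← h1, ← h2, C_add, C_mul]
    ring
  rw [hfac, roots_mul (mul_ne_zero (X_sub_C_ne_zero _) (X_sub_C_ne_zero _)),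
    roots_X_sub_C, roots_X_sub_C]
  rfl

theorem kfp_negative_eigenvalue
    (d : ℕ) (hd : 1 ≤ d)
    (S : Matrix (Fin d) (Fin d) ℝ) (hSsymm : Sᵀ = S)
    (lam₁ : ℝ) (hlam₁neg : lam₁ < 0)
    (hlam₁mem : lam₁ ∈ S.charpoly.roots)
    (hSneg : (Multiset.filter (fun x => x < 0) S.charpoly.roots).card = 1)
    (hSpos : (Multiset.filter (fun x => 0 < x) S.charpoly.roots).card = d - 1)
    (γ : ℝ) (hγ : 0 < γ) :
    (Multiset.filter (fun z => z.re < 0)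
        ((Matrix.fromBlocks (0 : Matrix (Fin d) (Fin d) ℝ) (-S)
          (1 : Matrix (Fin d) (Fin d) ℝ) (γ • (1 : Matrix (Fin d) (Fin d) ℝ))).charpoly.aroots ℂ)).card = 1 ∧
    (((γ - Real.sqrt (γ ^ 2 - 4 * lam₁)) / 2 : ℝ) : ℂ) ∈
      (Matrix.fromBlocks (0 : Matrix (Fin d) (Fin d) ℝ) (-S)
        (1 : Matrix (Fin d) (Fin d) ℝ) (γ • (1 : Matrix (Fin d) (Fin d) ℝ))).charpoly.aroots ℂ ∧
    ∀ z ∈ (Matrix.fromBlocks (0 : Matrix (Fin d) (Fin d) ℝ) (-S)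
        (1 : Matrix (Fin d) (Fin d) ℝ) (γ • (1 : Matrix (Fin d) (Fin d) ℝ))).charpoly.aroots ℂ,
      z.re < 0 → z = (((γ - Real.sqrt (γ ^ 2 - 4 * lam₁)) / 2 : ℝ) : ℂ) := by
  classical
  set p := S.charpoly with hp
  -- basic facts about the roots of S.charpoly
  have hdeg : p.natDegree = d := by
    rw [hp, Matrix.charpoly_natDegree_eq_dim, Fintype.card_fin]
  have hle : p.roots.card ≤ d := hdeg ▸ p.card_roots'
  have hmono : p.roots.filter (fun x => 0 < x) ≤ p.roots.filter (fun x => ¬ x < 0) :=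
    Multiset.monotone_filter_right _ (fun a ha => not_lt.2 ha.le)
  have hsum : (p.roots.filter (fun x => x < 0)).card
      + (p.roots.filter (fun x => ¬ x < 0)).card = p.roots.card := by
    rw [← Multiset.card_add, Multiset.filter_add_not]
  have hcardge : d ≤ p.roots.card := by
    have h1 := Multiset.card_le_card hmono
    omega
  have hcard : p.roots.card = d := le_antisymm hle hcardge
  have hfilter_eq : p.roots.filter (fun x => 0 < x) = p.roots.filter (fun x => ¬ x < 0) :=
    Multiset.eq_of_le_of_card_le hmono (by omega)
  have hposall : ∀ μ ∈ p.roots, ¬ μ < 0 → 0 < μ := by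
    intro μ hμ hμ'
    have : μ ∈ p.roots.filter (fun x => 0 < x) := by
      rw [hfilter_eq]; exact Multiset.mem_filter.2 ⟨hμ, hμ'⟩
    exact (Multiset.mem_filter.1 this).2
  have hsplits : p.Splits :=
    (Polynomial.splits_iff_card_roots).2 (by rw [hcard, hdeg])
  have hsplit : p = (p.roots.map fun a => X - C a).prod :=
    hsplits.eq_prod_roots_of_monic (Matrix.charpoly_monic S)
  -- decompose the roots
  set t := p.roots.erase lam₁ with htdef
  have hcons : p.roots = lam₁ ::ₘ t := (Multiset.cons_erase hlam₁mem).symm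
  have ht_pos : ∀ μ ∈ t, 0 < μ := by
    have h1 : (p.roots.filter (fun x => x < 0)).card
        = 1 + (t.filter (fun x => x < 0)).card := by
      rw [hcons, Multiset.filter_cons_of_pos (p := fun x => x < 0) t hlam₁neg,
        Multiset.card_cons]
      omega
    have h2 : t.filter (fun x => x < 0) = 0 :=
      Multiset.card_eq_zero.1 (by omega)
    intro μ hμ
    have hnn : ¬ μ < 0 := Multiset.filter_eq_nil.1 h2 μ hμ
    exact hposall μ (hcons ▸ Multiset.mem_cons_of_mem hμ) hnn
  -- the characteristic polynomial of the block matrix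
  have hcp := charpoly_blocks d S γ hsplit hcard
  -- its roots over ℂ
  set f : ℝ → ℂ[X] := fun μ => X ^ 2 - C (γ:ℂ) * X + C (μ:ℂ) with hfdef
  have haroots : (Matrix.fromBlocks (0 : Matrix (Fin d) (Fin d) ℝ) (-S)
        (1 : Matrix (Fin d) (Fin d) ℝ) (γ • (1 : Matrix (Fin d) (Fin d) ℝ))).charpoly.aroots ℂ
      = p.roots.bind (fun μ => (f μ).roots) := by
    rw [aroots_def, hcp, Polynomial.map_multiset_prod, Multiset.map_map]
    have hmapeq : Multiset.map ((Polynomial.map (algebraMap ℝ ℂ)) ∘ fun μ => X ^ 2 - C γ * X + C μ)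
        p.roots = Multiset.map f p.roots := by
      apply Multiset.map_congr rfl
      intro μ _
      simp [hfdef, Polynomial.map_add, Polynomial.map_sub, Polynomial.map_pow,
        Polynomial.map_mul, Polynomial.map_X, Polynomial.map_C]
    rw [hmapeq, Polynomial.roots_multiset_prod, Multiset.bind_map]
    intro h0
    obtain ⟨μ, _, hμ⟩ := Multiset.mem_map.1 h0
    exact (quad_monic (γ:ℂ) (μ:ℂ)).ne_zero hμ
  -- real numbers
  set s := Real.sqrt (γ ^ 2 - 4 * lam₁) with hsdef
  have hsγ : γ < s := by
    rw [hsdef]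
    exact (Real.lt_sqrt hγ.le).2 (by nlinarith)
  have hrneg : (γ - s) / 2 < 0 := by linarith
  have hrpos : (0:ℝ) < (γ + s) / 2 := by linarith
  have hquadneg := quad_neg_roots γ lam₁ hγ hlam₁neg
  rw [← hsdef] at hquadneg
  have hfl : (f lam₁).roots = {(((γ - s) / 2 : ℝ) : ℂ), (((γ + s) / 2 : ℝ) : ℂ)} := hquadneg
  -- decomposition of the root multiset
  have hdecomp : p.roots.bind (fun μ => (f μ).roots)
      = (f lam₁).roots + t.bind (fun μ => (f μ).roots) := by
    rw [hcons, Multiset.cons_bind]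
  have hbind_pos : ∀ z ∈ t.bind (fun μ => (f μ).roots), ¬ z.re < 0 := by
    intro z hz
    obtain ⟨μ, hμt, hzμ⟩ := Multiset.mem_bind.1 hz
    exact quad_pos_no_neg_root γ μ hγ (ht_pos μ hμt) z ((quad_root_iff γ μ z).1 hzμ)
  rw [haroots, hdecomp]
  refine ⟨?_, ?_, ?_⟩
  · rw [Multiset.filter_add, hfl]
    have h1 : Multiset.filter (fun z => z.re < 0)
        ({(((γ - s) / 2 : ℝ) : ℂ), (((γ + s) / 2 : ℝ) : ℂ)} : Multiset ℂ)
        = {(((γ - s) / 2 : ℝ) : ℂ)} := by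
      rw [Multiset.insert_eq_cons, Multiset.filter_cons_of_pos _ (by simpa using hrneg),
        Multiset.filter_singleton, if_neg (by simpa using hrpos.not_gt)]
      rfl
    rw [h1, Multiset.filter_eq_nil.2 hbind_pos]
    simp
  · apply Multiset.mem_add.2 (Or.inl _)
    rw [hfl]
    exact Multiset.mem_cons_self _ _
  · intro z hz hzre
    rcases Multiset.mem_add.1 hz with h | h
    · rw [hfl] at h
      rcases Multiset.mem_cons.1 h with h | h
      · exact h
      · exfalso
        rw [Multiset.mem_singleton.1 h] at hzre
        simp only [Complex.ofReal_re] at hzre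
        exact hrpos.not_gt hzre
    · exact absurd hzre (hbind_pos z h)
end
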